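/- arXiv:2403.02079 — 11 statements merged into one kernel-verified Lean document; each statement's English description precedes it below -/
import Mathlib

section
/- Let m be a positive integer, let D be a nonzero real m×m matrix, and let w, t be real numbers. Define the 2m×2m real matrices Ω = [[0, -I_m],[I_m, 0]] and Ω̆ = [[-w·D, D],[D, 0]]. Then the derivative at ε = 0 of the map ε ↦ exp(tΩ + εΩ̆)·I_{2m×m} is the zero 2m×m matrix if and only if either (sin t + t·cos t = 0 and w·t = 2) or (t = kπ for some nonzero integer k and w = 0). -/
open Matrix Real

namespace Stmt0Aux
open NormedSpace Filter Topology Finset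

lemma fromRows_smul {m₁ m₂ n : Type*} (c : ℝ) (A : Matrix m₁ n ℝ) (B : Matrix m₂ n ℝ) :
    c • Matrix.fromRows A B = Matrix.fromRows (c • A) (c • B) := by
  ext (i | i) j <;> simp

lemma fromRows_add {m₁ m₂ n : Type*} (A A' : Matrix m₁ n ℝ) (B B' : Matrix m₂ n ℝ) :
    Matrix.fromRows A B + Matrix.fromRows A' B' = Matrix.fromRows (A + A') (B + B') := by
  ext (i | i) j <;> simp

noncomputable section
variable {m : ℕ} (D : Matrix (Fin m) (Fin m) ℝ) (w t : ℝ)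

abbrev Msq (m : ℕ) := Matrix (Fin m ⊕ Fin m) (Fin m ⊕ Fin m) ℝ
abbrev Mrect (m : ℕ) := Matrix (Fin m ⊕ Fin m) (Fin m) ℝ

def Om (m : ℕ) : Msq m := Matrix.fromBlocks 0 (-1) 1 0
def Obr : Msq m := Matrix.fromBlocks ((-w) • D) D D 0
def Kc : Msq m := Matrix.fromBlocks D 0 0 D
def Sg : Msq m := Matrix.fromBlocks ((-(w/2)) • D) D D ((w/2) • D)
def Pm (m : ℕ) : Mrect m := Matrix.fromRows 1 0
def Qm (m : ℕ) : Mrect m := Matrix.fromRows 0 1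
def W1 : Mrect m := Matrix.fromRows D 0
def W2 : Mrect m := Matrix.fromRows 0 D

lemma Om_sq : Om m * Om m = -1 := by
  simp [Om, Matrix.fromBlocks_multiply, ← Matrix.fromBlocks_one, Matrix.fromBlocks_neg]

lemma Obr_eq : Obr D w = (-(w/2)) • Kc D + Sg D w := by
  simp only [Obr, Kc, Sg, Matrix.fromBlocks_smul, Matrix.fromBlocks_add, smul_zero]
  rw [Matrix.fromBlocks_inj]
  refine ⟨by module, by module, by module, by module⟩

lemma Kc_comm : Om m * Kc D = Kc D * Om m := by
  simp [Om, Kc, Matrix.fromBlocks_multiply]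

lemma Sg_anticomm : Om m * Sg D w = -(Sg D w * Om m) := by
  simp only [Om, Sg, Matrix.fromBlocks_multiply, Matrix.fromBlocks_neg, Matrix.zero_mul,
    Matrix.mul_zero, Matrix.one_mul, Matrix.mul_one, Matrix.neg_mul, Matrix.mul_neg,
    add_zero, zero_add, neg_smul, neg_neg, neg_zero]

lemma pow_Kc (k : ℕ) : (Om m)^k * Kc D = Kc D * (Om m)^k :=
  (Commute.pow_left (show Commute (Om m) (Kc D) from Kc_comm D) k).eq

lemma pow_Sg (k : ℕ) : (Om m)^k * Sg D w = ((-1 : ℝ))^k • (Sg D w * (Om m)^k) := by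
  induction k with
  | zero => simp
  | succ k ih =>
    rw [pow_succ, mul_assoc, Sg_anticomm D w, mul_neg, ← mul_assoc, ih]
    rw [smul_mul_assoc, mul_assoc, pow_succ]
    module

lemma Om_pow_even (p : ℕ) : (Om m)^(2*p) = ((-1:ℝ))^p • 1 := by
  induction p with
  | zero => simp
  | succ p ih =>
    rw [show 2*(p+1) = 2*p + 2 by ring, pow_add, ih, pow_two, Om_sq, pow_succ]
    rw [smul_mul_assoc, one_mul]
    module

lemma Om_mul_Pm : Om m * Pm m = Qm m := by
  simp [Om, Pm, Qm, Matrix.fromBlocks_mul_fromRows]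

lemma Om_mul_Qm : Om m * Qm m = -(Pm m) := by
  simp [Om, Pm, Qm, Matrix.fromBlocks_mul_fromRows, Matrix.fromRows_neg]

lemma Kc_mul_Pm : Kc D * Pm m = W1 D := by
  simp [Kc, Pm, W1, Matrix.fromBlocks_mul_fromRows]

lemma Kc_mul_Qm : Kc D * Qm m = W2 D := by
  simp [Kc, Qm, W2, Matrix.fromBlocks_mul_fromRows]

lemma Sg_mul_Pm : Sg D w * Pm m = (-(w/2)) • W1 D + W2 D := by
  simp [Sg, Pm, W1, W2, Matrix.fromBlocks_mul_fromRows, fromRows_smul, fromRows_add]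

lemma Sg_mul_Qm : Sg D w * Qm m = W1 D + (w/2) • W2 D := by
  simp [Sg, Qm, W1, W2, Matrix.fromBlocks_mul_fromRows, fromRows_smul, fromRows_add]


lemma inner_eq (k j : ℕ) : (Om m)^k * Obr D w * (Om m)^j
    = (-(w/2)) • (Kc D * (Om m)^(k+j)) + ((-1:ℝ))^k • (Sg D w * (Om m)^(k+j)) := by
  rw [Obr_eq, mul_add, add_mul, mul_smul_comm, pow_Kc, pow_Sg, smul_mul_assoc, smul_mul_assoc,
    mul_assoc, mul_assoc, ← pow_add]

lemma summand_eq (k j : ℕ) : (t • Om m)^k * Obr D w * (t • Om m)^j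
    = t^(k+j) • ((-(w/2)) • (Kc D * (Om m)^(k+j)) + ((-1:ℝ))^k • (Sg D w * (Om m)^(k+j))) := by
  rw [smul_pow, smul_pow, smul_mul_assoc, smul_mul_assoc, mul_smul_comm, smul_smul, ← pow_add,
    inner_eq]

lemma sum_eq (n : ℕ) : ∑ k ∈ Finset.range n, (t • Om m)^k * Obr D w * (t • Om m)^(n-1-k)
    = ((n:ℝ) * t^(n-1) * (-(w/2))) • (Kc D * (Om m)^(n-1))
      + ((if Even n then (0:ℝ) else 1) * t^(n-1)) • (Sg D w * (Om m)^(n-1)) := by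
  have h : ∀ k ∈ Finset.range n, (t • Om m)^k * Obr D w * (t • Om m)^(n-1-k)
      = t^(n-1) • ((-(w/2)) • (Kc D * (Om m)^(n-1)) + ((-1:ℝ))^k • (Sg D w * (Om m)^(n-1))) := by
    intro k hk
    rw [Finset.mem_range] at hk
    have hk' : k + (n-1-k) = n-1 := by omega
    rw [summand_eq, hk']
  rw [Finset.sum_congr rfl h, ← Finset.smul_sum, Finset.sum_add_distrib, Finset.sum_const,
    Finset.card_range, ← Finset.sum_smul, neg_one_geom_sum]
  module

/-- the `n`-th term of the derivative series -/
def term (n : ℕ) : Mrect m :=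
  ((n.factorial : ℝ))⁻¹ •
    ((∑ k ∈ Finset.range n, (t • Om m)^k * Obr D w * (t • Om m)^(n-1-k)) * Pm m)

lemma term_zero : term D w t 0 = 0 := by
  simp [term]

lemma term_odd (p : ℕ) : term D w t (2*p+1)
    = (((-1:ℝ))^p * t^(2*p) * (-(w/2)) * (2*p+2) / (2*p+1).factorial) • W1 D
      + (((-1:ℝ))^p * t^(2*p) / (2*p+1).factorial) • W2 D := by
  have hodd : ¬ Even (2*p+1) := by simp [Nat.even_add_one, parity_simps]
  rw [term, sum_eq, if_neg hodd]
  have h1 : (2*p+1) - 1 = 2*p := by omega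
  rw [h1, Om_pow_even, mul_smul_comm, mul_one, mul_smul_comm, mul_one]
  rw [Matrix.add_mul, Matrix.smul_mul, Matrix.smul_mul, Matrix.smul_mul, Matrix.smul_mul,
    Kc_mul_Pm, Sg_mul_Pm]
  have hfac : ((2*p+1).factorial : ℝ) = (2*p+1) * (2*p).factorial := by
    exact_mod_cast Nat.factorial_succ (2*p)
  have hfacne : ((2*p).factorial : ℝ) ≠ 0 := by
    exact_mod_cast (2*p).factorial_ne_zero
  match_scalars
  · rw [hfac]; field_simp; ring
  · rw [hfac]; field_simp

lemma term_even (p : ℕ) : term D w t (2*p+2)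
    = (((-1:ℝ))^p * t^(2*p+1) * (-(w/2)) / (2*p+1).factorial) • W2 D := by
  have heven : Even (2*p+2) := by simp [parity_simps]
  rw [term, sum_eq, if_pos heven, zero_mul, zero_smul, add_zero]
  have h1 : (2*p+2) - 1 = 2*p+1 := by omega
  rw [h1, pow_succ (Om m) (2*p), Om_pow_even, smul_mul_assoc, one_mul]
  rw [mul_smul_comm, Matrix.smul_mul, Matrix.smul_mul, Matrix.mul_assoc (Kc D) (Om m) (Pm m), Om_mul_Pm, Kc_mul_Qm]
  have hfac : ((2*p+2).factorial : ℝ) = (2*p+2) * (2*p+1).factorial := by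
    exact_mod_cast Nat.factorial_succ (2*p+1)
  have hfacne : ((2*p+1).factorial : ℝ) ≠ 0 := by
    exact_mod_cast (2*p+1).factorial_ne_zero
  match_scalars
  rw [hfac]
  field_simp


end

/-! scalar series -/

noncomputable def gfun (t : ℝ) : ℝ := ∑' p : ℕ, ((-1:ℝ))^p * t^(2*p) / (2*p+1).factorial

lemma summable_gseries (t : ℝ) :
    Summable (fun p : ℕ => ((-1:ℝ))^p * t^(2*p) / (2*p+1).factorial) := by
  have h0 : Summable (fun p : ℕ => |t|^(2*p) / (2*p).factorial) := by
    have := (Real.summable_pow_div_factorial |t|).comp_injective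
      (i := fun k : ℕ => 2*k) (mul_right_injective₀ two_ne_zero)
    exact this
  refine Summable.of_norm_bounded h0 (fun p => ?_)
  have h1 : |((-1:ℝ))^p * t^(2*p) / (2*p+1).factorial| = |t|^(2*p) / ((2*p+1).factorial : ℝ) := by
    rw [abs_div, abs_mul, abs_pow, abs_pow, abs_neg, abs_one, one_pow, one_mul,
      abs_of_nonneg (by positivity : (0:ℝ) ≤ ((2*p+1).factorial : ℝ))]
  rw [Real.norm_eq_abs, h1]
  gcongr <;> omega

lemma hasSum_gseries (t : ℝ) :
    HasSum (fun p : ℕ => ((-1:ℝ))^p * t^(2*p) / (2*p+1).factorial) (gfun t) :=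
  (summable_gseries t).hasSum

lemma t_mul_gfun (t : ℝ) : t * gfun t = Real.sin t := by
  rw [gfun, ← tsum_mul_left, Real.sin_eq_tsum]
  congr 1
  funext p
  rw [pow_succ]
  ring

lemma gfun_zero : gfun 0 = 1 := by
  rw [gfun, tsum_eq_single 0]
  · simp
  · intro p hp
    simp [zero_pow (by omega : 2*p ≠ 0)]

lemma gfun_of_ne_zero {t : ℝ} (ht : t ≠ 0) : gfun t = Real.sin t / t := by
  rw [eq_div_iff ht, mul_comm, t_mul_gfun]

/-! HasSum for the matrix term series -/

noncomputable section
variable {m : ℕ} (D : Matrix (Fin m) (Fin m) ℝ) (w t : ℝ)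

lemma hasSum_coeff1 :
    HasSum (fun p : ℕ => ((-1:ℝ))^p * t^(2*p) * (-(w/2)) * (2*p+2) / (2*p+1).factorial)
      (-(w/2) * (Real.cos t + gfun t)) := by
  have h := ((Real.hasSum_cos t).add (hasSum_gseries t)).mul_left (-(w/2))
  have heq : (fun p : ℕ => ((-1:ℝ))^p * t^(2*p) * (-(w/2)) * (2*p+2) / (2*p+1).factorial)
      = fun p : ℕ => (-(w/2)) * ((-1:ℝ)^p * t^(2*p) / (2*p).factorial
          + (-1:ℝ)^p * t^(2*p) / (2*p+1).factorial) := by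
    funext p
    have hfac : ((2*p+1).factorial : ℝ) = (2*p+1) * (2*p).factorial := by
      exact_mod_cast Nat.factorial_succ (2*p)
    have h2 : ((2*p).factorial : ℝ) ≠ 0 := by exact_mod_cast (2*p).factorial_ne_zero
    rw [hfac]
    field_simp
    ring
  rw [heq]
  exact h

lemma hasSum_term_odd :
    HasSum (fun p : ℕ => term D w t (2*p+1))
      ((-(w/2) * (Real.cos t + gfun t)) • W1 D + gfun t • W2 D) := by
  have h := ((hasSum_coeff1 w t).smul_const (W1 D)).add
    ((hasSum_gseries t).smul_const (W2 D))
  have heq : (fun p : ℕ => term D w t (2*p+1))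
      = fun p : ℕ => (((-1:ℝ))^p * t^(2*p) * (-(w/2)) * (2*p+2) / (2*p+1).factorial) • W1 D
          + (((-1:ℝ))^p * t^(2*p) / (2*p+1).factorial) • W2 D := funext fun p => term_odd D w t p
  rw [heq]
  exact h

lemma hasSum_term_even :
    HasSum (fun p : ℕ => term D w t (2*p)) ((-(w/2) * Real.sin t) • W2 D) := by
  have h1 : HasSum (fun p : ℕ => (((-1:ℝ))^p * t^(2*p+1) * (-(w/2)) / (2*p+1).factorial))
      (-(w/2) * Real.sin t) := by
    have h := (Real.hasSum_sin t).mul_left (-(w/2))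
    have heq : (fun p : ℕ => (((-1:ℝ))^p * t^(2*p+1) * (-(w/2)) / (2*p+1).factorial))
        = fun p : ℕ => (-(w/2)) * ((-1:ℝ)^p * t^(2*p+1) / (2*p+1).factorial) := by
      funext p; ring
    rw [heq]
    exact h
  have h2 := h1.smul_const (W2 D)
  have h3 : HasSum (fun p : ℕ => term D w t (2*(p+1))) ((-(w/2) * Real.sin t) • W2 D) := by
    have heq : (fun p : ℕ => term D w t (2*(p+1)))
        = fun p : ℕ => (((-1:ℝ))^p * t^(2*p+1) * (-(w/2)) / (2*p+1).factorial) • W2 D := by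
      funext p
      rw [show 2*(p+1) = 2*p+2 by ring, term_even]
    rw [heq]
    exact h2
  have h4 := (hasSum_nat_add_iff (f := fun p : ℕ => term D w t (2*p)) 1).1 h3
  simpa [term_zero] using h4

lemma hasSum_term_total :
    HasSum (term D w t)
      ((-(w/2) * (Real.cos t + gfun t)) • W1 D + (gfun t - (w/2) * Real.sin t) • W2 D) := by
  have h := (hasSum_term_even D w t).even_add_odd (hasSum_term_odd D w t)
  convert h using 1
  module

lemma tsum_term :
    ∑' n, term D w t n
      = (-(w/2) * (Real.cos t + gfun t)) • W1 D + (gfun t - (w/2) * Real.sin t) • W2 D :=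
  (hasSum_term_total D w t).tsum_eq

end

/-! derivative of the power function -/

lemma hasDerivAt_affine_pow {A' : Type*} [NormedRing A'] [NormedAlgebra ℝ A']
    (A B : A') (x : ℝ) (n : ℕ) :
    HasDerivAt (fun ε : ℝ => (A + ε • B)^n)
      (∑ k ∈ Finset.range n, (A + x • B)^k * B * (A + x • B)^(n-1-k)) x := by
  induction n with
  | zero => simpa using hasDerivAt_const x (1 : A')
  | succ n ih =>
    have hg : HasDerivAt (fun ε : ℝ => A + ε • B) B x := by
      simpa using ((hasDerivAt_id x).smul_const B).const_add A
    have h2 := ih.fun_mul hg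
    simp only [← pow_succ] at h2
    convert h2 using 1
    rw [Finset.sum_range_succ, Finset.sum_mul]
    congr 1
    · refine Finset.sum_congr rfl fun k hk => ?_
      rw [Finset.mem_range] at hk
      rw [show n+1-1-k = (n-1-k)+1 by omega, pow_succ, ← mul_assoc]
    · simp

section DerivSection
attribute [local instance] Matrix.linftyOpNormedRing Matrix.linftyOpNormedAlgebra
  Matrix.linftyOpNormedAddCommGroup Matrix.linftyOpNormedSpace

noncomputable section
variable {m : ℕ} (D : Matrix (Fin m) (Fin m) ℝ) (w t : ℝ)

def mulPmC (m : ℕ) : Msq m →L[ℝ] Mrect m :=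
  LinearMap.toContinuousLinearMap
    { toFun := fun X => X * Pm m
      map_add' := fun X Y => Matrix.add_mul X Y (Pm m)
      map_smul' := fun c X => by simp [Matrix.smul_mul] }

lemma mulPmC_apply (X : Msq m) : mulPmC m X = X * Pm m := rfl

theorem key_hasDerivAt (hm : 0 < m) :
    HasDerivAt (fun ε : ℝ => NormedSpace.exp (t • Om m + ε • Obr D w) * Pm m)
      (∑' n, term D w t n) 0 := by
  haveI : Nonempty (Fin m) := ⟨⟨0, hm⟩⟩
  set A := t • Om m with hA
  set Bm := Obr D w with hB
  set R := ‖A‖ + ‖Bm‖ with hRdef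
  have hR0 : (0:ℝ) ≤ R := add_nonneg (norm_nonneg _) (norm_nonneg _)
  set C := ‖Bm‖ * ‖Pm m‖ with hCdef
  have hC0 : (0:ℝ) ≤ C := mul_nonneg (norm_nonneg _) (norm_nonneg _)
  set u : ℕ → ℝ := fun n => C * ((n : ℝ) * R^(n-1) / n.factorial) with hu_def
  have hu : Summable u := by
    apply Summable.mul_left
    rw [← summable_nat_add_iff 1]
    refine (Real.summable_pow_div_factorial R).congr fun n => ?_
    have hfac : ((n+1).factorial : ℝ) = (n+1) * n.factorial := by
      exact_mod_cast Nat.factorial_succ n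
    have hne : (n.factorial : ℝ) ≠ 0 := by exact_mod_cast n.factorial_ne_zero
    simp only [Nat.add_sub_cancel]
    rw [hfac]
    push_cast
    field_simp
  have hball : ∀ x ∈ Metric.ball (0:ℝ) 1, ‖A + x • Bm‖ ≤ R := by
    intro x hx
    have hx1 : ‖x‖ < 1 := by simpa using hx
    calc ‖A + x • Bm‖ ≤ ‖A‖ + ‖x • Bm‖ := norm_add_le _ _
      _ = ‖A‖ + ‖x‖ * ‖Bm‖ := by rw [norm_smul x Bm]
      _ ≤ ‖A‖ + 1 * ‖Bm‖ := by gcongr <;> exact hx1.le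
      _ = R := by rw [one_mul]
  set g' : ℕ → ℝ → Mrect m := fun n x => (n.factorial:ℝ)⁻¹ •
    ((∑ k ∈ Finset.range n, (A + x • Bm)^k * Bm * (A + x • Bm)^(n-1-k)) * Pm m) with hg'
  have hderiv : ∀ (n:ℕ) (x:ℝ),
      HasDerivAt (fun ε => (n.factorial:ℝ)⁻¹ • ((A + ε • Bm)^n * Pm m)) (g' n x) x := by
    intro n x
    have h1 := hasDerivAt_affine_pow A Bm x n
    have h2 := ((mulPmC m).hasFDerivAt).comp_hasDerivAt x h1
    exact h2.const_smul ((n.factorial:ℝ)⁻¹)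
  have hbound : ∀ (n:ℕ), ∀ x ∈ Metric.ball (0:ℝ) 1, ‖g' n x‖ ≤ u n := by
    intro n x hx
    have hpowle : ∀ j:ℕ, ‖(A + x • Bm)^j‖ ≤ R^j := fun j =>
      (norm_pow_le _ j).trans (pow_le_pow_left₀ (norm_nonneg _) (hball x hx) j)
    have hterm : ∀ k ∈ Finset.range n,
        ‖(A + x • Bm)^k * Bm * (A + x • Bm)^(n-1-k)‖ ≤ R^(n-1) * ‖Bm‖ := by
      intro k hk
      rw [Finset.mem_range] at hk
      calc ‖(A + x • Bm)^k * Bm * (A + x • Bm)^(n-1-k)‖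
          ≤ ‖(A + x • Bm)^k * Bm‖ * ‖(A + x • Bm)^(n-1-k)‖ := norm_mul_le _ _
        _ ≤ (‖(A + x • Bm)^k‖ * ‖Bm‖) * ‖(A + x • Bm)^(n-1-k)‖ := by
            gcongr; exact norm_mul_le _ _
        _ ≤ (R^k * ‖Bm‖) * R^(n-1-k) := by
            gcongr <;> [exact hpowle k; exact hpowle _]
        _ = (R^k * R^(n-1-k)) * ‖Bm‖ := by ring
        _ = R^(n-1) * ‖Bm‖ := by rw [← pow_add]; congr 2; omega
    have hsumnorm : ‖∑ k ∈ Finset.range n, (A + x • Bm)^k * Bm * (A + x • Bm)^(n-1-k)‖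
        ≤ (n:ℝ) * (R^(n-1) * ‖Bm‖) := by
      refine (norm_sum_le _ _).trans ?_
      calc ∑ k ∈ Finset.range n, ‖(A + x • Bm)^k * Bm * (A + x • Bm)^(n-1-k)‖
          ≤ ∑ _k ∈ Finset.range n, R^(n-1) * ‖Bm‖ := Finset.sum_le_sum hterm
        _ = (n:ℝ) * (R^(n-1) * ‖Bm‖) := by
            rw [Finset.sum_const, Finset.card_range, nsmul_eq_mul]
    have hnorm : ‖g' n x‖ ≤ (n.factorial:ℝ)⁻¹ * (((n:ℝ) * (R^(n-1) * ‖Bm‖)) * ‖Pm m‖) := by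
      rw [hg']
      simp only []
      rw [norm_smul, norm_inv, Real.norm_natCast]
      refine mul_le_mul_of_nonneg_left ?_ (by positivity)
      refine (Matrix.linfty_opNorm_mul _ _).trans ?_
      exact mul_le_mul_of_nonneg_right hsumnorm (norm_nonneg _)
    refine hnorm.trans (le_of_eq ?_)
    rw [hu_def, hCdef]
    have hne : (n.factorial : ℝ) ≠ 0 := by exact_mod_cast n.factorial_ne_zero
    field_simp
  have hsum0 : Summable (fun n : ℕ => (n.factorial:ℝ)⁻¹ • ((A + (0:ℝ) • Bm)^n * Pm m)) := by
    have h1 := NormedSpace.expSeries_summable' (𝕂 := ℝ) (A + (0:ℝ) • Bm)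
    have h2 := h1.map ((mulPmC m).toLinearMap.toAddMonoidHom) (mulPmC m).continuous
    refine h2.congr fun n => ?_
    simp only [Function.comp, LinearMap.toAddMonoidHom_coe, ContinuousLinearMap.coe_coe]
    rw [_root_.map_smul, mulPmC_apply]
  have hMain := hasDerivAt_tsum_of_isPreconnected hu Metric.isOpen_ball
      (convex_ball (0:ℝ) 1).isPreconnected (fun n y _ => hderiv n y) hbound
      (Metric.mem_ball_self one_pos) hsum0 (Metric.mem_ball_self one_pos)
  have hfun : (fun ε : ℝ => NormedSpace.exp (A + ε • Bm) * Pm m)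
      = fun ε : ℝ => ∑' n : ℕ, (n.factorial:ℝ)⁻¹ • ((A + ε • Bm)^n * Pm m) := by
    funext ε
    rw [NormedSpace.exp_eq_tsum ℝ]
    have hs := NormedSpace.expSeries_summable' (𝕂 := ℝ) (A + ε • Bm)
    rw [show (∑' n : ℕ, ((n.factorial:ℝ))⁻¹ • (A + ε • Bm)^n) * Pm m
        = mulPmC m (∑' n : ℕ, ((n.factorial:ℝ))⁻¹ • (A + ε • Bm)^n) from rfl,
      (mulPmC m).map_tsum hs]
    congr 1
    funext n
    rw [_root_.map_smul, mulPmC_apply]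
  have hval : (∑' n, g' n 0) = ∑' n, term D w t n := by
    congr 1
    funext n
    rw [hg']
    simp only [zero_smul, add_zero]
    rfl
  rw [hfun]
  rw [← hval]
  exact hMain

theorem entry_hasDerivAt (hm : 0 < m) (i : Fin m ⊕ Fin m) (j : Fin m) :
    HasDerivAt (fun ε : ℝ => (NormedSpace.exp (t • Om m + ε • Obr D w) * Pm m) i j)
      (((-(w/2) * (Real.cos t + gfun t)) • W1 D
        + (gfun t - (w/2) * Real.sin t) • W2 D) i j) 0 := by
  have h := key_hasDerivAt D w t hm
  rw [tsum_term] at h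
  replace h := hasDerivAt_iff_tendsto_slope.1 h
  rw [hasDerivAt_iff_tendsto_slope]
  exact (tendsto_pi_nhds.1 ((tendsto_pi_nhds.1 h) i)) j

end
end DerivSection

/-! the scalar characterization -/

lemma scalar_iff {t : ℝ} (w : ℝ) :
    (-(w/2) * (Real.cos t + gfun t) = 0 ∧ gfun t - (w/2) * Real.sin t = 0)
    ↔ ((Real.sin t + t * Real.cos t = 0 ∧ w * t = 2)
        ∨ ((∃ k : ℤ, k ≠ 0 ∧ t = k * Real.pi) ∧ w = 0)) := by
  by_cases ht : t = 0
  · subst ht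
    constructor
    · rintro ⟨-, h2⟩
      rw [gfun_zero, Real.sin_zero, mul_zero, sub_zero] at h2
      exact absurd h2 one_ne_zero
    · rintro (⟨-, h2⟩ | ⟨⟨k, hk, hkt⟩, -⟩)
      · rw [mul_zero] at h2; norm_num at h2
      · have hk0 : (k:ℝ) = 0 := by
          rcases mul_eq_zero.1 hkt.symm with h | h
          · exact h
          · exact absurd h Real.pi_ne_zero
        exact absurd (by exact_mod_cast hk0) hk
  · rw [gfun_of_ne_zero ht]
    constructor
    · rintro ⟨h1, h2⟩
      by_cases hw : w = 0
      · right
        refine ⟨?_, hw⟩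
        rw [hw] at h2
        norm_num at h2
        have hs : Real.sin t = 0 := by
          rcases h2 with h | h
          · exact h
          · exact absurd h ht
        rcases Real.sin_eq_zero_iff.1 hs with ⟨k, hk⟩
        refine ⟨k, ?_, hk.symm⟩
        rintro rfl
        rw [Int.cast_zero, zero_mul] at hk
        exact ht hk.symm
      · left
        have hx : Real.cos t + Real.sin t / t = 0 := by
          rcases mul_eq_zero.1 h1 with h | h
          · exfalso; apply hw; linarith
          · exact h
        have hsc : Real.sin t + t * Real.cos t = 0 := by
          field_simp at hx
          linarith
        refine ⟨hsc, ?_⟩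
        by_cases hs : Real.sin t = 0
        · exfalso
          have hc : Real.cos t = 0 := by
            rw [hs, zero_add] at hsc
            rcases mul_eq_zero.1 hsc with h | h
            · exact absurd h ht
            · exact h
          have hpy := Real.sin_sq_add_cos_sq t
          rw [hs, hc] at hpy
          norm_num at hpy
        · have h3 : Real.sin t * (1/t - w/2) = 0 := by
            field_simp
            field_simp at h2
            linarith
          rcases mul_eq_zero.1 h3 with h | h
          · exact absurd h hs
          · have h4 : 1/t = w/2 := by linarith
            field_simp at h4
            linarith
    · rintro (⟨h1, h2⟩ | ⟨⟨k, hk, hkt⟩, hw⟩)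
      · constructor
        · have hx : Real.cos t + Real.sin t / t = 0 := by
            field_simp
            linarith
          rw [hx, mul_zero]
        · have hw2 : w = 2 / t := by
            rw [eq_div_iff ht]; linarith
          rw [hw2]
          field_simp
          ring
      · have hs : Real.sin t = 0 := by rw [hkt]; exact Real.sin_int_mul_pi k
        rw [hw, hs]
        norm_num

end Stmt0Aux

attribute [local instance] Matrix.normedAddCommGroup Matrix.normedSpace

/-- Lemma 4.1 (Lemma `lmm:DexpOmega`): the derivative at ε = 0 of
`ε ↦ exp(tΩ + εΩ̆)·I_{2m×m}` vanishes iff (sin t + t cos t = 0 and w t = 2) or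
(t = kπ, k nonzero integer, and w = 0). -/
theorem stmt0 (m : ℕ) (hm : 0 < m) (D : Matrix (Fin m) (Fin m) ℝ) (hD : D ≠ 0) (w t : ℝ) :
    deriv (fun ε : ℝ =>
        NormedSpace.exp
            (t • Matrix.fromBlocks (0 : Matrix (Fin m) (Fin m) ℝ) (-1) 1 0
              + ε • Matrix.fromBlocks ((-w) • D) D D 0) *
          Matrix.fromRows (1 : Matrix (Fin m) (Fin m) ℝ) (0 : Matrix (Fin m) (Fin m) ℝ)) 0
      = 0
    ↔ (Real.sin t + t * Real.cos t = 0 ∧ w * t = 2)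
      ∨ ((∃ k : ℤ, k ≠ 0 ∧ t = k * π) ∧ w = 0) := by
  classical
  have hval : deriv (fun ε : ℝ =>
        NormedSpace.exp
            (t • Matrix.fromBlocks (0 : Matrix (Fin m) (Fin m) ℝ) (-1) 1 0
              + ε • Matrix.fromBlocks ((-w) • D) D D 0) *
          Matrix.fromRows (1 : Matrix (Fin m) (Fin m) ℝ) (0 : Matrix (Fin m) (Fin m) ℝ)) 0
      = (-(w/2) * (Real.cos t + Stmt0Aux.gfun t)) • Stmt0Aux.W1 D
        + (Stmt0Aux.gfun t - (w/2) * Real.sin t) • Stmt0Aux.W2 D := by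
    apply HasDerivAt.deriv
    rw [hasDerivAt_iff_tendsto_slope]
    refine tendsto_pi_nhds.2 fun i => tendsto_pi_nhds.2 fun j => ?_
    have h := Stmt0Aux.entry_hasDerivAt D w t hm i j
    rw [hasDerivAt_iff_tendsto_slope] at h
    exact h
  rw [hval]
  have hW : (-(w/2) * (Real.cos t + Stmt0Aux.gfun t)) • Stmt0Aux.W1 D
        + (Stmt0Aux.gfun t - (w/2) * Real.sin t) • Stmt0Aux.W2 D
      = Matrix.fromRows ((-(w/2) * (Real.cos t + Stmt0Aux.gfun t)) • D)
          ((Stmt0Aux.gfun t - (w/2) * Real.sin t) • D) := by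
    rw [Stmt0Aux.W1, Stmt0Aux.W2, Stmt0Aux.fromRows_smul, Stmt0Aux.fromRows_smul,
      Stmt0Aux.fromRows_add]
    simp
  rw [hW, show (0 : Matrix (Fin m ⊕ Fin m) (Fin m) ℝ) = Matrix.fromRows 0 0 from
    Matrix.fromRows_zero.symm, Matrix.fromRows_ext_iff, smul_eq_zero, smul_eq_zero]
  simp only [hD, or_false]
  exact Stmt0Aux.scalar_iff w
end

section
/- Let m be a positive integer, let D be a real m×m matrix, let w be real, and let t be a nonzero real number. Define the 2m×2m real matrices Ω = [[0, -I_m],[I_m, 0]] and Ω̆ = [[-w·D, D],[D, 0]]. Then the derivative at ε = 0 of the map ε ↦ exp(tΩ + εΩ̆)·I_{2m×m} equals the 2m×m matrix whose top m×m block is -(w/2)·(sin(t)/t + cos(t))·D and whose bottom m×m block is (1/2)·(2/t - w)·sin(t)·D. -/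
open Matrix Real
open scoped Nat


section BanachAlgebra
set_option linter.unusedSectionVars false

variable {𝔸 : Type*} [NormedRing 𝔸] [NormedAlgebra ℝ 𝔸] [CompleteSpace 𝔸]

lemma aux_hasDerivAt_pow_comp {f : ℝ → 𝔸} {f' : 𝔸} {x : ℝ} (hf : HasDerivAt f f' x) (n : ℕ) :
    HasDerivAt (fun e => f e ^ n)
      (∑ k ∈ Finset.range n, f x ^ k * f' * f x ^ (n - 1 - k)) x := by
  induction n with
  | zero => simpa using hasDerivAt_const x (1 : 𝔸)
  | succ n ih =>
    have h := ih.mul hf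
    have heq : (fun e => f e ^ n * f e) = fun e => f e ^ (n + 1) := by
      funext e; rw [← pow_succ]
    simp only [Pi.mul_def] at h
    rw [heq] at h
    convert h using 1
    rw [Finset.sum_range_succ, Finset.sum_mul]
    congr 1
    · refine Finset.sum_congr rfl fun k hk => ?_
      have hk' : n - 1 - k + 1 = n + 1 - 1 - k := by
        have := Finset.mem_range.1 hk; omega
      rw [← hk', pow_succ]
      noncomm_ring
    · simp

lemma aux_summable_bound (b R : ℝ) :
    Summable (fun n : ℕ => b * ((n : ℝ) * R ^ n / n !)) := by
  apply Summable.mul_left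
  rw [← summable_nat_add_iff 1]
  have heq : (fun n : ℕ => ((n + 1 : ℕ) : ℝ) * R ^ (n + 1) / ((n + 1)! : ℝ))
      = fun n : ℕ => R * (R ^ n / (n ! : ℝ)) := by
    funext n
    have h0 : ((n + 1)! : ℝ) = ((n : ℝ) + 1) * (n ! : ℝ) := by
      rw [Nat.factorial_succ]; push_cast; ring
    have h1 : (n ! : ℝ) ≠ 0 := Nat.cast_ne_zero.2 (Nat.factorial_ne_zero n)
    have h2 : ((n : ℝ) + 1) ≠ 0 := by positivity
    rw [h0]
    push_cast
    field_simp
    ring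
  exact heq ▸ ((Real.summable_pow_div_factorial R).mul_left R)

variable [NormOneClass 𝔸]

lemma aux_key (A B C X : 𝔸) (hCA : C * A = A * C) (hB : B = C + (X * A - A * X)) :
    HasDerivAt (fun ε : ℝ => NormedSpace.exp (A + ε • B))
      (C * NormedSpace.exp A + (X * NormedSpace.exp A - NormedSpace.exp A * X)) 0 := by
  classical
  set R : ℝ := ‖A‖ + ‖B‖ + 1 with hR
  have hR1 : (1 : ℝ) ≤ R := by
    have := norm_nonneg A; have := norm_nonneg B; simp only [hR]; linarith
  have hder : ∀ (n : ℕ) (y : ℝ), y ∈ Metric.ball (0 : ℝ) 1 →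
      HasDerivAt (fun ε : ℝ => (n ! : ℝ)⁻¹ • (A + ε • B) ^ n)
        ((n ! : ℝ)⁻¹ • ∑ k ∈ Finset.range n,
          (A + y • B) ^ k * B * (A + y • B) ^ (n - 1 - k)) y := by
    intro n y _
    have h1 : HasDerivAt (fun ε : ℝ => A + ε • B) B y := by
      simpa using ((hasDerivAt_id y).smul_const B).const_add A
    exact (aux_hasDerivAt_pow_comp h1 n).const_smul (n ! : ℝ)⁻¹
  have hbound : ∀ (n : ℕ) (y : ℝ), y ∈ Metric.ball (0 : ℝ) 1 →
      ‖(n ! : ℝ)⁻¹ • ∑ k ∈ Finset.range n,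
          (A + y • B) ^ k * B * (A + y • B) ^ (n - 1 - k)‖
        ≤ ‖B‖ * ((n : ℝ) * R ^ n / n !) := by
    intro n y hy
    have hyn : |y| ≤ 1 := by
      have := Metric.mem_ball.1 hy
      rw [Real.dist_eq, sub_zero] at this
      linarith
    have hAB : ‖A + y • B‖ ≤ R := by
      calc ‖A + y • B‖ ≤ ‖A‖ + ‖y • B‖ := norm_add_le _ _
        _ = ‖A‖ + |y| * ‖B‖ := by rw [norm_smul, Real.norm_eq_abs]
        _ ≤ ‖A‖ + 1 * ‖B‖ := by
            have := norm_nonneg B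
            nlinarith
        _ ≤ R := by simp only [hR]; linarith
    have hterm : ∀ k ∈ Finset.range n,
        ‖(A + y • B) ^ k * B * (A + y • B) ^ (n - 1 - k)‖ ≤ ‖B‖ * R ^ n := by
      intro k hk
      have hkn := Finset.mem_range.1 hk
      have hRk : (0:ℝ) ≤ R := by linarith
      calc ‖(A + y • B) ^ k * B * (A + y • B) ^ (n - 1 - k)‖
          ≤ ‖(A + y • B) ^ k * B‖ * ‖(A + y • B) ^ (n - 1 - k)‖ := norm_mul_le _ _
        _ ≤ ‖(A + y • B) ^ k‖ * ‖B‖ * ‖(A + y • B) ^ (n - 1 - k)‖ := by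
            gcongr; exact norm_mul_le _ _
        _ ≤ ‖A + y • B‖ ^ k * ‖B‖ * ‖A + y • B‖ ^ (n - 1 - k) := by
            gcongr
            · exact norm_pow_le _ _
            · exact norm_pow_le _ _
        _ ≤ R ^ k * ‖B‖ * R ^ (n - 1 - k) := by gcongr <;> exact norm_nonneg _
        _ = ‖B‖ * R ^ (k + (n - 1 - k)) := by rw [pow_add]; ring
        _ ≤ ‖B‖ * R ^ n := by
            have hle : k + (n - 1 - k) ≤ n := by omega
            have hBn := norm_nonneg B
            gcongr
    calc ‖(n ! : ℝ)⁻¹ • ∑ k ∈ Finset.range n,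
          (A + y • B) ^ k * B * (A + y • B) ^ (n - 1 - k)‖
        = (n ! : ℝ)⁻¹ * ‖∑ k ∈ Finset.range n,
          (A + y • B) ^ k * B * (A + y • B) ^ (n - 1 - k)‖ := by
          rw [norm_smul, Real.norm_eq_abs, abs_of_nonneg (by positivity)]
      _ ≤ (n ! : ℝ)⁻¹ * ((n : ℝ) * (‖B‖ * R ^ n)) := by
          gcongr
          calc ‖∑ k ∈ Finset.range n, (A + y • B) ^ k * B * (A + y • B) ^ (n - 1 - k)‖
              ≤ ∑ k ∈ Finset.range n, ‖(A + y • B) ^ k * B * (A + y • B) ^ (n - 1 - k)‖ :=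
                norm_sum_le _ _
            _ ≤ ∑ _k ∈ Finset.range n, ‖B‖ * R ^ n := Finset.sum_le_sum hterm
            _ = (n : ℝ) * (‖B‖ * R ^ n) := by
                rw [Finset.sum_const, Finset.card_range, nsmul_eq_mul]
      _ = ‖B‖ * ((n : ℝ) * R ^ n / n !) := by ring
  have hsum0 : Summable fun n : ℕ => (n ! : ℝ)⁻¹ • (A + (0 : ℝ) • B) ^ n := by
    simpa using NormedSpace.expSeries_summable' (𝕂 := ℝ) A
  have Hd := hasDerivAt_tsum_of_isPreconnected (aux_summable_bound ‖B‖ R)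
      Metric.isOpen_ball (convex_ball (0 : ℝ) 1).isPreconnected hder hbound
      (Metric.mem_ball_self one_pos) hsum0 (Metric.mem_ball_self one_pos)
  have hfun : (fun z : ℝ => ∑' n : ℕ, (n ! : ℝ)⁻¹ • (A + z • B) ^ n)
      = fun z : ℝ => NormedSpace.exp (A + z • B) := by
    funext z; rw [NormedSpace.exp_eq_tsum (𝕂 := ℝ)]
  rw [hfun] at Hd
  convert Hd using 1
  · rfl
  simp only [zero_smul, add_zero]
  symm
  apply HasSum.tsum_eq
  have hterm : ∀ n : ℕ, (n ! : ℝ)⁻¹ • ∑ k ∈ Finset.range n, A ^ k * B * A ^ (n - 1 - k)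
      = ((n ! : ℝ)⁻¹ • n • (C * A ^ (n - 1)))
        + ((n ! : ℝ)⁻¹ • (X * A ^ n) - (n ! : ℝ)⁻¹ • (A ^ n * X)) := by
    intro n
    have h1 : ∀ k ∈ Finset.range n, A ^ k * B * A ^ (n - 1 - k)
        = C * A ^ (n - 1) + (A ^ k * X * A ^ (n - k) - A ^ (k + 1) * X * A ^ (n - 1 - k)) := by
      intro k hk
      have hkn := Finset.mem_range.1 hk
      have hC : A ^ k * C = C * A ^ k :=
        (Commute.pow_left (show Commute A C from hCA.symm) k).eq
      have hpow : A ^ k * A ^ (n - 1 - k) = A ^ (n - 1) := by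
        rw [← pow_add]; congr 1; omega
      have hpow2 : A * A ^ (n - 1 - k) = A ^ (n - k) := by
        rw [← pow_succ']; congr 1; omega
      have e1 : A ^ k * C * A ^ (n - 1 - k) = C * A ^ (n - 1) := by
        rw [hC, mul_assoc, hpow]
      have e2 : A ^ k * (X * A) * A ^ (n - 1 - k) = A ^ k * X * A ^ (n - k) := by
        calc A ^ k * (X * A) * A ^ (n - 1 - k)
            = A ^ k * X * (A * A ^ (n - 1 - k)) := by noncomm_ring
          _ = A ^ k * X * A ^ (n - k) := by rw [hpow2]
      have e3 : A ^ k * (A * X) * A ^ (n - 1 - k) = A ^ (k + 1) * X * A ^ (n - 1 - k) := by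
        rw [pow_succ]
        noncomm_ring
      rw [hB, mul_add, add_mul, mul_sub, sub_mul, e1, e2, e3]
    have hsplit : ∑ k ∈ Finset.range n, A ^ k * B * A ^ (n - 1 - k)
        = n • (C * A ^ (n - 1)) + (X * A ^ n - A ^ n * X) := by
      rw [Finset.sum_congr rfl h1, Finset.sum_add_distrib, Finset.sum_const,
        Finset.card_range]
      congr 1
      have h2 : ∀ k ∈ Finset.range n,
          A ^ k * X * A ^ (n - k) - A ^ (k + 1) * X * A ^ (n - 1 - k)
            = (fun j => A ^ j * X * A ^ (n - j)) k - (fun j => A ^ j * X * A ^ (n - j)) (k + 1) := by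
        intro k hk
        have hkn := Finset.mem_range.1 hk
        simp only
        congr 3
        omega
      rw [Finset.sum_congr rfl h2, Finset.sum_range_sub' (fun j => A ^ j * X * A ^ (n - j)) n]
      simp
    rw [hsplit, smul_add, smul_sub]
  rw [funext hterm]
  have hexp := NormedSpace.exp_series_hasSum_exp' (𝕂 := ℝ) A
  have h2 : HasSum (fun n : ℕ => (n ! : ℝ)⁻¹ • (X * A ^ n)) (X * NormedSpace.exp A) := by
    have := hexp.mul_left X
    simpa [mul_smul_comm] using this
  have h3 : HasSum (fun n : ℕ => (n ! : ℝ)⁻¹ • (A ^ n * X)) (NormedSpace.exp A * X) := by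
    have := hexp.mul_right X
    simpa [smul_mul_assoc] using this
  have h1s : HasSum (fun n : ℕ => (n ! : ℝ)⁻¹ • n • (C * A ^ (n - 1)))
      (C * NormedSpace.exp A) := by
    have hbase := hexp.mul_left C
    have hshift : (fun n : ℕ => ((n + 1)! : ℝ)⁻¹ • (n + 1) • (C * A ^ (n + 1 - 1)))
        = fun n : ℕ => C * ((n ! : ℝ)⁻¹ • A ^ n) := by
      funext n
      have h0 : ((n + 1)! : ℝ) = ((n : ℝ) + 1) * (n ! : ℝ) := by
        rw [Nat.factorial_succ]; push_cast; ring
      have hf1 : (n ! : ℝ) ≠ 0 := Nat.cast_ne_zero.2 (Nat.factorial_ne_zero n)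
      rw [Nat.add_sub_cancel, mul_smul_comm, ← Nat.cast_smul_eq_nsmul ℝ, smul_smul]
      congr 1
      rw [h0]
      push_cast
      field_simp
    have hs : HasSum (fun n : ℕ => ((n + 1)! : ℝ)⁻¹ • (n + 1) • (C * A ^ (n + 1 - 1)))
        (C * NormedSpace.exp A) := hshift ▸ hbase
    have := (hasSum_nat_add_iff (f := fun n : ℕ => (n ! : ℝ)⁻¹ • n • (C * A ^ (n - 1))) 1).1 hs
    simpa using this
  exact h1s.add (h2.sub h3)

lemma aux_expJ (J : 𝔸) (hJ : J * J = -1) (t : ℝ) :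
    NormedSpace.exp (t • J) = Real.cos t • (1 : 𝔸) + Real.sin t • J := by
  rw [NormedSpace.exp_eq_tsum (𝕂 := ℝ)]
  refine HasSum.tsum_eq (HasSum.even_add_odd ?_ ?_)
  · have h := (Real.hasSum_cos t).smul_const (1 : 𝔸)
    have hfun : ∀ k : ℕ, (((2 * k)! : ℝ))⁻¹ • (t • J) ^ (2 * k)
        = ((-1) ^ k * t ^ (2 * k) / (2 * k)!) • (1 : 𝔸) := by
      intro k
      have hJ2 : J ^ (2 * k) = ((-1 : ℝ) ^ k) • (1 : 𝔸) := by
        rw [pow_mul, pow_two, hJ]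
        induction k with
        | zero => simp
        | succ j ihj => rw [pow_succ, ihj, pow_succ]; simp [smul_smul]
      rw [smul_pow, hJ2, smul_smul, smul_smul]
      congr 1
      ring
    rw [show (fun k : ℕ => (((2 * k)! : ℝ))⁻¹ • (t • J) ^ (2 * k))
      = fun k : ℕ => ((-1) ^ k * t ^ (2 * k) / (2 * k)!) • (1 : 𝔸) from funext hfun]
    exact h
  · have h := (Real.hasSum_sin t).smul_const J
    have hfun : ∀ k : ℕ, (((2 * k + 1)! : ℝ))⁻¹ • (t • J) ^ (2 * k + 1)
        = ((-1) ^ k * t ^ (2 * k + 1) / (2 * k + 1)!) • J := by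
      intro k
      have hJ2 : J ^ (2 * k) = ((-1 : ℝ) ^ k) • (1 : 𝔸) := by
        rw [pow_mul, pow_two, hJ]
        induction k with
        | zero => simp
        | succ j ihj => rw [pow_succ, ihj, pow_succ]; simp [smul_smul]
      have hJ3 : J ^ (2 * k + 1) = ((-1 : ℝ) ^ k) • J := by
        rw [pow_succ, hJ2, smul_mul_assoc, one_mul]
      rw [smul_pow, hJ3, smul_smul, smul_smul]
      congr 1
      ring
    rw [show (fun k : ℕ => (((2 * k + 1)! : ℝ))⁻¹ • (t • J) ^ (2 * k + 1))
      = fun k : ℕ => ((-1) ^ k * t ^ (2 * k + 1) / (2 * k + 1)!) • J from funext hfun]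
    exact h

end BanachAlgebra


section MatAux
variable {m₁ m₂ n : Type*}

lemma aux_fromRows_add (A₁ B₁ : Matrix m₁ n ℝ) (A₂ B₂ : Matrix m₂ n ℝ) :
    fromRows A₁ A₂ + fromRows B₁ B₂ = fromRows (A₁ + B₁) (A₂ + B₂) := by
  ext (i | i) j <;> simp

lemma aux_fromRows_sub (A₁ B₁ : Matrix m₁ n ℝ) (A₂ B₂ : Matrix m₂ n ℝ) :
    fromRows A₁ A₂ - fromRows B₁ B₂ = fromRows (A₁ - B₁) (A₂ - B₂) := by
  ext (i | i) j <;> simp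

lemma aux_smul_fromRows (c : ℝ) (A₁ : Matrix m₁ n ℝ) (A₂ : Matrix m₂ n ℝ) :
    c • fromRows A₁ A₂ = fromRows (c • A₁) (c • A₂) := by
  ext (i | i) j <;> simp

end MatAux

section MatId
variable (m : ℕ) (D : Matrix (Fin m) (Fin m) ℝ) (w t : ℝ)

lemma aux_OmOm :
    (fromBlocks (0 : Matrix (Fin m) (Fin m) ℝ) (-1) 1 0 : Matrix (Fin m ⊕ Fin m) (Fin m ⊕ Fin m) ℝ)
    * fromBlocks 0 (-1) 1 0 = -1 := by
  rw [fromBlocks_multiply]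
  have h1 : (-1 : Matrix (Fin m ⊕ Fin m) (Fin m ⊕ Fin m) ℝ) = fromBlocks (-1) 0 0 (-1) := by
    rw [← fromBlocks_one, fromBlocks_neg]
    simp
  rw [h1]
  congr 1 <;> simp

lemma aux_hCA :
    (fromBlocks ((-(w/2)) • D) 0 0 ((-(w/2)) • D) : Matrix (Fin m ⊕ Fin m) (Fin m ⊕ Fin m) ℝ)
      * (t • fromBlocks 0 (-1) 1 0)
    = (t • fromBlocks 0 (-1) 1 0 : Matrix (Fin m ⊕ Fin m) (Fin m ⊕ Fin m) ℝ)
      * fromBlocks ((-(w/2)) • D) 0 0 ((-(w/2)) • D) := by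
  rw [Matrix.mul_smul, Matrix.smul_mul, fromBlocks_multiply, fromBlocks_multiply]
  congr 2 <;> simp

lemma aux_hB (ht : t ≠ 0) :
    (fromBlocks ((-w) • D) D D 0 : Matrix (Fin m ⊕ Fin m) (Fin m ⊕ Fin m) ℝ)
    = fromBlocks ((-(w/2)) • D) 0 0 ((-(w/2)) • D)
      + ((t⁻¹ • fromBlocks 0 ((-(w/2)) • D) 0 D) * (t • fromBlocks 0 (-1) 1 0)
        - (t • fromBlocks 0 (-1) 1 0 : Matrix (Fin m ⊕ Fin m) (Fin m ⊕ Fin m) ℝ)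
          * (t⁻¹ • fromBlocks 0 ((-(w/2)) • D) 0 D)) := by
  rw [Matrix.smul_mul, Matrix.mul_smul, Matrix.smul_mul, Matrix.mul_smul,
    smul_smul, smul_smul, inv_mul_cancel₀ ht, mul_inv_cancel₀ ht, one_smul, one_smul,
    fromBlocks_multiply, fromBlocks_multiply, sub_eq_add_neg, fromBlocks_neg,
    fromBlocks_add, fromBlocks_add]
  ext i j
  rcases i with i | i <;> rcases j with j | j <;>
    simp [Matrix.smul_apply] <;> ring

end MatId

section LP
variable (m : ℕ) (D : Matrix (Fin m) (Fin m) ℝ) (w t : ℝ)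

lemma aux_LP (ht : t ≠ 0) :
    ((fromBlocks ((-(w/2)) • D) 0 0 ((-(w/2)) • D) : Matrix (Fin m ⊕ Fin m) (Fin m ⊕ Fin m) ℝ)
        * (Real.cos t • 1 + Real.sin t • fromBlocks 0 (-1) 1 0)
      + ((t⁻¹ • fromBlocks 0 ((-(w/2)) • D) 0 D)
          * (Real.cos t • 1 + Real.sin t • fromBlocks 0 (-1) 1 0)
        - (Real.cos t • 1 + Real.sin t • fromBlocks 0 (-1) 1 0)
          * (t⁻¹ • fromBlocks 0 ((-(w/2)) • D) 0 D)))
      * fromRows (1 : Matrix (Fin m) (Fin m) ℝ) (0 : Matrix (Fin m) (Fin m) ℝ)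
    = fromRows (((-(w / 2)) * (Real.sin t / t + Real.cos t)) • D)
        (((1 / 2) * (2 / t - w) * Real.sin t) • D) := by
  have hEP : (Real.cos t • 1 + Real.sin t • fromBlocks 0 (-1) 1 0
        : Matrix (Fin m ⊕ Fin m) (Fin m ⊕ Fin m) ℝ)
      * fromRows (1 : Matrix (Fin m) (Fin m) ℝ) (0 : Matrix (Fin m) (Fin m) ℝ)
      = fromRows (Real.cos t • 1) (Real.sin t • 1) := by
    rw [Matrix.add_mul, Matrix.smul_mul, Matrix.smul_mul, Matrix.one_mul,
      fromBlocks_mul_fromRows, aux_smul_fromRows, aux_smul_fromRows, aux_fromRows_add]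
    congr 1 <;> simp
  have hXP : (fromBlocks 0 ((-(w/2)) • D) 0 D : Matrix (Fin m ⊕ Fin m) (Fin m ⊕ Fin m) ℝ)
      * fromRows (1 : Matrix (Fin m) (Fin m) ℝ) (0 : Matrix (Fin m) (Fin m) ℝ) = 0 := by
    rw [fromBlocks_mul_fromRows, ← fromRows_zero]
    congr 1 <;> simp
  rw [Matrix.add_mul, Matrix.sub_mul, Matrix.mul_assoc, Matrix.mul_assoc, Matrix.mul_assoc,
    hEP, Matrix.smul_mul, Matrix.smul_mul, hXP, smul_zero, Matrix.mul_zero,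
    sub_zero, fromBlocks_mul_fromRows, fromBlocks_mul_fromRows, aux_smul_fromRows,
    aux_fromRows_add]
  congr 1 <;> ext i j <;> rcases i with i | i <;>
    simp [Matrix.mul_apply, Matrix.smul_apply, Matrix.one_apply, Finset.mul_sum,
      mul_smul_comm, smul_smul] <;>
  field_simp <;> ring
end LP


lemma aux_entrywise (m : ℕ) (hm : 0 < m) (D : Matrix (Fin m) (Fin m) ℝ) (w t : ℝ) (ht : t ≠ 0)
    (i : Fin m ⊕ Fin m) (j : Fin m) :
    HasDerivAt (fun ε : ℝ =>
        ((NormedSpace.exp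
            (t • Matrix.fromBlocks (0 : Matrix (Fin m) (Fin m) ℝ) (-1) 1 0
              + ε • Matrix.fromBlocks ((-w) • D) D D 0) *
          Matrix.fromRows (1 : Matrix (Fin m) (Fin m) ℝ) (0 : Matrix (Fin m) (Fin m) ℝ)
            : Matrix (Fin m ⊕ Fin m) (Fin m) ℝ) i j))
      ((Matrix.fromRows
          (((-(w / 2)) * (Real.sin t / t + Real.cos t)) • D)
          (((1 / 2) * (2 / t - w) * Real.sin t) • D)
            : Matrix (Fin m ⊕ Fin m) (Fin m) ℝ) i j) 0 := by
  have hne : Nonempty (Fin m) := ⟨⟨0, hm⟩⟩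
  letI : NormedRing (Matrix (Fin m ⊕ Fin m) (Fin m ⊕ Fin m) ℝ) := Matrix.linftyOpNormedRing
  letI : NormedAlgebra ℝ (Matrix (Fin m ⊕ Fin m) (Fin m ⊕ Fin m) ℝ) := Matrix.linftyOpNormedAlgebra
  letI : NormOneClass (Matrix (Fin m ⊕ Fin m) (Fin m ⊕ Fin m) ℝ) := Matrix.linfty_opNormOneClass
  letI : CompleteSpace (Matrix (Fin m ⊕ Fin m) (Fin m ⊕ Fin m) ℝ) :=
    FiniteDimensional.complete ℝ _
  have hkey := aux_key (t • fromBlocks (0 : Matrix (Fin m) (Fin m) ℝ) (-1) 1 0)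
      (fromBlocks ((-w) • D) D D 0)
      (fromBlocks ((-(w/2)) • D) 0 0 ((-(w/2)) • D))
      (t⁻¹ • fromBlocks 0 ((-(w/2)) • D) 0 D)
      (aux_hCA m D w t) (aux_hB m D w t ht)
  rw [aux_expJ _ (aux_OmOm m) t] at hkey
  let φl : Matrix (Fin m ⊕ Fin m) (Fin m ⊕ Fin m) ℝ →ₗ[ℝ] ℝ :=
    { toFun := fun M =>
        (M * fromRows (1 : Matrix (Fin m) (Fin m) ℝ) (0 : Matrix (Fin m) (Fin m) ℝ)) i j
      map_add' := fun M N => by simp [Matrix.add_mul]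
      map_smul' := fun c M => by simp [Matrix.smul_mul] }
  have hφ := (LinearMap.toContinuousLinearMap φl).hasFDerivAt.comp_hasDerivAt 0 hkey
  have hval : (LinearMap.toContinuousLinearMap φl)
      ((fromBlocks ((-(w/2)) • D) 0 0 ((-(w/2)) • D)
          : Matrix (Fin m ⊕ Fin m) (Fin m ⊕ Fin m) ℝ)
        * (Real.cos t • 1 + Real.sin t • fromBlocks 0 (-1) 1 0)
      + ((t⁻¹ • fromBlocks 0 ((-(w/2)) • D) 0 D)
          * (Real.cos t • 1 + Real.sin t • fromBlocks 0 (-1) 1 0)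
        - (Real.cos t • 1 + Real.sin t • fromBlocks 0 (-1) 1 0)
          * (t⁻¹ • fromBlocks 0 ((-(w/2)) • D) 0 D)))
      = (Matrix.fromRows
          (((-(w / 2)) * (Real.sin t / t + Real.cos t)) • D)
          (((1 / 2) * (2 / t - w) * Real.sin t) • D)) i j := by
    simp only [LinearMap.coe_toContinuousLinearMap', LinearMap.coe_mk, AddHom.coe_mk, φl]
    rw [aux_LP m D w t ht]
  replace hφ := hφ.congr_deriv hval
  exact hφ

attribute [local instance] Matrix.normedAddCommGroup Matrix.normedSpace

/-- closed form of the derivative at ε = 0 of `ε ↦ exp(tΩ + εΩ̆)·I_{2m×m}`: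
top block `-(w/2)(sin t / t + cos t)·D`, bottom block `(1/2)(2/t - w)·sin t·D`. -/
theorem stmt4 (m : ℕ) (hm : 0 < m) (D : Matrix (Fin m) (Fin m) ℝ) (w t : ℝ) (ht : t ≠ 0) :
    deriv (fun ε : ℝ =>
        NormedSpace.exp
            (t • Matrix.fromBlocks (0 : Matrix (Fin m) (Fin m) ℝ) (-1) 1 0
              + ε • Matrix.fromBlocks ((-w) • D) D D 0) *
          Matrix.fromRows (1 : Matrix (Fin m) (Fin m) ℝ) (0 : Matrix (Fin m) (Fin m) ℝ)) 0
      = Matrix.fromRows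
          (((-(w / 2)) * (Real.sin t / t + Real.cos t)) • D)
          (((1 / 2) * (2 / t - w) * Real.sin t) • D) := by
  have H : HasDerivAt (fun ε : ℝ =>
        NormedSpace.exp
            (t • Matrix.fromBlocks (0 : Matrix (Fin m) (Fin m) ℝ) (-1) 1 0
              + ε • Matrix.fromBlocks ((-w) • D) D D 0) *
          Matrix.fromRows (1 : Matrix (Fin m) (Fin m) ℝ) (0 : Matrix (Fin m) (Fin m) ℝ))
      (Matrix.fromRows
          (((-(w / 2)) * (Real.sin t / t + Real.cos t)) • D)
          (((1 / 2) * (2 / t - w) * Real.sin t) • D)) 0 := by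
    exact hasDerivAt_pi.2 fun i => hasDerivAt_pi.2 fun j => aux_entrywise m hm D w t ht i j
  exact H.deriv
end

section
/- Let m be a positive integer, let D be a real m×m matrix, and let t be a nonzero real number. Define the 2m×2m real matrices Ω = [[0, -I_m],[I_m, 0]] and Ω̆ = [[D, 0],[0, 0]], and the m×m matrix Ψ̆ = (1/2)·D. Then the derivative at ε = 0 of the map ε ↦ exp(tΩ + εΩ̆)·I_{2m×m}·exp(-ε·Ψ̆) equals the 2m×m matrix whose top m×m block is (sin(t)/(2t))·D and whose bottom m×m block is the zero matrix. -/
open Matrix Real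

section Aux
open NormedSpace intervalIntegral


private noncomputable def Gmat (m : ℕ) (D : Matrix (Fin m) (Fin m) ℝ) (t : ℝ) :
    Matrix (Fin m ⊕ Fin m) (Fin m ⊕ Fin m) ℝ :=
  Matrix.fromBlocks ((Real.cos t / 2 + Real.sin t / (2 * t)) • D) (-((Real.sin t / 2) • D))
    ((Real.sin t / 2) • D) (-((Real.sin t / (2 * t) - Real.cos t / 2) • D))



private lemma cosmul (x y : ℝ) : cos x * cos y = (cos (x - y) + cos (x + y)) / 2 := by
  rw [cos_sub, cos_add]; ring
private lemma cossin (x y : ℝ) : cos x * sin y = (sin (x + y) - sin (x - y)) / 2 := by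
  rw [sin_sub, sin_add]; ring
private lemma sincos (x y : ℝ) : sin x * cos y = (sin (x + y) + sin (x - y)) / 2 := by
  rw [sin_sub, sin_add]; ring
private lemma sinmul (x y : ℝ) : sin x * sin y = (cos (x - y) - cos (x + y)) / 2 := by
  rw [cos_sub, cos_add]; ring

private lemma intI1 {t : ℝ} (ht : t ≠ 0) :
    ∫ s in (0:ℝ)..1, cos (s * t) * cos ((1 - s) * t) = cos t / 2 + sin t / (2 * t) := by
  have key : ∀ s ∈ Set.uIcc (0:ℝ) 1, HasDerivAt
      (fun s : ℝ => s * cos t / 2 + sin (2 * s * t - t) / (4 * t))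
      (cos (s * t) * cos ((1 - s) * t)) s := by
    intro s _
    have h1 : HasDerivAt (fun s : ℝ => 2 * s * t - t) (2 * t) s := by
      simpa using (((hasDerivAt_id s).const_mul 2).mul_const t).sub_const t
    have h2 := ((h1.sin).div_const (4 * t))
    have h3 := ((hasDerivAt_id s).mul_const (cos t)).div_const 2
    refine (h3.add h2).congr_deriv (Eq.symm ?_)
    rw [cosmul]
    have e1 : s * t - (1 - s) * t = 2 * s * t - t := by ring
    have e2 : s * t + (1 - s) * t = t := by ring
    rw [e1, e2]
    field_simp
    ring
  rw [intervalIntegral.integral_eq_sub_of_hasDerivAt key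
    (Continuous.intervalIntegrable (by fun_prop) 0 1)]
  have e1 : 2 * (1:ℝ) * t - t = t := by ring
  have e2 : 2 * (0:ℝ) * t - t = -t := by ring
  simp only [e1, e2, sin_neg]
  field_simp
  ring

private lemma intI2 {t : ℝ} (ht : t ≠ 0) :
    ∫ s in (0:ℝ)..1, cos (s * t) * sin ((1 - s) * t) = sin t / 2 := by
  have key : ∀ s ∈ Set.uIcc (0:ℝ) 1, HasDerivAt
      (fun s : ℝ => s * sin t / 2 + cos (2 * s * t - t) / (4 * t))
      (cos (s * t) * sin ((1 - s) * t)) s := by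
    intro s _
    have h1 : HasDerivAt (fun s : ℝ => 2 * s * t - t) (2 * t) s := by
      simpa using (((hasDerivAt_id s).const_mul 2).mul_const t).sub_const t
    have h2 := ((h1.cos).div_const (4 * t))
    have h3 := ((hasDerivAt_id s).mul_const (sin t)).div_const 2
    refine (h3.add h2).congr_deriv (Eq.symm ?_)
    rw [cossin]
    have e1 : s * t - (1 - s) * t = 2 * s * t - t := by ring
    have e2 : s * t + (1 - s) * t = t := by ring
    rw [e1, e2]
    field_simp
    ring
  rw [intervalIntegral.integral_eq_sub_of_hasDerivAt key
    (Continuous.intervalIntegrable (by fun_prop) 0 1)]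
  have e1 : 2 * (1:ℝ) * t - t = t := by ring
  have e2 : 2 * (0:ℝ) * t - t = -t := by ring
  simp only [e1, e2, cos_neg]
  field_simp
  ring

private lemma intI3 {t : ℝ} (ht : t ≠ 0) :
    ∫ s in (0:ℝ)..1, sin (s * t) * cos ((1 - s) * t) = sin t / 2 := by
  have key : ∀ s ∈ Set.uIcc (0:ℝ) 1, HasDerivAt
      (fun s : ℝ => s * sin t / 2 - cos (2 * s * t - t) / (4 * t))
      (sin (s * t) * cos ((1 - s) * t)) s := by
    intro s _
    have h1 : HasDerivAt (fun s : ℝ => 2 * s * t - t) (2 * t) s := by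
      simpa using (((hasDerivAt_id s).const_mul 2).mul_const t).sub_const t
    have h2 := ((h1.cos).div_const (4 * t))
    have h3 := ((hasDerivAt_id s).mul_const (sin t)).div_const 2
    refine (h3.sub h2).congr_deriv (Eq.symm ?_)
    rw [sincos]
    have e1 : s * t - (1 - s) * t = 2 * s * t - t := by ring
    have e2 : s * t + (1 - s) * t = t := by ring
    rw [e1, e2]
    field_simp
    ring
  rw [intervalIntegral.integral_eq_sub_of_hasDerivAt key
    (Continuous.intervalIntegrable (by fun_prop) 0 1)]
  have e1 : 2 * (1:ℝ) * t - t = t := by ring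
  have e2 : 2 * (0:ℝ) * t - t = -t := by ring
  simp only [e1, e2, cos_neg]
  field_simp
  ring

private lemma intI4 {t : ℝ} (ht : t ≠ 0) :
    ∫ s in (0:ℝ)..1, sin (s * t) * sin ((1 - s) * t) = sin t / (2 * t) - cos t / 2 := by
  have key : ∀ s ∈ Set.uIcc (0:ℝ) 1, HasDerivAt
      (fun s : ℝ => sin (2 * s * t - t) / (4 * t) - s * cos t / 2)
      (sin (s * t) * sin ((1 - s) * t)) s := by
    intro s _
    have h1 : HasDerivAt (fun s : ℝ => 2 * s * t - t) (2 * t) s := by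
      simpa using (((hasDerivAt_id s).const_mul 2).mul_const t).sub_const t
    have h2 := ((h1.sin).div_const (4 * t))
    have h3 := ((hasDerivAt_id s).mul_const (cos t)).div_const 2
    refine (h2.sub h3).congr_deriv (Eq.symm ?_)
    rw [sinmul]
    have e1 : s * t - (1 - s) * t = 2 * s * t - t := by ring
    have e2 : s * t + (1 - s) * t = t := by ring
    rw [e1, e2]
    field_simp
    ring
  rw [intervalIntegral.integral_eq_sub_of_hasDerivAt key
    (Continuous.intervalIntegrable (by fun_prop) 0 1)]
  have e1 : 2 * (1:ℝ) * t - t = t := by ring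
  have e2 : 2 * (0:ℝ) * t - t = -t := by ring
  simp only [e1, e2, sin_neg]
  field_simp
  ring

section LinftyWorld
attribute [local instance] Matrix.linftyOpSemiNormedRing Matrix.linftyOpNormedRing
  Matrix.linftyOpNormedAlgebra Matrix.linftyOpNormedAddCommGroup

variable {n : Type*} [Fintype n] [DecidableEq n]

private lemma hasDerivAt_entry {f : ℝ → Matrix n n ℝ} {f' : Matrix n n ℝ} {x : ℝ}
    (h : HasDerivAt f f' x) (p q : n) :
    HasDerivAt (fun y => f y p q) (f' p q) x := by
  let l : Matrix n n ℝ →ₗ[ℝ] ℝ :=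
    { toFun := fun M => M p q, map_add' := fun a b => rfl, map_smul' := fun c a => rfl }
  exact l.toContinuousLinearMap.hasFDerivAt.comp_hasDerivAt x h

private lemma exp_cont : Continuous (fun M : Matrix n n ℝ => NormedSpace.exp M) :=
  NormedSpace.exp_continuous

private theorem hasDerivAt_exp_perturb (X B : Matrix n n ℝ) :
    HasDerivAt (fun ε : ℝ => NormedSpace.exp (X + ε • B))
      (∫ s in (0:ℝ)..1,
        NormedSpace.exp (s • X) * B * NormedSpace.exp ((1 - s) • X)) 0 := by
  set G : ℝ → Matrix n n ℝ := fun ε =>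
    ∫ s in (0:ℝ)..1,
      NormedSpace.exp (s • X) * B * NormedSpace.exp ((1 - s) • (X + ε • B)) with hG
  have hGcont : Continuous G := by
    apply intervalIntegral.continuous_parametric_intervalIntegral_of_continuous'
    have : Continuous fun p : ℝ × ℝ =>
        NormedSpace.exp (p.2 • X) * B * NormedSpace.exp ((1 - p.2) • (X + p.1 • B)) := by
      apply Continuous.mul
      · exact (exp_cont.comp (continuous_snd.smul continuous_const)).mul continuous_const
      · exact exp_cont.comp <| (continuous_const.sub continuous_snd).smul
          (continuous_const.add (continuous_fst.smul continuous_const))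
    exact this
  have key : ∀ ε : ℝ, NormedSpace.exp (X + ε • B) = NormedSpace.exp X + ε • G ε := by
    intro ε
    set Y := X + ε • B with hY
    have hF : ∀ s ∈ Set.uIcc (0:ℝ) 1,
        HasDerivAt (fun u : ℝ => NormedSpace.exp (u • X) * NormedSpace.exp ((1 - u) • Y))
          (-(ε • (NormedSpace.exp (s • X) * B * NormedSpace.exp ((1 - s) • Y)))) s := by
      intro s _
      have h1 : HasDerivAt (fun u : ℝ => NormedSpace.exp (u • X))
          (NormedSpace.exp (s • X) * X) s := hasDerivAt_exp_smul_const X s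
      have hlin : HasDerivAt (fun u : ℝ => 1 - u) (-1 : ℝ) s := by
        simpa using (hasDerivAt_id s).const_sub 1
      have h2 : HasDerivAt (fun u : ℝ => NormedSpace.exp ((1 - u) • Y))
          ((-1 : ℝ) • (Y * NormedSpace.exp ((1 - s) • Y))) s :=
        (hasDerivAt_exp_smul_const' Y (1 - s)).scomp s hlin
      have h3 := h1.mul h2
      refine h3.congr_deriv (Eq.symm ?_)
      have hXY : X - Y = -(ε • B) := by rw [hY]; abel
      calc -(ε • (NormedSpace.exp (s • X) * B * NormedSpace.exp ((1 - s) • Y)))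
          = NormedSpace.exp (s • X) * (-(ε • B)) * NormedSpace.exp ((1 - s) • Y) := by
            rw [mul_neg, neg_mul, mul_smul_comm, smul_mul_assoc]
        _ = NormedSpace.exp (s • X) * (X - Y) * NormedSpace.exp ((1 - s) • Y) := by
            rw [hXY]
        _ = NormedSpace.exp (s • X) * X * NormedSpace.exp ((1 - s) • Y)
              + NormedSpace.exp (s • X) * ((-1 : ℝ) • (Y * NormedSpace.exp ((1 - s) • Y))) := by
            rw [mul_sub, sub_mul, mul_assoc _ Y _]
            simp [mul_assoc]
            abel
      done
    have hInt : @IntervalIntegrable (Matrix n n ℝ)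
        (PseudoMetricSpace.toUniformSpace (α := Matrix n n ℝ)).toTopologicalSpace _
        (fun s : ℝ => -(ε • (NormedSpace.exp (s • X) * B * NormedSpace.exp ((1 - s) • Y))))
        MeasureTheory.volume 0 1 := by
      apply Continuous.intervalIntegrable
      apply Continuous.neg
      refine Continuous.const_smul (g := fun s : ℝ =>
        NormedSpace.exp (s • X) * B * NormedSpace.exp ((1 - s) • Y)) ?_ ε
      exact ((exp_cont.comp ((continuous_id.smul continuous_const))).mul continuous_const).mul
        (exp_cont.comp ((continuous_const.sub continuous_id).smul continuous_const))
    have hftc := intervalIntegral.integral_eq_sub_of_hasDerivAt hF hInt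
    rw [intervalIntegral.integral_neg, intervalIntegral.integral_smul] at hftc
    simp only [one_smul, zero_smul, sub_zero, sub_self, NormedSpace.exp_zero, mul_one,
      one_mul] at hftc
    have : ε • G ε = NormedSpace.exp Y - NormedSpace.exp X := by
      have := neg_eq_iff_eq_neg.mp hftc
      rw [hG]
      rw [this]
      abel
    rw [hY] at this ⊢
    rw [this]
    abel
  refine hasDerivAt_iff_tendsto_slope.mpr ?_
  have hcongr : ∀ᶠ ε in nhdsWithin 0 {(0:ℝ)}ᶜ,
      G ε = slope (fun ε : ℝ => NormedSpace.exp (X + ε • B)) 0 ε := by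
    filter_upwards [self_mem_nhdsWithin] with ε hε
    rw [slope_def_module, key ε, key 0]
    simp only [zero_smul, add_zero, sub_zero]
    rw [add_sub_cancel_left, smul_smul, inv_mul_cancel₀ hε, one_smul]
  have hG0 : G 0 = ∫ s in (0:ℝ)..1,
      NormedSpace.exp (s • X) * B * NormedSpace.exp ((1 - s) • X) := by
    rw [hG]; simp only [zero_smul, add_zero]
  exact Filter.Tendsto.congr' hcongr
    (hG0 ▸ (hGcont.tendsto 0).mono_left nhdsWithin_le_nhds)



variable {m : ℕ}

private lemma Om_sq (m : ℕ) :
    (fromBlocks (0 : Matrix (Fin m) (Fin m) ℝ) (-1) 1 0 :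
        Matrix (Fin m ⊕ Fin m) (Fin m ⊕ Fin m) ℝ)
      * (fromBlocks (0 : Matrix (Fin m) (Fin m) ℝ) (-1) 1 0) = -1 := by
  rw [fromBlocks_multiply]
  simp only [Matrix.mul_zero, Matrix.zero_mul, Matrix.mul_one, Matrix.one_mul, add_zero, zero_add,
    Matrix.neg_mul, Matrix.mul_neg, neg_zero]
  rw [← fromBlocks_one (l := Fin m) (m := Fin m) (α := ℝ)]
  rw [fromBlocks_neg]
  simp

private lemma exp_smul_Om (m : ℕ) (u : ℝ) :
    NormedSpace.exp (u • (fromBlocks (0 : Matrix (Fin m) (Fin m) ℝ) (-1) 1 0 :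
        Matrix (Fin m ⊕ Fin m) (Fin m ⊕ Fin m) ℝ))
      = cos u • 1 + sin u • (fromBlocks (0 : Matrix (Fin m) (Fin m) ℝ) (-1) 1 0 :
        Matrix (Fin m ⊕ Fin m) (Fin m ⊕ Fin m) ℝ) := by
  set Om : Matrix (Fin m ⊕ Fin m) (Fin m ⊕ Fin m) ℝ :=
    fromBlocks (0 : Matrix (Fin m) (Fin m) ℝ) (-1) 1 0 with hOm
  let φ : ℂ →ₐ[ℝ] Matrix (Fin m ⊕ Fin m) (Fin m ⊕ Fin m) ℝ := Complex.liftAux Om (Om_sq m)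
  have hφ : Continuous φ := LinearMap.continuous_of_finiteDimensional φ.toLinearMap
  have h1 : φ ((u : ℂ) * Complex.I) = u • Om := by
    rw [Complex.liftAux_apply]
    simp [Algebra.algebraMap_eq_smul_one, Complex.ofReal_re, Complex.ofReal_im, Complex.cos_ofReal_re, Complex.sin_ofReal_re]
  have h2 : φ (NormedSpace.exp ((u : ℂ) * Complex.I)) =
      NormedSpace.exp (φ ((u : ℂ) * Complex.I)) := map_exp φ hφ _
  rw [h1] at h2
  rw [← h2]
  have h3 : NormedSpace.exp ((u : ℂ) * Complex.I) = Complex.exp ((u : ℂ) * Complex.I) := by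
    rw [Complex.exp_eq_exp_ℂ]
  rw [h3, Complex.exp_mul_I]
  rw [map_add, _root_.map_mul]
  rw [← Complex.ofReal_cos, ← Complex.ofReal_sin]
  have hc : φ ((Real.cos u : ℂ)) = Real.cos u • 1 := by
    rw [Complex.liftAux_apply]; simp [Algebra.algebraMap_eq_smul_one, Complex.ofReal_re, Complex.ofReal_im, Complex.cos_ofReal_re, Complex.sin_ofReal_re]
  have hs : φ ((Real.sin u : ℂ)) = Real.sin u • (1 : Matrix _ _ ℝ) := by
    rw [Complex.liftAux_apply]; simp [Algebra.algebraMap_eq_smul_one, Complex.ofReal_re, Complex.ofReal_im, Complex.cos_ofReal_re, Complex.sin_ofReal_re]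
  have hI : φ Complex.I = Om := Complex.liftAux_apply_I _ _
  rw [hc, hs, hI, smul_mul_assoc, one_mul]

private lemma G0_eq {m : ℕ} (D : Matrix (Fin m) (Fin m) ℝ) {t : ℝ} (ht : t ≠ 0) :
    (∫ s in (0:ℝ)..1,
      NormedSpace.exp (s • (t • (fromBlocks (0 : Matrix (Fin m) (Fin m) ℝ) (-1) 1 0 :
          Matrix (Fin m ⊕ Fin m) (Fin m ⊕ Fin m) ℝ)))
        * (fromBlocks D 0 0 0 : Matrix (Fin m ⊕ Fin m) (Fin m ⊕ Fin m) ℝ)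
        * NormedSpace.exp ((1 - s) • (t • (fromBlocks (0 : Matrix (Fin m) (Fin m) ℝ) (-1) 1 0 :
          Matrix (Fin m ⊕ Fin m) (Fin m ⊕ Fin m) ℝ))))
      = Gmat m D t := by
  set Om : Matrix (Fin m ⊕ Fin m) (Fin m ⊕ Fin m) ℝ :=
    fromBlocks (0 : Matrix (Fin m) (Fin m) ℝ) (-1) 1 0 with hOm
  set Bm : Matrix (Fin m ⊕ Fin m) (Fin m ⊕ Fin m) ℝ := fromBlocks D 0 0 0 with hBm
  have expOm : ∀ u : ℝ, NormedSpace.exp (u • Om) = cos u • 1 + sin u • Om := fun u => by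
    rw [hOm]; exact exp_smul_Om m u
  have hBO : Bm * Om = fromBlocks 0 (-D) 0 0 := by
    rw [hOm, hBm, fromBlocks_multiply]; simp
  have hOB : Om * Bm = fromBlocks 0 0 D 0 := by
    rw [hOm, hBm, fromBlocks_multiply]; simp
  have hOBO : Om * Bm * Om = fromBlocks 0 0 0 (-D) := by
    rw [hOB, hOm, fromBlocks_multiply]; simp
  have hint : (fun s : ℝ => NormedSpace.exp (s • (t • Om)) * Bm
        * NormedSpace.exp ((1 - s) • (t • Om)))
      = fun s : ℝ => (cos (s * t) * cos ((1 - s) * t)) • Bm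
        + (cos (s * t) * sin ((1 - s) * t)) • (Bm * Om)
        + (sin (s * t) * cos ((1 - s) * t)) • (Om * Bm)
        + (sin (s * t) * sin ((1 - s) * t)) • (Om * Bm * Om) := by
    funext s
    rw [smul_smul, smul_smul, expOm, expOm]
    simp only [add_mul, mul_add, smul_mul_assoc, mul_smul_comm, one_mul, mul_one, smul_smul,
      mul_assoc]
    module
  rw [hint]
  rw [intervalIntegral.integral_add (Continuous.intervalIntegrable (by fun_prop) 0 1)
      (Continuous.intervalIntegrable (by fun_prop) 0 1),
    intervalIntegral.integral_add (Continuous.intervalIntegrable (by fun_prop) 0 1)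
      (Continuous.intervalIntegrable (by fun_prop) 0 1),
    intervalIntegral.integral_add (Continuous.intervalIntegrable (by fun_prop) 0 1)
      (Continuous.intervalIntegrable (by fun_prop) 0 1)]
  simp only [intervalIntegral.integral_smul_const]
  rw [intI1 ht, intI2 ht, intI3 ht, intI4 ht, hBO, hOBO, hOB, hBm]
  rw [Gmat, fromBlocks_smul, fromBlocks_smul, fromBlocks_smul, fromBlocks_smul,
    fromBlocks_add, fromBlocks_add, fromBlocks_add]
  simp [smul_neg]

private theorem entry_deriv_main {m : ℕ} (D : Matrix (Fin m) (Fin m) ℝ) {t : ℝ} (ht : t ≠ 0)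
    (p q : Fin m ⊕ Fin m) :
    HasDerivAt (fun ε : ℝ =>
      (NormedSpace.exp (t • (fromBlocks (0 : Matrix (Fin m) (Fin m) ℝ) (-1) 1 0 :
          Matrix (Fin m ⊕ Fin m) (Fin m ⊕ Fin m) ℝ)
        + ε • (fromBlocks D 0 0 0 : Matrix (Fin m ⊕ Fin m) (Fin m ⊕ Fin m) ℝ))) p q)
      (Gmat m D t p q) 0 := by
  have h := hasDerivAt_exp_perturb
    (t • (fromBlocks (0 : Matrix (Fin m) (Fin m) ℝ) (-1) 1 0 :
      Matrix (Fin m ⊕ Fin m) (Fin m ⊕ Fin m) ℝ))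
    (fromBlocks D 0 0 0 : Matrix (Fin m ⊕ Fin m) (Fin m ⊕ Fin m) ℝ)
  rw [G0_eq D ht] at h
  exact hasDerivAt_entry h p q

private theorem entry_deriv_neg {k : Type*} [Fintype k] [DecidableEq k] (C : Matrix k k ℝ)
    (p q : k) :
    HasDerivAt (fun ε : ℝ => (NormedSpace.exp (-(ε • C))) p q) ((-C) p q) 0 := by
  have h := hasDerivAt_exp_smul_const (-C) (0 : ℝ)
  simp only [zero_smul, NormedSpace.exp_zero, one_mul] at h
  have h0 : (fun u : ℝ => NormedSpace.exp (u • (-C))) = fun ε : ℝ =>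
      NormedSpace.exp (-(ε • C)) := by
    funext ε; rw [smul_neg]
  erw [h0] at h
  exact hasDerivAt_entry h p q

end LinftyWorld

end Aux

attribute [local instance] Matrix.normedAddCommGroup Matrix.normedSpace


private lemma hasDerivAt_matrix {n p : Type*} [Fintype n] [Fintype p] [DecidableEq n]
    [DecidableEq p] {f : ℝ → Matrix n p ℝ} {f' : Matrix n p ℝ} {x : ℝ}
    (h : ∀ i j, HasDerivAt (fun e => f e i j) (f' i j) x) : HasDerivAt f f' x := by
  have key : HasDerivAt (fun e => ∑ i, ∑ j, f e i j • single i j (1 : ℝ))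
      (∑ i, ∑ j, f' i j • single i j (1 : ℝ)) x :=
    HasDerivAt.fun_sum fun i _ => HasDerivAt.fun_sum fun j _ => (h i j).smul_const _
  have e1 : ∀ g : Matrix n p ℝ, g = ∑ i, ∑ j, g i j • single i j (1 : ℝ) := by
    intro g
    conv_lhs => rw [matrix_eq_sum_single g]
    simp [smul_single]
  have e2 : (fun e => ∑ i, ∑ j, f e i j • single i j (1 : ℝ)) = f := by
    funext e; rw [← e1]
  rw [e2, ← e1] at key
  exact key

private lemma fromRows_smul' {m₁ m₂ n : Type*} (r : ℝ) (A : Matrix m₁ n ℝ) (B : Matrix m₂ n ℝ) :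
    r • fromRows A B = fromRows (r • A) (r • B) := by
  ext (i | i) j <;> simp [Matrix.fromRows_apply_inl, Matrix.fromRows_apply_inr]

private lemma fromRows_add' {m₁ m₂ n : Type*} (A C : Matrix m₁ n ℝ) (B D : Matrix m₂ n ℝ) :
    fromRows A B + fromRows C D = fromRows (A + C) (B + D) := by
  ext (i | i) j <;> simp [Matrix.fromRows_apply_inl, Matrix.fromRows_apply_inr]

private lemma final_alg {m : ℕ} (D : Matrix (Fin m) (Fin m) ℝ) (t : ℝ) :
    Gmat m D t * fromRows (1 : Matrix (Fin m) (Fin m) ℝ) (0 : Matrix (Fin m) (Fin m) ℝ)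
        * (1 : Matrix (Fin m) (Fin m) ℝ)
      + (Real.cos t • 1 + Real.sin t • (fromBlocks (0 : Matrix (Fin m) (Fin m) ℝ) (-1) 1 0 :
          Matrix (Fin m ⊕ Fin m) (Fin m ⊕ Fin m) ℝ))
        * fromRows (1 : Matrix (Fin m) (Fin m) ℝ) (0 : Matrix (Fin m) (Fin m) ℝ)
        * (-((1 / 2 : ℝ) • D))
      = fromRows ((Real.sin t / (2 * t)) • D) (0 : Matrix (Fin m) (Fin m) ℝ) := by
  rw [Matrix.mul_one, Gmat]
  simp only [Matrix.add_mul, Matrix.smul_mul, fromBlocks_mul_fromRows, Matrix.fromRows_mul,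
    Matrix.one_mul, Matrix.mul_one, Matrix.mul_zero, Matrix.zero_mul, Matrix.neg_mul,
    add_zero, zero_add, smul_zero, neg_zero, fromRows_smul', fromRows_add']
  rw [Matrix.fromRows_ext_iff]
  constructor <;> module

/-- closed form of the derivative at ε = 0 of
`ε ↦ exp(tΩ + εΩ̆)·I_{2m×m}·exp(-εΨ̆)` with Ω̆ = [[D,0],[0,0]] and Ψ̆ = D/2:
top block `(sin t / (2t))·D`, bottom block `0`. -/
theorem stmt6 (m : ℕ) (hm : 0 < m) (D : Matrix (Fin m) (Fin m) ℝ) (t : ℝ) (ht : t ≠ 0) :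
    deriv (fun ε : ℝ =>
        NormedSpace.exp
            ((t • Matrix.fromBlocks (0 : Matrix (Fin m) (Fin m) ℝ) (-1) 1 0
              + ε • Matrix.fromBlocks D 0 0 0 : Matrix (Fin m ⊕ Fin m) (Fin m ⊕ Fin m) ℝ)) *
          Matrix.fromRows (1 : Matrix (Fin m) (Fin m) ℝ) (0 : Matrix (Fin m) (Fin m) ℝ) *
          NormedSpace.exp (-(ε • ((1 / 2 : ℝ) • D)))) 0
      = Matrix.fromRows
          ((Real.sin t / (2 * t)) • D)
          (0 : Matrix (Fin m) (Fin m) ℝ) := by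
  apply HasDerivAt.deriv
  apply hasDerivAt_matrix
  intro p q
  have hc : ∀ l : Fin m, HasDerivAt (fun ε : ℝ =>
        ∑ k, NormedSpace.exp
            (t • (Matrix.fromBlocks (0 : Matrix (Fin m) (Fin m) ℝ) (-1) 1 0 :
                Matrix (Fin m ⊕ Fin m) (Fin m ⊕ Fin m) ℝ)
              + ε • (Matrix.fromBlocks D 0 0 0 :
                Matrix (Fin m ⊕ Fin m) (Fin m ⊕ Fin m) ℝ)) p k *
          Matrix.fromRows (1 : Matrix (Fin m) (Fin m) ℝ) (0 : Matrix (Fin m) (Fin m) ℝ) k l)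
      (∑ k, Gmat m D t p k *
          Matrix.fromRows (1 : Matrix (Fin m) (Fin m) ℝ) (0 : Matrix (Fin m) (Fin m) ℝ) k l)
      0 := fun l =>
    HasDerivAt.fun_sum fun k _ => (entry_deriv_main D ht p k).mul_const _
  have hd : ∀ l : Fin m, HasDerivAt
      (fun ε : ℝ => NormedSpace.exp (-(ε • ((1 / 2 : ℝ) • D))) l q)
      ((-((1 / 2 : ℝ) • D)) l q) 0 := fun l => entry_deriv_neg _ l q
  have key := HasDerivAt.fun_sum (u := (Finset.univ : Finset (Fin m)))
    fun l _ => (hc l).mul (hd l)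
  refine key.congr_deriv (Eq.symm ?_)
  simp only [zero_smul, add_zero, neg_zero, NormedSpace.exp_zero]
  rw [exp_smul_Om m t, ← final_alg D t]
  simp [Matrix.mul_apply, Matrix.add_apply, Finset.sum_add_distrib, Finset.mul_sum,
    Finset.sum_mul, Matrix.one_apply, mul_ite, ite_mul, mul_comm]
  exact Finset.sum_congr rfl fun i _ => by ring
end

section
/- Let n and p be integers with 2 ≤ p ≤ n-2 and let D be a nonzero real skew-symmetric 2×2 matrix. Define: H, the (n-p)×p matrix whose top-left 2×2 block is I₂ and whose other entries are 0; Ă, the p×p matrix whose top-left 2×2 block is (1/2)·D and whose other entries are 0. Define the n×n matrices Ω = [[0, -Hᵀ],[H, 0]] and Ω̆ = [[2·Ă, 0],[0, 0]], and the p×p matrix Ψ̆ = Ă. Then the derivative at ε = 0 of the map ε ↦ exp(πΩ + εΩ̆)·I_{n×p}·exp(-ε·Ψ̆) is the zero n×p matrix. (This is the conjugate-point statement for the Euclidean metric, β = 1, on the Stiefel manifold at t = π.) -/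
open Matrix Real
open scoped Nat

attribute [local instance] Matrix.normedAddCommGroup Matrix.normedSpace

/-- The q×r real matrix whose top-left 2×2 block is `D` and whose other entries are zero. -/
noncomputable def padTL (q r : ℕ) (D : Matrix (Fin 2) (Fin 2) ℝ) : Matrix (Fin q) (Fin r) ℝ :=
  Matrix.of fun i j => if h : (i : ℕ) < 2 ∧ (j : ℕ) < 2 then D ⟨i, h.1⟩ ⟨j, h.2⟩ else 0

section PadTL

lemma padTL_smul (q r : ℕ) (c : ℝ) (A : Matrix (Fin 2) (Fin 2) ℝ) :
    padTL q r (c • A) = c • padTL q r A := by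
  ext i j
  simp only [padTL, of_apply, Matrix.smul_apply, smul_eq_mul]
  split <;> simp

lemma padTL_neg (q r : ℕ) (A : Matrix (Fin 2) (Fin 2) ℝ) :
    padTL q r (-A) = -padTL q r A := by
  ext i j
  simp only [padTL, of_apply, Matrix.neg_apply]
  split <;> simp

lemma padTL_transpose (q r : ℕ) (A : Matrix (Fin 2) (Fin 2) ℝ) :
    (padTL q r A)ᵀ = padTL r q Aᵀ := by
  ext i j
  simp only [padTL, of_apply, transpose_apply]
  rw [dite_congr (by rw [and_comm]) (fun h => rfl) (fun h => rfl)]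

lemma padTL_mul {q r s : ℕ} (hr : 2 ≤ r) (A B : Matrix (Fin 2) (Fin 2) ℝ) :
    padTL q r A * padTL r s B = padTL q s (A * B) := by
  have h0 : (0 : ℕ) < r := by omega
  have h1 : (1 : ℕ) < r := by omega
  set k0 : Fin r := ⟨0, h0⟩
  set k1 : Fin r := ⟨1, h1⟩
  ext i j
  rw [mul_apply]
  by_cases hij : (i : ℕ) < 2 ∧ (j : ℕ) < 2
  · have hsub : ∑ k : Fin r, padTL q r A i k * padTL r s B k j
        = ∑ k ∈ ({k0, k1} : Finset (Fin r)), padTL q r A i k * padTL r s B k j := by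
      refine (Finset.sum_subset (Finset.subset_univ _) fun k _ hk => ?_).symm
      have hk2 : ¬ ((k : ℕ) < 2) := by
        simp only [Finset.mem_insert, Finset.mem_singleton] at hk
        push_neg at hk
        obtain ⟨h01, h02⟩ := hk
        have : (k : ℕ) ≠ 0 := fun h => h01 (Fin.ext h)
        have : (k : ℕ) ≠ 1 := fun h => h02 (Fin.ext h)
        omega
      have : padTL q r A i k = 0 := by
        simp only [padTL, of_apply]
        rw [dif_neg (by tauto)]
      rw [this, zero_mul]
    rw [hsub, Finset.sum_insert (by simp [k0, k1, Fin.ext_iff]), Finset.sum_singleton]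
    simp only [padTL, of_apply]
    rw [dif_pos hij, dif_pos ⟨hij.1, show (k0 : ℕ) < 2 by simp [k0]⟩,
      dif_pos ⟨show (k0 : ℕ) < 2 by simp [k0], hij.2⟩,
      dif_pos ⟨hij.1, show (k1 : ℕ) < 2 by simp [k1]⟩,
      dif_pos ⟨show (k1 : ℕ) < 2 by simp [k1], hij.2⟩, mul_apply, Fin.sum_univ_two]
    congr 1
  · have : ∀ k : Fin r, padTL q r A i k * padTL r s B k j = 0 := by
      intro k
      rcases Decidable.not_and_iff_or_not.mp hij with h | h
      · have : padTL q r A i k = 0 := by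
          simp only [padTL, of_apply]; rw [dif_neg (by tauto)]
        rw [this, zero_mul]
      · have : padTL r s B k j = 0 := by
          simp only [padTL, of_apply]; rw [dif_neg (by tauto)]
        rw [this, mul_zero]
    rw [Finset.sum_congr rfl fun k _ => this k, Finset.sum_const_zero]
    simp only [padTL, of_apply]
    rw [dif_neg hij]

end PadTL

/-- The 2×2 rotation generator. -/
def J2m : Matrix (Fin 2) (Fin 2) ℝ := !![0, 1; -1, 0]

lemma J2m_mul_J2m : J2m * J2m = -1 := by
  ext i j
  fin_cases i <;> fin_cases j <;>
    simp [J2m, mul_apply, Fin.sum_univ_two, Matrix.one_apply]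

/-- Padded copy of `J2m`. -/
noncomputable def Jmat (k l : ℕ) : Matrix (Fin k) (Fin l) ℝ := padTL k l J2m

/-- Padded copy of the 2×2 identity. -/
noncomputable def qmat (k l : ℕ) : Matrix (Fin k) (Fin l) ℝ := padTL k l 1

lemma Jmat_mul_Jmat {k l s : ℕ} (h : 2 ≤ l) : Jmat k l * Jmat l s = -qmat k s := by
  rw [Jmat, Jmat, padTL_mul h, J2m_mul_J2m, qmat, padTL_neg]

lemma Jmat_mul_qmat {k l s : ℕ} (h : 2 ≤ l) : Jmat k l * qmat l s = Jmat k s := by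
  rw [Jmat, qmat, padTL_mul h, mul_one, Jmat]

lemma qmat_mul_Jmat {k l s : ℕ} (h : 2 ≤ l) : qmat k l * Jmat l s = Jmat k s := by
  rw [Jmat, qmat, padTL_mul h, one_mul, Jmat]

lemma qmat_mul_qmat {k l s : ℕ} (h : 2 ≤ l) : qmat k l * qmat l s = qmat k s := by
  rw [qmat, qmat, padTL_mul h, one_mul, qmat]

lemma qmat_transpose (k l : ℕ) : (qmat k l)ᵀ = qmat l k := by
  rw [qmat, padTL_transpose, transpose_one, qmat]

section ExpSq
variable {ι : Type*} [Fintype ι] [DecidableEq ι]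

lemma exp_of_sq (x q : Matrix ι ι ℝ) (c : ℝ)
    (hxx : x * x = (-(c ^ 2)) • q) (hxq : x * q = x) (hqq : q * q = q)
    (hc : c = 0 → x = 0) :
    NormedSpace.exp x = 1 + (Real.sin c / c) • x + (Real.cos c - 1) • q := by
  by_cases h0 : c = 0
  · subst h0
    simp [hc rfl]
  · have hx2 : x ^ 2 = (-(c ^ 2)) • q := by rw [sq, hxx]
    have hpe : ∀ k : ℕ, x ^ (2 * (k + 1)) = ((-1 : ℝ) ^ (k + 1) * c ^ (2 * (k + 1))) • q := by
      intro k
      induction k with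
      | zero => rw [show 2 * (0 + 1) = 2 from rfl, hx2]; ring_nf
      | succ k ih =>
        have : 2 * (k + 1 + 1) = 2 * (k + 1) + 2 := by ring
        rw [this, pow_add, ih, hx2, smul_mul_smul_comm, hqq]
        ring_nf
    have hpo : ∀ k : ℕ, x ^ (2 * k + 1) = ((-1 : ℝ) ^ k * c ^ (2 * k)) • x := by
      intro k
      induction k with
      | zero => simp
      | succ k ih =>
        have : 2 * (k + 1) + 1 = (2 * k + 1) + 2 := by ring
        rw [this, pow_add, ih, hx2, smul_mul_smul_comm, hxq]
        ring_nf
    have heq : ∀ k : ℕ, (((2 * k)! : ℝ)⁻¹) • x ^ (2 * k)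
        = (if k = 0 then 1 - q else 0) + ((-1 : ℝ) ^ k * c ^ (2 * k) / (2 * k)!) • q := by
      intro k
      cases k with
      | zero => simp
      | succ k =>
        rw [hpe k, smul_smul, if_neg (Nat.succ_ne_zero k), zero_add]
        congr 1
        field_simp
    have hodd : ∀ k : ℕ, (((2 * k + 1)! : ℝ)⁻¹) • x ^ (2 * k + 1)
        = (((-1 : ℝ) ^ k * c ^ (2 * k + 1) / (2 * k + 1)!) / c) • x := by
      intro k
      rw [hpo k, smul_smul]
      congr 1
      rw [pow_succ]
      field_simp
    have he : HasSum (fun k : ℕ => (((2 * k)! : ℝ)⁻¹) • x ^ (2 * k))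
        ((1 - q) + Real.cos c • q) := by
      rw [funext heq]
      exact (hasSum_ite_eq 0 (1 - q)).add ((Real.hasSum_cos c).smul_const q)
    have ho : HasSum (fun k : ℕ => (((2 * k + 1)! : ℝ)⁻¹) • x ^ (2 * k + 1))
        ((Real.sin c / c) • x) := by
      rw [funext hodd]
      exact ((Real.hasSum_sin c).div_const c).smul_const x
    have hsum := HasSum.even_add_odd (f := fun n : ℕ => ((n ! : ℝ)⁻¹) • x ^ n) he ho
    rw [NormedSpace.exp_eq_tsum (𝕂 := ℝ)]
    show (∑' n : ℕ, ((n ! : ℝ)⁻¹) • x ^ n) = _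
    rw [hsum.tsum_eq, sub_smul, one_smul]
    abel

end ExpSq

section DerivHelp
variable {a b c : Type*} [Fintype a] [Fintype b] [Fintype c]

lemma matrix_hasDerivAt_iff {f : ℝ → Matrix a b ℝ} {f' : Matrix a b ℝ} {x : ℝ} :
    HasDerivAt f f' x ↔ ∀ i j, HasDerivAt (fun t => f t i j) (f' i j) x := by
  exact hasDerivAt_pi.trans (forall_congr' fun i => hasDerivAt_pi)

lemma hasDerivAt_matmul {f : ℝ → Matrix a b ℝ} {g : ℝ → Matrix b c ℝ}
    {f' : Matrix a b ℝ} {g' : Matrix b c ℝ} {x : ℝ}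
    (hf : HasDerivAt f f' x) (hg : HasDerivAt g g' x) :
    HasDerivAt (fun t => f t * g t) (f' * g x + f x * g') x := by
  rw [matrix_hasDerivAt_iff] at hf hg ⊢
  intro i j
  have h1 : ∀ t, (f t * g t) i j = ∑ k, f t i k * g t k j := fun t => mul_apply
  simp only [h1]
  have h2 : (f' * g x + f x * g') i j = ∑ k, (f' i k * g x k j + f x i k * g' k j) := by
    simp [mul_apply, Finset.sum_add_distrib]
  rw [h2]
  exact HasDerivAt.fun_sum fun k _ => (hf i k).mul (hg k j)

lemma hasDerivAt_smul_mat {s : ℝ → ℝ} {s' : ℝ} {x : ℝ} (hs : HasDerivAt s s' x)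
    (M : Matrix a b ℝ) : HasDerivAt (fun t => s t • M) (s' • M) x := by
  rw [matrix_hasDerivAt_iff]
  intro i j
  simpa using hs.mul_const (M i j)

end DerivHelp

lemma sin_div_mul (c : ℝ) : Real.sin c / c * c = Real.sin c := by
  rcases eq_or_ne c 0 with h | h
  · simp [h]
  · field_simp

lemma sin_div_mul_neg (c : ℝ) : Real.sin c / c * (-c) = -Real.sin c := by
  rw [mul_neg, sin_div_mul]

/-- `cf d ε = √((εd/2)² + π²)`. -/
noncomputable def cf (d ε : ℝ) : ℝ := Real.sqrt ((ε * d / 2) ^ 2 + π ^ 2)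

lemma cf_pos (d ε : ℝ) : 0 < cf d ε :=
  Real.sqrt_pos.mpr (by positivity)

lemma cf_zero (d : ℝ) : cf d 0 = π := by
  rw [cf]
  norm_num
  exact Real.sqrt_sq pi_nonneg

lemma cf_sq (d ε : ℝ) : cf d ε ^ 2 = (ε * d / 2) ^ 2 + π ^ 2 :=
  Real.sq_sqrt (by positivity)

section ScalarDeriv

variable (d : ℝ)

lemma hasDerivAt_lin : HasDerivAt (fun ε : ℝ => ε * d / 2) (d / 2) 0 := by
  simpa using ((hasDerivAt_id (0 : ℝ)).mul_const d).div_const 2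

lemma hasDerivAt_sin1 : HasDerivAt (fun ε : ℝ => Real.sin (ε * d / 2)) (d / 2) 0 := by
  simpa using (hasDerivAt_lin d).sin

lemma hasDerivAt_cos1 : HasDerivAt (fun ε : ℝ => Real.cos (ε * d / 2) - 1) 0 0 := by
  simpa using ((hasDerivAt_lin d).cos).sub_const 1

lemma hasDerivAt_cf : HasDerivAt (cf d) 0 0 := by
  have hq : HasDerivAt (fun ε : ℝ => (ε * d / 2) ^ 2 + π ^ 2) 0 0 := by
    simpa using ((hasDerivAt_lin d).pow 2).add_const (π ^ 2)
  have h := hq.sqrt (by positivity)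
  unfold cf
  simpa using h

lemma hasDerivAt_sc : HasDerivAt (fun ε => Real.sin (cf d ε) / cf d ε) 0 0 := by
  have h := ((hasDerivAt_cf d).sin.fun_div (hasDerivAt_cf d)
    (by rw [cf_zero]; exact pi_ne_zero))
  simpa [cf_zero] using h

lemma sc_zero : Real.sin (cf d 0) / cf d 0 = 0 := by simp [cf_zero]

end ScalarDeriv

/-- the conjugate-point statement for the Euclidean metric (β = 1) on the
Stiefel manifold at t = π: the derivative at ε = 0 of
`ε ↦ exp(πΩ + εΩ̆)·I_{n×p}·exp(-εΨ̆)` is the zero n×p matrix. -/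
theorem stmt10 (n p : ℕ) (hp : 2 ≤ p) (hpn : p ≤ n - 2)
    (D : Matrix (Fin 2) (Fin 2) ℝ) (hD : D ≠ 0) (hDskew : Dᵀ = -D)
    (H : Matrix (Fin (n - p)) (Fin p) ℝ) (hH : H = padTL (n - p) p 1)
    (A : Matrix (Fin p) (Fin p) ℝ) (hA : A = padTL p p ((1 / 2 : ℝ) • D))
    (Ω : Matrix (Fin p ⊕ Fin (n - p)) (Fin p ⊕ Fin (n - p)) ℝ)
    (hΩ : Ω = Matrix.fromBlocks 0 (-Hᵀ) H 0)
    (Ω' : Matrix (Fin p ⊕ Fin (n - p)) (Fin p ⊕ Fin (n - p)) ℝ)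
    (hΩ' : Ω' = Matrix.fromBlocks ((2 : ℝ) • A) 0 0 0)
    (Ψ' : Matrix (Fin p) (Fin p) ℝ) (hΨ' : Ψ' = A) :
    deriv (fun ε : ℝ =>
        NormedSpace.exp (π • Ω + ε • Ω') *
          Matrix.fromRows (1 : Matrix (Fin p) (Fin p) ℝ) (0 : Matrix (Fin (n - p)) (Fin p) ℝ) *
          NormedSpace.exp (-(ε • Ψ'))) 0 = 0 := by
  subst hΨ' hΩ hΩ' hA hH
  have hm2 : 2 ≤ n - p := by omega
  -- the skew matrix D is a multiple of J2m
  have h00 : D 0 0 = 0 := by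
    have h := congrFun (congrFun hDskew 0) 0
    simp only [Matrix.transpose_apply, Matrix.neg_apply] at h
    linarith
  have h11 : D 1 1 = 0 := by
    have h := congrFun (congrFun hDskew 1) 1
    simp only [Matrix.transpose_apply, Matrix.neg_apply] at h
    linarith
  have h10 : D 1 0 = -D 0 1 := by
    have h := congrFun (congrFun hDskew 1) 0
    simp only [Matrix.transpose_apply, Matrix.neg_apply] at h
    linarith
  set d : ℝ := D 0 1 with hdd
  have hA2 : padTL p p ((1 / 2 : ℝ) • D) = (d / 2) • Jmat p p := by
    have hDJ : D = d • J2m := by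
      ext i j
      fin_cases i <;> fin_cases j <;>
        simp [J2m, Matrix.smul_apply, h00, h11, h10, hdd]
    rw [hDJ, smul_smul, padTL_smul, Jmat]
    congr 1
    ring
  have hΩ'2 : (2 : ℝ) • ((d / 2) • Jmat p p) = d • Jmat p p := by
    rw [smul_smul]
    congr 1
    ring
  have hHq : padTL (n - p) p (1 : Matrix (Fin 2) (Fin 2) ℝ) = qmat (n - p) p := rfl
  simp only [hHq, qmat_transpose, hA2, hΩ'2]
  -- block matrices
  set Jb : Matrix (Fin p ⊕ Fin (n - p)) (Fin p ⊕ Fin (n - p)) ℝ :=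
    fromBlocks (Jmat p p) 0 0 (Jmat (n - p) (n - p)) with hJb
  set Qb : Matrix (Fin p ⊕ Fin (n - p)) (Fin p ⊕ Fin (n - p)) ℝ :=
    fromBlocks (qmat p p) 0 0 (qmat (n - p) (n - p)) with hQb
  set Pb : Matrix (Fin p ⊕ Fin (n - p)) (Fin p ⊕ Fin (n - p)) ℝ :=
    fromBlocks (Jmat p p) 0 0 (-(Jmat (n - p) (n - p))) with hPb
  set Ωb : Matrix (Fin p ⊕ Fin (n - p)) (Fin p ⊕ Fin (n - p)) ℝ :=
    fromBlocks 0 (-(qmat p (n - p))) (qmat (n - p) p) 0 with hΩb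
  set E : Matrix (Fin p ⊕ Fin (n - p)) (Fin p) ℝ :=
    fromRows (1 : Matrix (Fin p) (Fin p) ℝ) (0 : Matrix (Fin (n - p)) (Fin p) ℝ) with hE
  -- block product facts
  have hJJ : Jb * Jb = -Qb := by
    rw [hJb, hQb]
    simp [fromBlocks_multiply, Jmat_mul_Jmat hp, Jmat_mul_Jmat hm2, fromBlocks_neg]
  have hJQ : Jb * Qb = Jb := by
    rw [hJb, hQb]
    simp [fromBlocks_multiply, Jmat_mul_qmat hp, Jmat_mul_qmat hm2]
  have hQQ : Qb * Qb = Qb := by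
    rw [hQb]
    simp [fromBlocks_multiply, qmat_mul_qmat hp, qmat_mul_qmat hm2]
  have hPP : Pb * Pb = -Qb := by
    rw [hPb, hQb]
    simp [fromBlocks_multiply, Jmat_mul_Jmat hp, Jmat_mul_Jmat hm2, fromBlocks_neg]
  have hPQ : Pb * Qb = Pb := by
    rw [hPb, hQb]
    simp [fromBlocks_multiply, Jmat_mul_qmat hp, Jmat_mul_qmat hm2]
  have hOO : Ωb * Ωb = -Qb := by
    rw [hΩb, hQb]
    simp [fromBlocks_multiply, qmat_mul_qmat hp, qmat_mul_qmat hm2, fromBlocks_neg]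
  have hOQ : Ωb * Qb = Ωb := by
    rw [hΩb, hQb]
    simp [fromBlocks_multiply, qmat_mul_qmat hp, qmat_mul_qmat hm2]
  have hPO : Pb * Ωb = -(Ωb * Pb) := by
    rw [hPb, hΩb]
    simp [fromBlocks_multiply, Jmat_mul_qmat hp, Jmat_mul_qmat hm2,
      qmat_mul_Jmat hp, qmat_mul_Jmat hm2, fromBlocks_neg]
  have hJP : Jb * Pb = Pb * Jb := by
    rw [hJb, hPb]
    simp [fromBlocks_multiply, Jmat_mul_Jmat hp, Jmat_mul_Jmat hm2]
  have hJO : Jb * Ωb = Ωb * Jb := by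
    rw [hJb, hΩb]
    simp [fromBlocks_multiply, Jmat_mul_qmat hp, Jmat_mul_qmat hm2,
      qmat_mul_Jmat hp, qmat_mul_Jmat hm2]
  have hJE : Jb * E = fromRows (Jmat p p) 0 := by
    rw [hJb, hE, fromBlocks_mul_fromRows]
    simp
  have hQE : Qb * E = fromRows (qmat p p) 0 := by
    rw [hQb, hE, fromBlocks_mul_fromRows]
    simp
  -- the key closed form for the whole curve
  have key : (fun ε : ℝ =>
        NormedSpace.exp (π • Ωb + ε • fromBlocks (d • Jmat p p) 0 0 0) * E *
          NormedSpace.exp (-(ε • ((d / 2) • Jmat p p))))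
      = fun ε : ℝ =>
        ((1 + Real.sin (ε * d / 2) • Jb + (Real.cos (ε * d / 2) - 1) • Qb) *
          (1 + ((Real.sin (cf d ε) / cf d ε * (ε * d / 2)) • Pb +
            (Real.sin (cf d ε) / cf d ε * π) • Ωb) + (Real.cos (cf d ε) - 1) • Qb)) * E *
        (1 + (-Real.sin (ε * d / 2)) • Jmat p p + (Real.cos (ε * d / 2) - 1) • qmat p p) := by
    funext ε
    have hsplit : π • Ωb + ε • fromBlocks (d • Jmat p p) 0 0 0
        = (ε * d / 2) • Jb + ((ε * d / 2) • Pb + π • Ωb) := by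
      rw [hJb, hPb, hΩb]
      ext i j
      rcases i with i | i <;> rcases j with j | j <;>
        simp [Matrix.smul_apply, Matrix.neg_apply] <;> ring
    have hcomm : Commute ((ε * d / 2) • Jb) ((ε * d / 2) • Pb + π • Ωb) := by
      have cJP : Commute Jb Pb := hJP
      have cJO : Commute Jb Ωb := hJO
      exact ((cJP.smul_right _).add_right (cJO.smul_right _)).smul_left _
    have e1 : NormedSpace.exp ((ε * d / 2) • Jb)
        = 1 + Real.sin (ε * d / 2) • Jb + (Real.cos (ε * d / 2) - 1) • Qb := by
      rw [exp_of_sq ((ε * d / 2) • Jb) Qb (ε * d / 2) ?_ ?_ ?_ ?_]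
      · rw [smul_smul, sin_div_mul]
      · rw [smul_mul_smul_comm, hJJ, smul_neg, ← neg_smul, ← sq]
      · rw [smul_mul_assoc, hJQ]
      · exact hQQ
      · intro h
        rw [h, zero_smul]
    have e2 : NormedSpace.exp ((ε * d / 2) • Pb + π • Ωb)
        = 1 + ((Real.sin (cf d ε) / cf d ε * (ε * d / 2)) • Pb +
            (Real.sin (cf d ε) / cf d ε * π) • Ωb) + (Real.cos (cf d ε) - 1) • Qb := by
      rw [exp_of_sq ((ε * d / 2) • Pb + π • Ωb) Qb (cf d ε) ?_ ?_ ?_ ?_]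
      · rw [smul_add, smul_smul, smul_smul]
      · rw [add_mul, mul_add, mul_add, smul_mul_smul_comm, smul_mul_smul_comm,
          smul_mul_smul_comm, smul_mul_smul_comm, hPP, hOO, hPO, cf_sq]
        module
      · rw [add_mul, smul_mul_assoc, smul_mul_assoc, hPQ, hOQ]
      · exact hQQ
      · intro h
        exact absurd h (ne_of_gt (cf_pos d ε))
    have e3 : NormedSpace.exp (-(ε • ((d / 2) • Jmat p p)))
        = 1 + (-Real.sin (ε * d / 2)) • Jmat p p + (Real.cos (ε * d / 2) - 1) • qmat p p := by
      have hx : -(ε • ((d / 2) • Jmat p p)) = (-(ε * d / 2)) • Jmat p p := by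
        rw [smul_smul, ← neg_smul]
        congr 1
        ring
      rw [hx, exp_of_sq ((-(ε * d / 2)) • Jmat p p) (qmat p p) (ε * d / 2) ?_ ?_ ?_ ?_]
      · rw [smul_smul, sin_div_mul_neg]
      · rw [smul_mul_smul_comm, Jmat_mul_Jmat hp, smul_neg, ← neg_smul, ← sq]
        congr 1
        ring
      · rw [smul_mul_assoc, Jmat_mul_qmat hp]
      · exact qmat_mul_qmat hp
      · intro h
        rw [h]
        norm_num
    rw [hsplit, Matrix.exp_add_of_commute _ _ hcomm, e1, e2, e3]
  rw [key]
  -- derivatives of the three factors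
  have hG1 : HasDerivAt
      (fun ε : ℝ => 1 + Real.sin (ε * d / 2) • Jb + (Real.cos (ε * d / 2) - 1) • Qb)
      ((d / 2) • Jb + (0 : ℝ) • Qb) 0 :=
    ((hasDerivAt_smul_mat (hasDerivAt_sin1 d) Jb).const_add 1).add
      (hasDerivAt_smul_mat (hasDerivAt_cos1 d) Qb)
  have hu : HasDerivAt (fun ε : ℝ => Real.sin (cf d ε) / cf d ε * (ε * d / 2)) 0 0 := by
    have h := (hasDerivAt_sc d).fun_mul (hasDerivAt_lin d)
    simpa [sc_zero] using h
  have hv : HasDerivAt (fun ε : ℝ => Real.sin (cf d ε) / cf d ε * π) 0 0 := by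
    simpa using (hasDerivAt_sc d).mul_const π
  have hw : HasDerivAt (fun ε : ℝ => Real.cos (cf d ε) - 1) 0 0 := by
    simpa using ((hasDerivAt_cf d).cos).sub_const 1
  have hG2 : HasDerivAt
      (fun ε : ℝ => 1 + ((Real.sin (cf d ε) / cf d ε * (ε * d / 2)) • Pb +
          (Real.sin (cf d ε) / cf d ε * π) • Ωb) + (Real.cos (cf d ε) - 1) • Qb)
      (((0 : ℝ) • Pb + (0 : ℝ) • Ωb) + (0 : ℝ) • Qb) 0 :=
    (((hasDerivAt_smul_mat hu Pb).add (hasDerivAt_smul_mat hv Ωb)).const_add 1).add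
      (hasDerivAt_smul_mat hw Qb)
  have hG3 : HasDerivAt
      (fun ε : ℝ => 1 + (-Real.sin (ε * d / 2)) • Jmat p p +
        (Real.cos (ε * d / 2) - 1) • qmat p p)
      ((-(d / 2)) • Jmat p p + (0 : ℝ) • qmat p p) 0 :=
    ((hasDerivAt_smul_mat (hasDerivAt_sin1 d).neg (Jmat p p)).const_add 1).add
      (hasDerivAt_smul_mat (hasDerivAt_cos1 d) (qmat p p))
  have h12 := hasDerivAt_matmul hG1 hG2
  have hXE := hasDerivAt_matmul h12 (hasDerivAt_const (0 : ℝ) E)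
  have htot := hasDerivAt_matmul hXE hG3
  refine htot.deriv.trans ?_
  simp only [zero_smul, add_zero, zero_add, mul_zero, zero_mul, mul_one, one_mul]
  norm_num [Real.cos_pi, cf_zero, sc_zero]
  have t1 : Jb * (1 + -((2:ℝ) • Qb)) = -Jb := by
    rw [mul_add, mul_one, mul_neg, mul_smul_comm, hJQ]
    module
  have t2 : (1 + -((2:ℝ) • Qb)) * E * Jmat p p = -(fromRows (Jmat p p) (0 : Matrix (Fin (n-p)) (Fin p) ℝ)) := by
    rw [hE] at hQE
    simp only [Matrix.add_mul, Matrix.one_mul, Matrix.neg_mul, Matrix.smul_mul, hQE, hE,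
      fromRows_mul, qmat_mul_Jmat hp, Matrix.zero_mul]
    module
  rw [t1, t2, Matrix.neg_mul, hJE]
  simp
end

section
/- Let n and p be integers with n ≥ p ≥ 1 and let Ω be a real skew-symmetric n×n matrix such that exp(Ω)·I_{n×p} = I_{n×p} and Ω·I_{n×p} ≠ 0. Then ‖Ω‖_F ≥ 2·√2·π; equivalently, the length (√2/2)·‖Ω‖_F of the corresponding geodesic loop t ↦ exp(tΩ)·I_{n×p}, t ∈ [0,1], of the Stiefel manifold with the canonical metric is at least 2π. (This is the key content of the theorem that the shortest nontrivial geodesic loops of the Stiefel manifold with the canonical metric have length 2π.) -/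
open Matrix Real

/-- The n×p real matrix whose (i,j) entry is 1 if i = j and 0 otherwise
(the first p columns of the identity matrix). -/
noncomputable def Inp (n p : ℕ) : Matrix (Fin n) (Fin p) ℝ :=
  Matrix.of fun i j => if (i : ℕ) = (j : ℕ) then 1 else 0

private lemma mul_Inp_col {n p : ℕ} (hpn : p ≤ n) (M : Matrix (Fin n) (Fin n) ℝ)
    (i : Fin n) (j : Fin p) : (M * Inp n p) i j = M i (Fin.castLE hpn j) := by
  classical
  simp only [Matrix.mul_apply, Inp, Matrix.of_apply, mul_ite, mul_one, mul_zero]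
  rw [Finset.sum_eq_single (Fin.castLE hpn j)]
  · simp
  · intro k _ hk
    rw [if_neg]
    intro h
    exact hk (by ext; simpa using h)
  · simp

/-- key content of Theorem 6.1 (shortest geodesic loops in the canonical
metric have length 2π): any skew-symmetric Ω generating a nontrivial geodesic loop of the
Stiefel manifold satisfies ‖Ω‖_F ≥ 2√2·π, i.e. the loop length (√2/2)‖Ω‖_F is ≥ 2π. -/
theorem stmt12 (n p : ℕ) (hp : 1 ≤ p) (hpn : p ≤ n)
    (Ω : Matrix (Fin n) (Fin n) ℝ) (hskew : Ωᵀ = -Ω)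
    (hloop : NormedSpace.exp Ω * Inp n p = Inp n p)
    (hnontrivial : Ω * Inp n p ≠ 0) :
    Real.sqrt (∑ i, ∑ j, (Ω i j) ^ 2) ≥ 2 * Real.sqrt 2 * π := by
  classical
  have hsk : ∀ i j, Ω j i = - Ω i j := fun i j => by
    have := congrFun (congrFun hskew i) j
    simpa using this
  -- find a nonzero entry in the first p columns
  obtain ⟨i0, j0, h0⟩ : ∃ i j, (Ω * Inp n p) i j ≠ 0 := by
    by_contra h
    push_neg at h
    exact hnontrivial (by ext i j; simpa using h i j)
  set c : Fin n := Fin.castLE hpn j0 with hc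
  have hΩc0 : Ω i0 c ≠ 0 := by rwa [mul_Inp_col hpn] at h0
  -- complexification
  set Ωc : Matrix (Fin n) (Fin n) ℂ := Ω.map (fun x => (x : ℂ)) with hΩcdef
  have hΩcstar : Ωcᴴ = -Ωc := by
    ext i j
    simp [Ωc, Matrix.conjTranspose_apply, hsk i j]
  set H : Matrix (Fin n) (Fin n) ℂ := Complex.I • Ωc with hHdef
  have hH : H.IsHermitian := by
    unfold Matrix.IsHermitian
    rw [hHdef, Matrix.conjTranspose_smul, hΩcstar]
    simp [Complex.conj_I]
  set U : Matrix (Fin n) (Fin n) ℂ := (hH.eigenvectorUnitary : Matrix (Fin n) (Fin n) ℂ)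
    with hUdef
  set f : Fin n → ℝ := hH.eigenvalues with hfdef
  have hUU : U * star U = 1 := (Matrix.mem_unitaryGroup_iff).mp hH.eigenvectorUnitary.2
  have hUU' : star U * U = 1 := (Matrix.mem_unitaryGroup_iff').mp hH.eigenvectorUnitary.2
  have hspec : H = U * Matrix.diagonal (fun k => (f k : ℂ)) * star U := by
    simpa [Function.comp_def] using hH.spectral_theorem
  have hUinv : U⁻¹ = star U := Matrix.inv_eq_left_inv hUU'
  have hUunit : IsUnit U := (Matrix.isUnit_iff_isUnit_det U).mpr
    (IsUnit.of_mul_eq_one _ (by rw [← Matrix.det_mul, hUU, Matrix.det_one]))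
  have hone : ∀ (z : ℂ), U * Matrix.diagonal (fun _ => z) * star U
      = z • (1 : Matrix (Fin n) (Fin n) ℂ) := by
    intro z
    rw [← Matrix.smul_one_eq_diagonal, mul_smul_comm, smul_mul_assoc, mul_one, hUU]
  -- Ωc in terms of the spectrum
  have hds : (-Complex.I) • Matrix.diagonal (fun k => (f k : ℂ))
      = Matrix.diagonal (fun k => -Complex.I * (f k : ℂ)) := by
    ext i j
    by_cases h : i = j <;> simp [Matrix.diagonal_apply, h]
  have hΩcspec : Ωc = U * Matrix.diagonal (fun k => -Complex.I * (f k : ℂ)) * star U := by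
    have h1 : Ωc = (-Complex.I) • H := by
      rw [hHdef, smul_smul]
      simp [Complex.I_mul_I]
    rw [h1, hspec, ← hds, mul_smul_comm, smul_mul_assoc]
  -- exponential via the spectrum
  have hexpd : NormedSpace.exp Ωc
      = U * Matrix.diagonal (fun k => Complex.exp (-Complex.I * (f k : ℂ))) * star U := by
    have hexpz : ∀ z : ℂ, NormedSpace.exp z = Complex.exp z := fun z => by
      rw [Complex.exp_eq_exp_ℂ]
    have hvec : (NormedSpace.exp fun k => -Complex.I * (f k : ℂ))
        = fun k => Complex.exp (-Complex.I * (f k : ℂ)) := by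
      rw [Pi.exp_def]
      funext k
      exact hexpz _
    rw [hΩcspec, ← hUinv, Matrix.exp_conj U _ hUunit, Matrix.exp_diagonal, hUinv, hvec]
  -- transfer the loop condition to ℂ
  have hmapexp : (NormedSpace.exp Ω).map (fun x => (x : ℂ)) = NormedSpace.exp Ωc := by
    letI : NormedRing (Matrix (Fin n) (Fin n) ℝ) := Matrix.linftyOpNormedRing
    letI : NormedAlgebra ℝ (Matrix (Fin n) (Fin n) ℝ) := Matrix.linftyOpNormedAlgebra
    letI : NormedRing (Matrix (Fin n) (Fin n) ℂ) := Matrix.linftyOpNormedRing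
    letI : NormedAlgebra ℝ (Matrix (Fin n) (Fin n) ℂ) := Matrix.linftyOpNormedAlgebra
    letI : NormedAlgebra ℚ (Matrix (Fin n) (Fin n) ℝ) := Matrix.linftyOpNormedAlgebra
    letI : NormedAlgebra ℚ (Matrix (Fin n) (Fin n) ℂ) := Matrix.linftyOpNormedAlgebra
    letI : CompleteSpace (Matrix (Fin n) (Fin n) ℝ) := FiniteDimensional.complete ℝ _
    letI : CompleteSpace (Matrix (Fin n) (Fin n) ℂ) := FiniteDimensional.complete ℝ _
    have hcont : Continuous (Complex.ofRealHom.mapMatrix :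
        Matrix (Fin n) (Fin n) ℝ →+* Matrix (Fin n) (Fin n) ℂ) := by
      apply continuous_matrix
      intro i j
      exact Complex.continuous_ofReal.comp ((continuous_apply j).comp (continuous_apply i))
    exact NormedSpace.map_exp Complex.ofRealHom.mapMatrix hcont Ω
  have hcol : ∀ i, (NormedSpace.exp Ω) i c = (if i = c then 1 else 0 : ℝ) := by
    intro i
    have h := congrFun (congrFun hloop i) j0
    rw [mul_Inp_col hpn] at h
    rw [← hc] at h
    rw [h]
    simp only [Inp, Matrix.of_apply]
    congr 1
    simp [hc, Fin.ext_iff]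
  set x : Fin n → ℂ := Pi.single c (1 : ℂ) with hx
  have hxexp : (NormedSpace.exp Ωc) *ᵥ x = x := by
    rw [← hmapexp]
    funext i
    simp only [hx, Matrix.mulVec_single, Matrix.map_apply, hcol i, Pi.single_apply, mul_one]
    simp [hcol i, apply_ite (fun r : ℝ => (r : ℂ))]
  have hxΩ : Ωc *ᵥ x ≠ 0 := by
    intro hzero
    have h := congrFun hzero i0
    simp only [hx, Matrix.mulVec_single, mul_one, Pi.zero_apply] at h
    exact hΩc0 (by simpa [Ωc] using h)
  set y : Fin n → ℂ := (star U) *ᵥ x with hy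
  have hDy : Matrix.diagonal (fun k => Complex.exp (-Complex.I * (f k : ℂ))) *ᵥ y = y := by
    have h := congrArg (fun v => (star U) *ᵥ v) hxexp
    simp only [Matrix.mulVec_mulVec] at h
    rw [hexpd] at h
    rw [show star U * (U * Matrix.diagonal (fun k => Complex.exp (-Complex.I * (f k : ℂ)))
        * star U) = Matrix.diagonal (fun k => Complex.exp (-Complex.I * (f k : ℂ))) * star U
      from by rw [← Matrix.mul_assoc, ← Matrix.mul_assoc, hUU', Matrix.one_mul]] at h
    rw [← Matrix.mulVec_mulVec] at h
    exact h
  obtain ⟨k0, hk0⟩ : ∃ k, (-Complex.I * (f k : ℂ)) * y k ≠ 0 := by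
    by_contra h
    push_neg at h
    apply hxΩ
    rw [hΩcspec, Matrix.mul_assoc, ← Matrix.mulVec_mulVec, ← Matrix.mulVec_mulVec, ← hy]
    have hz : Matrix.diagonal (fun k => -Complex.I * (f k : ℂ)) *ᵥ y = 0 := by
      funext k
      rw [Matrix.mulVec_diagonal]
      exact h k
    rw [hz, Matrix.mulVec_zero]
  have hfk0 : f k0 ≠ 0 := by
    intro h
    apply hk0
    rw [h]
    simp
  have hyk0 : y k0 ≠ 0 := by
    intro h
    apply hk0
    rw [h, mul_zero]
  have hexp1 : Complex.exp (-Complex.I * (f k0 : ℂ)) = 1 := by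
    have h := congrFun hDy k0
    rw [Matrix.mulVec_diagonal] at h
    exact mul_right_cancel₀ hyk0 (by rw [h, one_mul])
  obtain ⟨m, hm⟩ := Complex.exp_eq_one_iff.mp hexp1
  have h2 : (f k0 : ℂ) = -(2 * (π : ℂ) * (m : ℂ)) := by
    linear_combination Complex.I * hm + ((f k0 : ℂ) + 2 * (π : ℂ) * (m : ℂ)) * Complex.I_sq
  have hreal : f k0 = -(2 * π * (m : ℝ)) := by exact_mod_cast h2
  have hm0 : m ≠ 0 := by
    rintro rfl
    simp at hreal
    exact hfk0 hreal
  have habs : 2 * π ≤ |f k0| := by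
    have h1m : (1 : ℝ) ≤ |(m : ℝ)| := by exact_mod_cast Int.one_le_abs hm0
    calc 2 * π = 2 * π * 1 := (mul_one _).symm
      _ ≤ 2 * π * |(m : ℝ)| := by
          apply mul_le_mul_of_nonneg_left h1m
          positivity
      _ = |2 * π * (m : ℝ)| := by
          rw [abs_mul, abs_of_pos Real.two_pi_pos]
      _ = |f k0| := by rw [hreal, abs_neg]
  set θ : ℝ := f k0 with hθ
  -- first determinant computation
  have hdet1 : (H + (θ : ℂ) • 1).det = ∏ k, ((f k : ℂ) + θ) := by
    have h1 : H + (θ : ℂ) • 1 = U * Matrix.diagonal (fun k => (f k : ℂ) + θ) * star U := by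
      rw [hspec, ← hone (θ : ℂ), ← add_mul, ← mul_add, Matrix.diagonal_add]
    rw [h1, Matrix.det_mul, Matrix.det_mul]
    have h2 : U.det * (Matrix.diagonal (fun k => (f k : ℂ) + θ)).det * (star U).det
        = (Matrix.diagonal (fun k => (f k : ℂ) + θ)).det * (U * star U).det := by
      rw [Matrix.det_mul]; ring
    rw [h2, hUU, Matrix.det_one, mul_one, Matrix.det_diagonal]
  -- second determinant computation via entrywise conjugation
  set V : Matrix (Fin n) (Fin n) ℂ := U.map (starRingEnd ℂ) with hV
  set W : Matrix (Fin n) (Fin n) ℂ := (star U).map (starRingEnd ℂ) with hW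
  have hVW : V * W = 1 := by
    rw [hV, hW, ← Matrix.map_mul, hUU]
    ext i j
    by_cases hij : i = j <;> simp [Matrix.one_apply, hij]
  have hHconj : H.map (starRingEnd ℂ) = -H := by
    ext i j
    simp [hHdef, Ωc, Matrix.map_apply, Matrix.smul_apply, smul_eq_mul, Complex.conj_I,
      Complex.conj_ofReal]
  have hDconj : (Matrix.diagonal (fun k => (f k : ℂ))).map (starRingEnd ℂ)
      = Matrix.diagonal (fun k => (f k : ℂ)) := by
    ext i j
    by_cases hij : i = j <;> simp [Matrix.diagonal_apply, hij, Complex.conj_ofReal]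
  have hspec2 : -H = V * Matrix.diagonal (fun k => (f k : ℂ)) * W := by
    have h := congrArg (fun M : Matrix (Fin n) (Fin n) ℂ => M.map (starRingEnd ℂ)) hspec
    simp only [Matrix.map_mul] at h
    rw [hHconj, hDconj] at h
    exact h
  have honeVW : ∀ (z : ℂ), V * Matrix.diagonal (fun _ => z) * W
      = z • (1 : Matrix (Fin n) (Fin n) ℂ) := by
    intro z
    rw [← Matrix.smul_one_eq_diagonal, mul_smul_comm, smul_mul_assoc, mul_one, hVW]
  have hdet2 : (H + (θ : ℂ) • 1).det = ∏ k, (-(f k : ℂ) + θ) := by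
    have hnH : H = V * Matrix.diagonal (fun k => -(f k : ℂ)) * W := by
      rw [← Matrix.diagonal_neg, mul_neg, neg_mul, ← hspec2, neg_neg]
    have h1 : H + (θ : ℂ) • 1 = V * Matrix.diagonal (fun k => -(f k : ℂ) + θ) * W := by
      rw [hnH, ← honeVW (θ : ℂ), ← add_mul, ← mul_add, Matrix.diagonal_add]
    rw [h1, Matrix.det_mul, Matrix.det_mul]
    have h2 : V.det * (Matrix.diagonal (fun k => -(f k : ℂ) + θ)).det * W.det
        = (Matrix.diagonal (fun k => -(f k : ℂ) + θ)).det * (V * W).det := by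
      rw [Matrix.det_mul]; ring
    rw [h2, hVW, Matrix.det_one, mul_one, Matrix.det_diagonal]
  have hprod : ∏ k, ((f k : ℂ) + θ) = 0 := by
    rw [← hdet1, hdet2]
    refine Finset.prod_eq_zero (Finset.mem_univ k0) ?_
    rw [← hθ]
    ring
  obtain ⟨k1, -, hk1⟩ := Finset.prod_eq_zero_iff.mp hprod
  have hfk1 : f k1 = -θ := by
    have h : (f k1 : ℂ) = -(θ : ℂ) := eq_neg_of_add_eq_zero_left hk1
    exact_mod_cast h
  have hk1k0 : k1 ≠ k0 := by
    intro h
    rw [h, ← hθ] at hfk1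
    exact hfk0 (by linarith)
  -- the trace identity
  have hHH : H * H = U * (Matrix.diagonal (fun k => (f k : ℂ))
      * Matrix.diagonal (fun k => (f k : ℂ))) * star U := by
    rw [hspec]
    simp only [Matrix.mul_assoc]
    rw [← Matrix.mul_assoc (star U) U, hUU', Matrix.one_mul]
  have htr1 : (H * H).trace = ∑ k, ((f k : ℂ)) ^ 2 := by
    rw [hHH, Matrix.diagonal_mul_diagonal, Matrix.mul_assoc, Matrix.trace_mul_comm,
      Matrix.mul_assoc, hUU', Matrix.mul_one, Matrix.trace_diagonal]
    exact Finset.sum_congr rfl fun k _ => (sq _).symm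
  have htr2 : (H * H).trace = - (Ωc * Ωc).trace := by
    have h : H * H = (Complex.I * Complex.I) • (Ωc * Ωc) := by
      rw [hHdef, smul_mul_assoc, mul_smul_comm, smul_smul]
    rw [h, Complex.I_mul_I, neg_one_smul, Matrix.trace_neg]
  have htr3 : (Ωc * Ωc).trace = - ∑ i, ∑ k, (Ωc i k) ^ 2 := by
    calc (Ωc * Ωc).trace = ∑ i, ∑ k, Ωc i k * Ωc k i := by
          simp [Matrix.trace, Matrix.diag, Matrix.mul_apply]
      _ = ∑ i, ∑ k, -((Ωc i k) ^ 2) := by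
          refine Finset.sum_congr rfl fun i _ => Finset.sum_congr rfl fun k _ => ?_
          have hki : Ωc k i = -Ωc i k := by simp [Ωc, Matrix.map_apply, hsk i k]
          rw [hki]; ring
      _ = - ∑ i, ∑ k, (Ωc i k) ^ 2 := by simp
  have hkey : ∑ i, ∑ j, ((Ω i j : ℂ)) ^ 2 = ∑ k, ((f k : ℂ)) ^ 2 := by
    have e1 : ∑ i, ∑ j, ((Ω i j : ℂ)) ^ 2 = ∑ i, ∑ j, (Ωc i j) ^ 2 := by
      simp [Ωc, Matrix.map_apply]
    rw [e1, show ∑ i, ∑ j, (Ωc i j) ^ 2 = -(Ωc * Ωc).trace by rw [htr3, neg_neg], ← htr2, htr1]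
  have hsum : ∑ i, ∑ j, (Ω i j) ^ 2 = ∑ k, (f k) ^ 2 := by exact_mod_cast hkey
  have hbound : (8 : ℝ) * π ^ 2 ≤ ∑ k, (f k) ^ 2 := by
    have h2 : ∑ k ∈ ({k0, k1} : Finset (Fin n)), (f k) ^ 2 = θ ^ 2 + θ ^ 2 := by
      rw [Finset.sum_pair (Ne.symm hk1k0), hfk1, ← hθ]
      ring
    have h3 : ∑ k ∈ ({k0, k1} : Finset (Fin n)), (f k) ^ 2 ≤ ∑ k, (f k) ^ 2 :=
      Finset.sum_le_sum_of_subset_of_nonneg (Finset.subset_univ _) (fun k _ _ => sq_nonneg _)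
    have h4 : (2 * π) ^ 2 ≤ θ ^ 2 := by
      rw [← sq_abs θ]
      exact pow_le_pow_left₀ (by positivity) habs 2
    nlinarith [Real.pi_pos]
  rw [ge_iff_le, hsum]
  have hs : 2 * Real.sqrt 2 * π = Real.sqrt (8 * π ^ 2) := by
    rw [show (8 : ℝ) * π ^ 2 = (2 * Real.sqrt 2 * π) ^ 2 by
      rw [mul_pow, mul_pow, Real.sq_sqrt (by norm_num : (0:ℝ) ≤ 2)]
      ring]
    rw [Real.sqrt_sq (by positivity)]
  rw [hs]
  exact Real.sqrt_le_sqrt hbound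
end

section
/- Let Ω be a real skew-symmetric n×n matrix and let x be a vector in ℝⁿ such that exp(Ω)·x = x and Ω·x ≠ 0. Then there exists a real number θ with θ ≥ 2π such that iθ and -iθ are eigenvalues of Ω regarded as a complex n×n matrix, and consequently ‖Ω‖_F² ≥ 8π². -/
open Matrix Real
open scoped Nat




namespace Stmt13Aux

variable {n : ℕ}

lemma pow_mulVec (M : Matrix (Fin n) (Fin n) ℂ) (v : Fin n → ℂ) (μ : ℂ)
    (h : M.mulVec v = μ • v) (k : ℕ) : (M ^ k).mulVec v = μ ^ k • v := by
  induction k with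
  | zero => simp
  | succ k ih =>
      rw [pow_succ', ← Matrix.mulVec_mulVec, ih, Matrix.mulVec_smul, h, smul_smul, pow_succ]

lemma exp_mulVec (M : Matrix (Fin n) (Fin n) ℂ) (v : Fin n → ℂ) (μ : ℂ)
    (h : M.mulVec v = μ • v) :
    (NormedSpace.exp M).mulVec v = Complex.exp μ • v := by
  letI : SeminormedRing (Matrix (Fin n) (Fin n) ℂ) := Matrix.linftyOpSemiNormedRing
  letI : NormedRing (Matrix (Fin n) (Fin n) ℂ) := Matrix.linftyOpNormedRing
  letI : NormedAlgebra ℝ (Matrix (Fin n) (Fin n) ℂ) := Matrix.linftyOpNormedAlgebra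
  have hs : Summable fun k : ℕ => (k !⁻¹ : ℝ) • M ^ k := NormedSpace.expSeries_summable' M
  let f : Matrix (Fin n) (Fin n) ℂ →ₗ[ℝ] (Fin n → ℂ) :=
    { toFun := fun A => A.mulVec v
      map_add' := fun A B => Matrix.add_mulVec A B v
      map_smul' := fun c A => Matrix.smul_mulVec c A v }
  have key : f (NormedSpace.exp M) = ∑' k : ℕ, f ((k !⁻¹ : ℝ) • M ^ k) := by
    rw [NormedSpace.exp_eq_tsum ℝ]
    exact (LinearMap.toContinuousLinearMap f).map_tsum hs
  have hterm : ∀ k : ℕ, f ((k !⁻¹ : ℝ) • M ^ k) = ((k !⁻¹ : ℝ) • μ ^ k) • v := by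
    intro k
    show ((k !⁻¹ : ℝ) • M ^ k).mulVec v = _
    rw [Matrix.smul_mulVec, pow_mulVec M v μ h k, smul_assoc]
  have hsum2 : Summable fun k : ℕ => (k !⁻¹ : ℝ) • μ ^ k := NormedSpace.expSeries_summable' μ
  calc (NormedSpace.exp M).mulVec v = f (NormedSpace.exp M) := rfl
    _ = ∑' k : ℕ, ((k !⁻¹ : ℝ) • μ ^ k) • v := by rw [key]; exact tsum_congr hterm
    _ = (∑' k : ℕ, (k !⁻¹ : ℝ) • μ ^ k) • v := by rw [hsum2.tsum_smul_const]
    _ = Complex.exp μ • v := by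
        rw [← congr_fun (NormedSpace.exp_eq_tsum (𝕂 := ℝ) (𝔸 := ℂ)) μ,
          ← congr_fun Complex.exp_eq_exp_ℂ μ]

lemma map_exp_ofReal (Ω : Matrix (Fin n) (Fin n) ℝ) :
    (NormedSpace.exp Ω).map (Complex.ofReal ·) =
      NormedSpace.exp (Ω.map (Complex.ofReal ·)) := by
  letI : SeminormedRing (Matrix (Fin n) (Fin n) ℂ) := Matrix.linftyOpSemiNormedRing
  letI : NormedRing (Matrix (Fin n) (Fin n) ℂ) := Matrix.linftyOpNormedRing
  letI : NormedAlgebra ℝ (Matrix (Fin n) (Fin n) ℂ) := Matrix.linftyOpNormedAlgebra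
  letI : SeminormedRing (Matrix (Fin n) (Fin n) ℝ) := Matrix.linftyOpSemiNormedRing
  letI : NormedRing (Matrix (Fin n) (Fin n) ℝ) := Matrix.linftyOpNormedRing
  letI : NormedAlgebra ℝ (Matrix (Fin n) (Fin n) ℝ) := Matrix.linftyOpNormedAlgebra
  letI : NormedAlgebra ℚ (Matrix (Fin n) (Fin n) ℝ) :=
    { (inferInstance : Algebra ℚ (Matrix (Fin n) (Fin n) ℝ)) with
      norm_smul_le := fun q A => by
        rw [← Rat.cast_smul_eq_qsmul ℝ q A, ← Rat.norm_cast_real q]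
        exact norm_smul_le (q : ℝ) A }
  have hcont : Continuous (Complex.ofRealHom.mapMatrix :
      Matrix (Fin n) (Fin n) ℝ →+* Matrix (Fin n) (Fin n) ℂ) := by
    show Continuous fun A : Matrix (Fin n) (Fin n) ℝ => A.map Complex.ofRealHom
    exact continuous_id.matrix_map Complex.continuous_ofReal
  have e : (⇑Complex.ofRealHom) = fun x : ℝ => (x : ℂ) := rfl
  have := NormedSpace.map_exp (Complex.ofRealHom.mapMatrix :
      Matrix (Fin n) (Fin n) ℝ →+* Matrix (Fin n) (Fin n) ℂ) hcont Ω
  simp only [RingHom.mapMatrix_apply, e] at this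
  exact this



lemma mulVec_map_ofReal (A : Matrix (Fin n) (Fin n) ℝ) (x : Fin n → ℝ) :
    (A.map (Complex.ofReal ·)).mulVec (fun i => (x i : ℂ)) =
      fun i => ((A.mulVec x i : ℝ) : ℂ) := by
  ext i
  simp [Matrix.mulVec, dotProduct, Matrix.map_apply]

lemma conj_eigen (A : Matrix (Fin n) (Fin n) ℝ) (v : Fin n → ℂ) (a : ℂ)
    (h : (A.map (Complex.ofReal ·)).mulVec v = a • v) :
    (A.map (Complex.ofReal ·)).mulVec (fun j => (starRingEnd ℂ) (v j)) =
      ((starRingEnd ℂ) a) • fun j => (starRingEnd ℂ) (v j) := by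
  ext i
  have hi := congrFun h i
  simp only [Matrix.mulVec, dotProduct, Matrix.map_apply, Pi.smul_apply,
    smul_eq_mul] at hi ⊢
  calc ∑ j, (↑(A i j) : ℂ) * (starRingEnd ℂ) (v j)
      = (starRingEnd ℂ) (∑ j, (↑(A i j) : ℂ) * v j) := by
        rw [map_sum]
        exact Finset.sum_congr rfl fun j _ => by simp [Complex.conj_ofReal]
    _ = (starRingEnd ℂ) a * (starRingEnd ℂ) (v i) := by rw [hi, _root_.map_mul]



end Stmt13Aux

set_option maxHeartbeats 1600000 in
/-- if a real skew-symmetric matrix Ω satisfies exp(Ω)x = x and Ωx ≠ 0 for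
some vector x, then Ω (as a complex matrix) has a pair of eigenvalues ±iθ with θ ≥ 2π, and
consequently ‖Ω‖_F² ≥ 8π². -/
theorem stmt13 (n : ℕ) (Ω : Matrix (Fin n) (Fin n) ℝ) (hskew : Ωᵀ = -Ω)
    (x : Fin n → ℝ) (hx : (NormedSpace.exp Ω).mulVec x = x) (hΩx : Ω.mulVec x ≠ 0) :
    ∃ θ : ℝ, θ ≥ 2 * π ∧
      (∃ v : Fin n → ℂ, v ≠ 0 ∧
        (Ω.map (Complex.ofReal ·)).mulVec v = (θ * Complex.I) • v) ∧
      (∃ v : Fin n → ℂ, v ≠ 0 ∧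
        (Ω.map (Complex.ofReal ·)).mulVec v = (-(θ * Complex.I)) • v) ∧
      Real.sqrt (∑ i, ∑ j, (Ω i j) ^ 2) ^ 2 ≥ 8 * π ^ 2 := by
  classical
  set M : Matrix (Fin n) (Fin n) ℂ := Ω.map (Complex.ofReal ·) with hMdef
  have hMH : Mᴴ = -M := by
    ext i j
    have h1 : Ω j i = -Ω i j := by
      have := congrFun (congrFun hskew i) j
      simpa [Matrix.transpose_apply] using this
    simp [hMdef, Matrix.conjTranspose_apply, Matrix.map_apply, Complex.conj_ofReal, h1]
  have hH : (Complex.I • M).IsHermitian := by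
    unfold Matrix.IsHermitian
    rw [Matrix.conjTranspose_smul, hMH]
    simp [Complex.star_def, Complex.conj_I]
  set b := hH.eigenvectorBasis with hbdef
  set μ := hH.eigenvalues with hμdef
  set lam : Fin n → ℂ := fun j => ((-(μ j) : ℝ) : ℂ) * Complex.I with hlamdef
  have hMb : ∀ j, M.mulVec ⇑(b j) = lam j • ⇑(b j) := by
    intro j
    have h2 : Complex.I • M.mulVec ⇑(b j) = (μ j : ℝ) • ⇑(b j) := by
      rw [← Matrix.smul_mulVec]; exact hH.mulVec_eigenvectorBasis j
    have h3 := congrArg (fun z => (-Complex.I) • z) h2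
    simp only [smul_smul, neg_mul, Complex.I_mul_I, neg_neg, one_smul] at h3
    rw [h3]
    funext i
    simp only [hlamdef, Pi.smul_apply, smul_eq_mul, Complex.real_smul]
    rw [Complex.ofReal_neg]
    ring
  -- complexified vector
  set y : EuclideanSpace ℂ (Fin n) := WithLp.toLp 2 (fun i => (x i : ℂ)) with hydef
  have hexp_y : (NormedSpace.exp M).mulVec y = y := by
    have h1 := Stmt13Aux.mulVec_map_ofReal (NormedSpace.exp Ω) x
    rw [Stmt13Aux.map_exp_ofReal Ω, hx] at h1
    exact h1
  have hMy : M.mulVec y ≠ 0 := by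
    have h1 := Stmt13Aux.mulVec_map_ofReal Ω x
    intro h0
    rw [show M.mulVec y = _ from h1] at h0
    apply hΩx
    funext i
    have h2 := congrFun h0 i
    simpa using h2
  set c : Fin n → ℂ := fun j => b.repr y j with hcdef
  have hy_sum : y = ∑ j, c j • ⇑(b j) := by
    rw [hcdef]; simpa [WithLp.ofLp_sum] using congrArg WithLp.ofLp (b.sum_repr y).symm
  have hA_on_y : ∀ (A : Matrix (Fin n) (Fin n) ℂ) (l : Fin n → ℂ),
      (∀ j, A.mulVec ⇑(b j) = l j • ⇑(b j)) →
      A.mulVec y = ∑ j, (l j * c j) • ⇑(b j) := by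
    intro A l hl
    have h1 : A.mulVec y = ∑ j, A.mulVec (c j • ⇑(b j)) := by
      rw [show (y : Fin n → ℂ) = ∑ j, c j • ⇑(b j) from hy_sum]
      simp only [← Matrix.mulVecLin_apply]
      exact map_sum A.mulVecLin _ _
    rw [h1]
    refine Finset.sum_congr rfl fun j _ => ?_
    rw [Matrix.mulVec_smul, hl j, smul_smul, mul_comm]
  have hexp_sum : (∑ j, (Complex.exp (lam j) * c j) • ⇑(b j)) = ∑ j, c j • ⇑(b j) := by
    rw [← hA_on_y (NormedSpace.exp M) (fun j => Complex.exp (lam j))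
      (fun j => Stmt13Aux.exp_mulVec M _ _ (hMb j)), hexp_y]
    exact hy_sum
  have hcoef : ∀ k, Complex.exp (lam k) * c k = c k := by
    intro k
    have hES : (∑ j, (Complex.exp (lam j) * c j) • b j : EuclideanSpace ℂ (Fin n))
        = ∑ j, c j • b j :=
        WithLp.ofLp_injective (p := 2) (by simpa [WithLp.ofLp_sum] using hexp_sum)
    calc Complex.exp (lam k) * c k
        = inner ℂ (b k) (∑ j, (Complex.exp (lam j) * c j) • b j) :=
          (b.orthonormal.inner_right_fintype (fun j => Complex.exp (lam j) * c j) k).symm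
      _ = inner ℂ (b k) (∑ j, c j • b j : EuclideanSpace ℂ (Fin n)) := by rw [hES]
      _ = c k := b.orthonormal.inner_right_fintype (fun j => c j) k
  obtain ⟨k, hk⟩ : ∃ k, lam k * c k ≠ 0 := by
    by_contra hc
    push_neg at hc
    apply hMy
    rw [hA_on_y M lam hMb]
    exact Finset.sum_eq_zero fun j _ => by rw [hc j, zero_smul]
  have hck : c k ≠ 0 := fun h => hk (by rw [h, mul_zero])
  have hlamk : lam k ≠ 0 := fun h => hk (by rw [h, zero_mul])
  have hμk : μ k ≠ 0 := by
    intro h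
    apply hlamk
    simp [hlamdef, h]
  have hexp1 : Complex.exp (lam k) = 1 := by
    have h2 : Complex.exp (lam k) * c k = 1 * c k := by rw [one_mul]; exact hcoef k
    exact mul_right_cancel₀ hck h2
  obtain ⟨m, hm⟩ := Complex.exp_eq_one_iff.mp hexp1
  have hμm : -(μ k) = (m : ℝ) * (2 * π) := by
    have h3 : ((-(μ k) : ℝ) : ℂ) * Complex.I = (((m : ℝ) * (2 * π) : ℝ) : ℂ) * Complex.I := by
      rw [show ((-(μ k) : ℝ) : ℂ) * Complex.I = lam k from rfl, hm]
      push_cast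
      ring
    have h4 := mul_right_cancel₀ Complex.I_ne_zero h3
    exact_mod_cast h4
  have hm0 : m ≠ 0 := by
    rintro rfl
    simp only [Int.cast_zero, zero_mul] at hμm
    exact hμk (by linarith)
  set θ := |μ k| with hθdef
  have hθpos : 0 < θ := abs_pos.mpr hμk
  have hθge : θ ≥ 2 * π := by
    have h5 : θ = |(m : ℝ)| * (2 * π) := by
      rw [hθdef, ← abs_neg, hμm, abs_mul, abs_of_pos (mul_pos two_pos Real.pi_pos)]
    have h6 : (1 : ℝ) ≤ |(m : ℝ)| := by
      have := Int.one_le_abs hm0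
      exact_mod_cast this
    rw [h5]
    nlinarith [Real.pi_pos]
  -- the two eigenvectors
  set v : Fin n → ℂ := ⇑(b k) with hvdef
  set w : Fin n → ℂ := fun j => (starRingEnd ℂ) (v j) with hwdef
  have hMv : M.mulVec v = lam k • v := hMb k
  have hMw : M.mulVec w = (starRingEnd ℂ) (lam k) • w := Stmt13Aux.conj_eigen Ω v (lam k) hMv
  have hconjlam : (starRingEnd ℂ) (lam k) = -(lam k) := by
    simp only [hlamdef, _root_.map_mul, Complex.conj_ofReal, Complex.conj_I]
    ring
  have hv0 : v ≠ 0 := by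
    intro h
    have h1 : ‖b k‖ = 1 := b.orthonormal.1 k
    have h2 : (b k : EuclideanSpace ℂ (Fin n)) = 0 := WithLp.ofLp_injective (p := 2) h
    rw [h2, norm_zero] at h1
    exact zero_ne_one h1
  have hw0 : w ≠ 0 := by
    intro h
    apply hv0
    funext i
    have h2 : (starRingEnd ℂ) (v i) = 0 := congrFun h i
    simpa using congrArg (starRingEnd ℂ) h2
  have hlam_eq : lam k = ((-(μ k) : ℝ) : ℂ) * Complex.I := by rw [hlamdef]
  -- orthogonality of v and w
  have hdot : dotProduct (star v) w = 0 := by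
    have e1 : dotProduct (star (M.mulVec v)) w
        = (starRingEnd ℂ) (lam k) * dotProduct (star v) w := by
      rw [hMv, star_smul, smul_dotProduct, starRingEnd_apply, smul_eq_mul]
    have e2 : dotProduct (star (M.mulVec v)) w
        = -((starRingEnd ℂ) (lam k) * dotProduct (star v) w) := by
      rw [Matrix.star_mulVec, ← dotProduct_mulVec, hMH, Matrix.neg_mulVec,
        dotProduct_neg, hMw, dotProduct_smul, smul_eq_mul]
    have e3 : (starRingEnd ℂ) (lam k) * dotProduct (star v) w = 0 := by
      have e4 := e1.symm.trans e2
      have e5 : (starRingEnd ℂ) (lam k) * dotProduct (star v) w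
          + (starRingEnd ℂ) (lam k) * dotProduct (star v) w = 0 := by
        linear_combination e4
      exact add_self_eq_zero.mp e5
    have h4 : (starRingEnd ℂ) (lam k) ≠ 0 := by simpa using hlamk
    exact (mul_eq_zero.mp e3).resolve_left h4
  have hbb : dotProduct (star v) v = 1 := by
    have h1 : (inner ℂ (b k) (b k) : ℂ) = 1 := by
      have h2 := b.orthonormal.1 k
      rw [@inner_self_eq_norm_sq_to_K ℂ, h2]
      norm_num
    rw [EuclideanSpace.inner_eq_star_dotProduct, dotProduct_comm] at h1
    exact h1
  have hww : dotProduct (star w) w = 1 := by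
    have h1 : dotProduct (star w) w
        = (starRingEnd ℂ) (dotProduct (star v) v) := by
      simp only [dotProduct, hwdef, Pi.star_apply, _root_.map_sum]
      refine Finset.sum_congr rfl fun j _ => ?_
      simp only [starRingEnd_apply, star_star, star_mul', mul_comm]
    rw [h1, hbb, _root_.map_one]
  -- the orthonormal pair
  set wE : EuclideanSpace ℂ (Fin n) := WithLp.toLp 2 w with hwEdef
  set u : Fin 2 → EuclideanSpace ℂ (Fin n) := ![b k, wE] with hudef
  have hu : Orthonormal ℂ u := by
    rw [orthonormal_iff_ite]
    intro i j
    have huv : (inner ℂ (u 0) (u 0) : ℂ) = 1 := by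
      rw [hudef]
      show (inner ℂ (b k) (b k) : ℂ) = 1
      rw [EuclideanSpace.inner_eq_star_dotProduct, dotProduct_comm]
      exact hbb
    have huw : (inner ℂ (u 1) (u 1) : ℂ) = 1 := by
      rw [hudef]
      show (inner ℂ wE wE : ℂ) = 1
      rw [EuclideanSpace.inner_eq_star_dotProduct, dotProduct_comm]
      exact hww
    have hvw : (inner ℂ (u 0) (u 1) : ℂ) = 0 := by
      rw [hudef]
      show (inner ℂ (b k) wE : ℂ) = 0
      rw [EuclideanSpace.inner_eq_star_dotProduct, dotProduct_comm]
      exact hdot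
    have hwv : (inner ℂ (u 1) (u 0) : ℂ) = 0 := by
      rw [← inner_conj_symm, hvw, map_zero]
    fin_cases i <;> fin_cases j <;>
      simp only [Fin.isValue, if_true, if_false, Fin.zero_eta, Fin.mk_one] <;>
      first
        | exact huv | exact huw | exact hvw | exact hwv
        | (rw [if_neg (by decide)]; first | exact hvw | exact hwv)
        | (rw [if_pos rfl]; first | exact huv | exact huw)
  -- rows of Ω as vectors
  set r : Fin n → EuclideanSpace ℂ (Fin n) := fun i => WithLp.toLp 2 (fun j => ((Ω i j : ℝ) : ℂ)) with hrdef
  have hlamnorm : ‖lam k‖ = θ := by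
    rw [hlam_eq, hθdef]
    rw [norm_mul, Complex.norm_I, Complex.norm_real, Real.norm_eq_abs, abs_neg, mul_one]
  -- pointwise eigen equation
  have hMvi : ∀ i, (M.mulVec v) i = lam k * v i := by
    intro i
    rw [hMv]
    simp [Pi.smul_apply, smul_eq_mul]
  -- inner products with rows
  have hinner_v : ∀ i, (inner ℂ (u 0) (r i) : ℂ) = (starRingEnd ℂ) ((M.mulVec v) i) := by
    intro i
    rw [hudef]
    show (inner ℂ (b k) (r i) : ℂ) = _
    rw [EuclideanSpace.inner_eq_star_dotProduct, dotProduct_comm]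
    show dotProduct (star v) (fun j => ((Ω i j : ℝ) : ℂ)) = _
    simp only [dotProduct, Matrix.mulVec, Matrix.map_apply, _root_.map_sum,
      Pi.star_apply, hMdef]
    refine Finset.sum_congr rfl fun j _ => ?_
    rw [_root_.map_mul, Complex.conj_ofReal, starRingEnd_apply, mul_comm]
  have hinner_w : ∀ i, (inner ℂ (u 1) (r i) : ℂ) = (M.mulVec v) i := by
    intro i
    rw [hudef]
    show (inner ℂ wE (r i) : ℂ) = _
    rw [EuclideanSpace.inner_eq_star_dotProduct, dotProduct_comm]
    show dotProduct (star w) (fun j => ((Ω i j : ℝ) : ℂ)) = _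
    simp only [dotProduct, Matrix.mulVec, Matrix.map_apply, Pi.star_apply, hMdef,
      hwdef]
    refine Finset.sum_congr rfl fun j _ => ?_
    rw [show star (w j) = v j from by
      rw [show w j = (starRingEnd ℂ) (v j) from rfl, starRingEnd_apply, star_star], mul_comm]
  have hrnorm : ∀ i, ‖r i‖ ^ 2 = ∑ j, (Ω i j) ^ 2 := by
    intro i
    rw [EuclideanSpace.norm_eq, Real.sq_sqrt (by positivity)]
    refine Finset.sum_congr rfl fun j _ => ?_
    rw [hrdef]
    show ‖((Ω i j : ℝ) : ℂ)‖ ^ 2 = _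
    rw [Complex.norm_real, Real.norm_eq_abs, sq_abs]
  have key_i : ∀ i, θ ^ 2 * ‖v i‖ ^ 2 + θ ^ 2 * ‖v i‖ ^ 2 ≤ ∑ j, (Ω i j) ^ 2 := by
    intro i
    have hB := hu.sum_inner_products_le (x := r i) (s := (Finset.univ : Finset (Fin 2)))
    rw [Fin.sum_univ_two, hinner_v i, hinner_w i, hrnorm i] at hB
    have hn : ‖(M.mulVec v) i‖ = θ * ‖v i‖ := by
      rw [hMvi i, norm_mul, hlamnorm]
    rw [RCLike.norm_conj, hn] at hB
    calc θ ^ 2 * ‖v i‖ ^ 2 + θ ^ 2 * ‖v i‖ ^ 2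
        = (θ * ‖v i‖) ^ 2 + (θ * ‖v i‖) ^ 2 := by ring
      _ ≤ ∑ j, (Ω i j) ^ 2 := hB
  have hsumv : ∑ i, ‖v i‖ ^ 2 = 1 := by
    have h1 : ∑ i, ((‖v i‖ : ℝ) ^ 2 : ℂ) = 1 := by
      rw [← hbb]
      simp only [dotProduct, Pi.star_apply]
      refine (Finset.sum_congr rfl fun i _ => ?_).symm
      rw [Complex.star_def, ← Complex.normSq_eq_conj_mul_self]
      norm_cast
      exact Complex.normSq_eq_norm_sq (v i)
    have h2 : ((∑ i, ‖v i‖ ^ 2 : ℝ) : ℂ) = ((1 : ℝ) : ℂ) := by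
      push_cast
      simpa using h1
    exact_mod_cast h2
  have hS : 2 * θ ^ 2 ≤ ∑ i, ∑ j, (Ω i j) ^ 2 := by
    have h1 : ∑ i, (θ ^ 2 * ‖v i‖ ^ 2 + θ ^ 2 * ‖v i‖ ^ 2) ≤ ∑ i, ∑ j, (Ω i j) ^ 2 :=
      Finset.sum_le_sum fun i _ => key_i i
    have h2 : ∑ i, (θ ^ 2 * ‖v i‖ ^ 2 + θ ^ 2 * ‖v i‖ ^ 2) = 2 * θ ^ 2 := by
      have h3 : ∀ i ∈ Finset.univ, θ ^ 2 * ‖v i‖ ^ 2 + θ ^ 2 * ‖v i‖ ^ 2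
          = (2 * θ ^ 2) * ‖v i‖ ^ 2 := fun i _ => by ring
      rw [Finset.sum_congr rfl h3, ← Finset.mul_sum, hsumv, mul_one]
    linarith
  have hfrob : Real.sqrt (∑ i, ∑ j, (Ω i j) ^ 2) ^ 2 ≥ 8 * π ^ 2 := by
    rw [Real.sq_sqrt (by positivity)]
    nlinarith [hθge, Real.pi_pos, hS, hθpos]
  rcases abs_choice (μ k) with habs | habs
  · have hθμ : θ = μ k := by rw [hθdef]; exact habs
    have hlam2 : lam k = -((θ : ℂ) * Complex.I) := by
      rw [hlam_eq, hθμ]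
      push_cast
      ring
    refine ⟨θ, hθge, ⟨w, hw0, ?_⟩, ⟨v, hv0, ?_⟩, hfrob⟩
    · rw [hMw, hconjlam, hlam2, neg_neg]
    · rw [hMv, hlam2]
  · have hθμ : θ = -μ k := by rw [hθdef]; exact habs
    have hlam2 : lam k = (θ : ℂ) * Complex.I := by
      rw [hlam_eq]
      rw [show ((-μ k : ℝ) : ℂ) = ((θ : ℝ) : ℂ) from by exact_mod_cast congrArg Complex.ofReal hθμ.symm]
    refine ⟨θ, hθge, ⟨v, hv0, ?_⟩, ⟨w, hw0, ?_⟩, hfrob⟩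
    · rw [hMv, hlam2]
    · rw [hMw, hconjlam, hlam2]
end

section
/- Let n and p be integers with n ≥ p ≥ 2 and let β > 0 be real. Let J_p be the p×p matrix with entry 1 at position (2,1), entry -1 at position (1,2), and zeros elsewhere, and let J_n be the n×n matrix defined the same way. Then exp(4πβ·J_n)·I_{n×p}·exp(2π(1-2β)·J_p) = I_{n×p}. (This exhibits, on the Stiefel manifold with the β-metric, a geodesic loop at I_{n×p}, generated by a Givens rotation, whose length is √(2β)·2π.) -/
open Matrix Real

/-- The q×q matrix with entry 1 at position (2,1), entry -1 at position (1,2)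
(1-based indexing) and zeros elsewhere. -/
noncomputable def givensGen (q : ℕ) : Matrix (Fin q) (Fin q) ℝ :=
  Matrix.of fun i j =>
    if (i : ℕ) = 1 ∧ (j : ℕ) = 0 then 1 else if (i : ℕ) = 0 ∧ (j : ℕ) = 1 then -1 else 0

attribute [local instance] Matrix.linftyOpNormedRing Matrix.linftyOpNormedAlgebra

lemma inp_apply {n p : ℕ} (i : Fin n) (j : Fin p) :
    Inp n p i j = if (i : ℕ) = (j : ℕ) then 1 else 0 := rfl

lemma givens_apply {q : ℕ} (i j : Fin q) :
    givensGen q i j =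
      if (i : ℕ) = 1 ∧ (j : ℕ) = 0 then 1 else if (i : ℕ) = 0 ∧ (j : ℕ) = 1 then -1 else 0 := rfl

lemma givens_comm {n p : ℕ} (hp : 2 ≤ p) (hpn : p ≤ n) :
    givensGen n * Inp n p = Inp n p * givensGen p := by
  ext i j
  rw [mul_apply, mul_apply]
  rw [Finset.sum_eq_single (Fin.castLE hpn j) ?_ ?_]
  · rcases lt_or_ge (i : ℕ) p with hi | hi
    · rw [Finset.sum_eq_single (⟨i, hi⟩ : Fin p) ?_ ?_]
      · simp [Inp, givensGen]
      · intro b _ hb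
        have hb' : ¬ (i : ℕ) = (b : ℕ) := by
          simp [Fin.ext_iff] at hb; omega
        rw [inp_apply, if_neg hb', zero_mul]
      · simp
    · rw [Finset.sum_eq_zero fun b _ => by
        rw [inp_apply, if_neg (by omega), zero_mul]]
      rw [givens_apply, if_neg (by omega), if_neg (by omega), zero_mul]
  · intro b _ hb
    have hb' : ¬ (b : ℕ) = (j : ℕ) := by
      simp [Fin.ext_iff] at hb; omega
    rw [inp_apply, if_neg hb', mul_zero]
  · simp

lemma inp_tmul {p : ℕ} (hp : 2 ≤ p) : (Inp p 2)ᵀ * Inp p 2 = 1 := by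
  ext a b
  rw [mul_apply]
  rw [Finset.sum_eq_single (Fin.castLE hp a) ?_ ?_]
  · simp [Inp, transpose_apply, one_apply, Fin.ext_iff]
  · intro c _ hc
    have hc' : ¬ (c : ℕ) = (a : ℕ) := by
      simp [Fin.ext_iff] at hc; omega
    rw [transpose_apply, inp_apply, if_neg hc', zero_mul]
  · simp

lemma givens_corner {p : ℕ} (hp : 2 ≤ p) :
    Inp p 2 * givensGen 2 * (Inp p 2)ᵀ = givensGen p := by
  ext i j
  rw [mul_apply]
  simp only [mul_apply, Fin.sum_univ_two, transpose_apply]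
  simp only [inp_apply, givens_apply]
  norm_num
  split_ifs <;> norm_num <;> omega

noncomputable def cMat : ℂ →ₐ[ℝ] Matrix (Fin 2) (Fin 2) ℝ where
  toFun z := !![z.re, -z.im; z.im, z.re]
  map_one' := by ext i j; fin_cases i <;> fin_cases j <;> simp [one_apply]
  map_mul' z w := by
    ext i j
    fin_cases i <;> fin_cases j <;>
      simp [Matrix.mul_apply, Fin.sum_univ_two, Complex.mul_re, Complex.mul_im] <;> ring
  map_zero' := by ext i j; fin_cases i <;> fin_cases j <;> simp
  map_add' z w := by ext i j; fin_cases i <;> fin_cases j <;> simp <;> ring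
  commutes' r := by
    ext i j
    fin_cases i <;> fin_cases j <;>
      simp [Algebra.algebraMap_eq_smul_one, Matrix.smul_apply, one_apply]

lemma exp_two_pi_givens2 : NormedSpace.exp ((2 * π) • givensGen 2) = 1 := by
  have hc : Continuous cMat := cMat.toLinearMap.continuous_of_finiteDimensional
  have h1 : ((2 * π) • givensGen 2) = cMat (2 * π * Complex.I) := by
    ext i j
    fin_cases i <;> fin_cases j <;>
      simp [cMat, givensGen, Matrix.smul_apply]
  rw [h1]; erw [← NormedSpace.map_exp cMat hc]
  rw [show (NormedSpace.exp : ℂ → ℂ) = Complex.exp by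
    rw [Complex.exp_eq_exp_ℂ]]
  rw [Complex.exp_two_pi_mul_I, _root_.map_one]

lemma exp_mul_rect {n p : ℕ} (A : Matrix (Fin n) (Fin n) ℝ) (B : Matrix (Fin p) (Fin p) ℝ)
    (M : Matrix (Fin n) (Fin p) ℝ) (h : A * M = M * B) :
    NormedSpace.exp A * M = M * NormedSpace.exp B := by
  have hpow : ∀ k : ℕ, A ^ k * M = M * B ^ k := by
    intro k
    induction k with
    | zero => simp
    | succ k ih => rw [pow_succ, pow_succ, Matrix.mul_assoc, h, ← Matrix.mul_assoc, ih, Matrix.mul_assoc]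
  let L : Matrix (Fin n) (Fin n) ℝ →L[ℝ] Matrix (Fin n) (Fin p) ℝ :=
    LinearMap.toContinuousLinearMap
      { toFun := fun X => X * M
        map_add' := fun X Y => Matrix.add_mul X Y M
        map_smul' := fun c X => Matrix.smul_mul c X M }
  let R : Matrix (Fin p) (Fin p) ℝ →L[ℝ] Matrix (Fin n) (Fin p) ℝ :=
    LinearMap.toContinuousLinearMap
      { toFun := fun X => M * X
        map_add' := fun X Y => Matrix.mul_add M X Y
        map_smul' := fun c X => Matrix.mul_smul M c X }
  have hA := NormedSpace.expSeries_summable' (𝕂 := ℝ) A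
  have hB := NormedSpace.expSeries_summable' (𝕂 := ℝ) B
  calc NormedSpace.exp A * M = L (∑' k : ℕ, (Nat.factorial k : ℝ)⁻¹ • A ^ k) := by
        rw [NormedSpace.exp_eq_tsum ℝ]; rfl
    _ = ∑' k : ℕ, ((Nat.factorial k : ℝ)⁻¹ • A ^ k) * M := L.map_tsum hA
    _ = ∑' k : ℕ, M * ((Nat.factorial k : ℝ)⁻¹ • B ^ k) := by
        refine tsum_congr fun k => ?_
        rw [Matrix.smul_mul, hpow, ← Matrix.mul_smul]
    _ = R (∑' k : ℕ, (Nat.factorial k : ℝ)⁻¹ • B ^ k) := (R.map_tsum hB).symm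
    _ = M * NormedSpace.exp B := by rw [NormedSpace.exp_eq_tsum ℝ]; rfl

set_option maxHeartbeats 1000000 in
lemma exp_two_pi_givens {p : ℕ} (hp : 2 ≤ p) :
    NormedSpace.exp ((2 * π) • givensGen p) = 1 := by
  set c := Inp p 2 with hc
  set X := (2 * π) • givensGen 2 with hX
  have hct : cᵀ * c = 1 := inp_tmul hp
  have key : (2 * π) • givensGen p = c * X * cᵀ := by
    rw [hX, Matrix.mul_smul, Matrix.smul_mul, givens_corner hp]
  have hpow : ∀ k : ℕ, (c * X * cᵀ) ^ (k + 1) = c * X ^ (k + 1) * cᵀ := by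
    intro k
    induction k with
    | zero => simp
    | succ k ih =>
      rw [pow_succ, ih]
      have h1 : c * X ^ (k + 1) * cᵀ * (c * X * cᵀ) = c * X ^ (k + 1) * ((cᵀ * c) * (X * cᵀ)) := by
        simp only [Matrix.mul_assoc]
      rw [h1, hct, Matrix.one_mul]
      conv_rhs => rw [pow_succ]
      simp only [Matrix.mul_assoc]
  rw [key, NormedSpace.exp_eq_tsum ℝ]
  beta_reduce
  have hs : Summable fun k : ℕ => (Nat.factorial k : ℝ)⁻¹ • (c * X * cᵀ) ^ k :=
    NormedSpace.expSeries_summable' (𝕂 := ℝ) (c * X * cᵀ)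
  rw [Summable.tsum_eq_zero_add hs]
  simp only [pow_zero, Nat.factorial_zero, Nat.cast_one, inv_one, one_smul]
  have h2 : ∀ k : ℕ,
      (Nat.factorial (k + 1) : ℝ)⁻¹ • (c * X * cᵀ) ^ (k + 1) = c * ((Nat.factorial (k + 1) : ℝ)⁻¹ • X ^ (k + 1)) * cᵀ := by
    intro k; rw [hpow, Matrix.mul_smul, Matrix.smul_mul]
  rw [tsum_congr h2]
  let Φ : Matrix (Fin 2) (Fin 2) ℝ →L[ℝ] Matrix (Fin p) (Fin p) ℝ :=
    LinearMap.toContinuousLinearMap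
      { toFun := fun Y => c * Y * cᵀ
        map_add' := fun Y Z => by
          show c * (Y + Z) * cᵀ = c * Y * cᵀ + c * Z * cᵀ
          rw [Matrix.mul_add, Matrix.add_mul]
        map_smul' := fun r Y => by
          show c * (r • Y) * cᵀ = r • (c * Y * cᵀ)
          rw [Matrix.mul_smul, Matrix.smul_mul] }
  have hsX : Summable fun k : ℕ => (Nat.factorial (k + 1) : ℝ)⁻¹ • X ^ (k + 1) :=
    (summable_nat_add_iff 1).mpr (NormedSpace.expSeries_summable' (𝕂 := ℝ) X)
  have hΦ : (∑' k : ℕ, c * ((Nat.factorial (k + 1) : ℝ)⁻¹ • X ^ (k + 1)) * cᵀ)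
      = Φ (∑' k : ℕ, (Nat.factorial (k + 1) : ℝ)⁻¹ • X ^ (k + 1)) := (Φ.map_tsum hsX).symm
  rw [hΦ]
  have hx : (∑' k : ℕ, (Nat.factorial (k + 1) : ℝ)⁻¹ • X ^ (k + 1)) = 0 := by
    have hXe : (∑' k : ℕ, (Nat.factorial k : ℝ)⁻¹ • X ^ k) = 1 := by
      have h := exp_two_pi_givens2
      rw [NormedSpace.exp_eq_tsum ℝ] at h
      exact h
    erw [Summable.tsum_eq_zero_add (NormedSpace.expSeries_summable' (𝕂 := ℝ) X)] at hXe
    simp only [pow_zero, Nat.factorial_zero, Nat.cast_one, inv_one, one_smul] at hXe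
    rwa [add_eq_left] at hXe
  rw [hx, map_zero, add_zero]

/-- the geodesic loop of the β-metric Stiefel manifold generated by a Givens
rotation: exp(4πβ·J_n)·I_{n×p}·exp(2π(1-2β)·J_p) = I_{n×p}. -/
theorem stmt14 (n p : ℕ) (hp : 2 ≤ p) (hpn : p ≤ n) (β : ℝ) (hβ : 0 < β) :
    NormedSpace.exp ((4 * π * β) • givensGen n) * Inp n p *
      NormedSpace.exp ((2 * π * (1 - 2 * β)) • givensGen p) = Inp n p := by
  have h1 : ((4 * π * β) • givensGen n) * Inp n p = Inp n p * ((4 * π * β) • givensGen p) := by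
    rw [Matrix.smul_mul, Matrix.mul_smul, givens_comm hp hpn]
  rw [exp_mul_rect _ _ _ h1, Matrix.mul_assoc]
  have hcomm : Commute ((4 * π * β) • givensGen p) ((2 * π * (1 - 2 * β)) • givensGen p) := by
    unfold Commute SemiconjBy
    rw [smul_mul_assoc, mul_smul_comm, smul_mul_assoc, mul_smul_comm, smul_comm]
  rw [← Matrix.exp_add_of_commute _ _ hcomm]
  have hsum : (4 * π * β) • givensGen p + (2 * π * (1 - 2 * β)) • givensGen p
      = (2 * π) • givensGen p := by
    rw [← add_smul]; ring_nf
  rw [hsum, exp_two_pi_givens hp, Matrix.mul_one]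
end

section
/- Let β be a real number with β > 1. Then there exist a real skew-symmetric 3×3 matrix Ω and a real skew-symmetric 2×2 matrix Ψ such that exp(Ω) = I₃, exp(Ψ) = -I₂, and β·‖Ω₁₁ - Ψ‖_F² + ‖Ω₂₁‖_F² < 2βπ², where Ω₁₁ denotes the top-left 2×2 block of Ω and Ω₂₁ denotes its bottom-left 1×2 block. (This shows that the curve in the Stiefel manifold St_β(3,2) induced by the one-parameter subgroup determined by (Ω,Ψ) joins I_{3×2} to -I_{3×2} with length strictly less than π√(2β).) -/
open Matrix Real

open scoped Nat

set_option maxHeartbeats 1000000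

lemma pow_odd_of_cube {n : ℕ} {A : Matrix (Fin n) (Fin n) ℝ} {c : ℝ}
    (h : A * A * A = c • A) (k : ℕ) : A ^ (2 * k + 1) = c ^ k • A := by
  induction k with
  | zero => simp
  | succ k ih =>
    have e : 2 * (k + 1) + 1 = (2 * k + 1) + 1 + 1 := by ring
    rw [e, pow_succ, pow_succ, ih, smul_mul_assoc, smul_mul_assoc, h, smul_smul, ← pow_succ]

lemma pow_even_of_cube {n : ℕ} {A : Matrix (Fin n) (Fin n) ℝ} {c : ℝ}
    (h : A * A * A = c • A) (k : ℕ) : A ^ (2 * (k + 1)) = c ^ k • (A * A) := by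
  have e : 2 * (k + 1) = (2 * k + 1) + 1 := by ring
  rw [e, pow_succ, pow_odd_of_cube h, smul_mul_assoc]

lemma exp_eq_one_of_cube {n : ℕ} {A : Matrix (Fin n) (Fin n) ℝ}
    (h : A * A * A = (-(2 * π) ^ 2) • A) : NormedSpace.exp A = 1 := by
  have h2 : (2 * π) ≠ 0 := by positivity
  rw [NormedSpace.exp_eq_tsum ℝ]
  refine HasSum.tsum_eq ?_
  have hodd : HasSum (fun k : ℕ => (((2 * k + 1)! : ℝ)⁻¹ • A ^ (2 * k + 1))) 0 := by
    have hs := ((Real.hasSum_sin (2 * π)).div_const (2 * π)).smul_const A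
    rw [Real.sin_two_pi, zero_div, zero_smul] at hs
    have e : (fun k : ℕ => (((2 * k + 1)! : ℝ)⁻¹ • A ^ (2 * k + 1)))
        = fun k : ℕ => ((-1 : ℝ) ^ k * (2 * π) ^ (2 * k + 1) / ((2 * k + 1)! : ℝ) / (2 * π)) • A := by
      funext k
      rw [pow_odd_of_cube h, smul_smul]
      congr 1
      have hf : ((2 * k + 1)! : ℝ) ≠ 0 := Nat.cast_ne_zero.2 (Nat.factorial_ne_zero _)
      field_simp
      simp only [mul_pow, ← pow_mul]
      ring_nf
      rw [pow_mul' (2 : ℝ) k 2, show (-4 : ℝ) = -1 * 4 by norm_num, mul_pow]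
      ring
    rw [e]
    exact hs
  have heven : HasSum (fun k : ℕ => (((2 * k)! : ℝ)⁻¹ • A ^ (2 * k))) 1 := by
    have hc := Real.hasSum_cos (2 * π)
    rw [Real.cos_two_pi] at hc
    have hc1 := (hasSum_nat_add_iff'
      (f := fun n : ℕ => (-1 : ℝ) ^ n * (2 * π) ^ (2 * n) / ((2 * n)! : ℝ)) 1).mpr hc
    have h1 : (1 : ℝ) - ∑ i ∈ Finset.range 1,
        (-1 : ℝ) ^ i * (2 * π) ^ (2 * i) / ((2 * i)! : ℝ) = 0 := by
      simp
    rw [h1] at hc1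
    have hc2 := (hc1.mul_right (-(1 / (2 * π) ^ 2))).smul_const (A * A)
    rw [zero_mul, zero_smul] at hc2
    have e : (fun k : ℕ => (((2 * (k + 1))! : ℝ)⁻¹ • A ^ (2 * (k + 1))))
        = fun k : ℕ => ((-1 : ℝ) ^ (k + 1) * (2 * π) ^ (2 * (k + 1)) / ((2 * (k + 1))! : ℝ)
            * -(1 / (2 * π) ^ 2)) • (A * A) := by
      funext k
      rw [pow_even_of_cube h, smul_smul]
      congr 1
      have hf : ((2 * (k + 1))! : ℝ) ≠ 0 := Nat.cast_ne_zero.2 (Nat.factorial_ne_zero _)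
      field_simp
      simp only [mul_pow, ← pow_mul]
      ring_nf
      rw [pow_mul' (2 : ℝ) k 2, show (-4 : ℝ) = -1 * 4 by norm_num, mul_pow]
      ring
    have hc3 : HasSum (fun k : ℕ => (((2 * (k + 1))! : ℝ)⁻¹ • A ^ (2 * (k + 1)))) 0 := by
      rw [e]; exact hc2
    have h2' : (1 : Matrix (Fin n) (Fin n) ℝ) - ∑ i ∈ Finset.range 1,
        (((2 * i)! : ℝ)⁻¹ • A ^ (2 * i)) = 0 := by
      simp
    rw [← h2'] at hc3
    exact (hasSum_nat_add_iff'
      (f := fun k : ℕ => (((2 * k)! : ℝ)⁻¹ • A ^ (2 * k))) 1).mp hc3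
  have h5 := HasSum.even_add_odd (f := fun m : ℕ => ((m ! : ℝ)⁻¹ • A ^ m)) heven hodd
  rw [add_zero] at h5
  exact h5

lemma exp_eq_neg_one_of_sq {n : ℕ} {A : Matrix (Fin n) (Fin n) ℝ}
    (h : A * A = (-π ^ 2) • 1) : NormedSpace.exp A = -1 := by
  have hpe : ∀ k : ℕ, A ^ (2 * k) = ((-π ^ 2) ^ k) • (1 : Matrix (Fin n) (Fin n) ℝ) := by
    intro k
    induction k with
    | zero => simp
    | succ k ih =>
      have e : 2 * (k + 1) = (2 * k) + 1 + 1 := by ring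
      rw [e, pow_succ, pow_succ, ih, smul_mul_assoc, smul_mul_assoc, one_mul, h, smul_smul,
        ← pow_succ]
  have hpo : ∀ k : ℕ, A ^ (2 * k + 1) = ((-π ^ 2) ^ k) • A := by
    intro k
    rw [pow_succ, hpe k, smul_mul_assoc, one_mul]
  rw [NormedSpace.exp_eq_tsum ℝ]
  refine HasSum.tsum_eq ?_
  have hodd : HasSum (fun k : ℕ => (((2 * k + 1)! : ℝ)⁻¹ • A ^ (2 * k + 1))) 0 := by
    have hs := ((Real.hasSum_sin π).div_const π).smul_const A
    rw [Real.sin_pi, zero_div, zero_smul] at hs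
    have e : (fun k : ℕ => (((2 * k + 1)! : ℝ)⁻¹ • A ^ (2 * k + 1)))
        = fun k : ℕ => ((-1 : ℝ) ^ k * π ^ (2 * k + 1) / ((2 * k + 1)! : ℝ) / π) • A := by
      funext k
      rw [hpo k, smul_smul]
      congr 1
      have hf : ((2 * k + 1)! : ℝ) ≠ 0 := Nat.cast_ne_zero.2 (Nat.factorial_ne_zero _)
      have h2 : π ≠ 0 := Real.pi_ne_zero
      field_simp
      rw [neg_pow, ← pow_mul, pow_succ]
      ring
    rw [e]
    exact hs
  have heven : HasSum (fun k : ℕ => (((2 * k)! : ℝ)⁻¹ • A ^ (2 * k)))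
      (-1 : Matrix (Fin n) (Fin n) ℝ) := by
    have hc := (Real.hasSum_cos π).smul_const (1 : Matrix (Fin n) (Fin n) ℝ)
    rw [Real.cos_pi] at hc
    have h1 : ((-1 : ℝ) • (1 : Matrix (Fin n) (Fin n) ℝ)) = -1 := by simp
    rw [h1] at hc
    have e : (fun k : ℕ => (((2 * k)! : ℝ)⁻¹ • A ^ (2 * k)))
        = fun k : ℕ => ((-1 : ℝ) ^ k * π ^ (2 * k) / ((2 * k)! : ℝ)) •
            (1 : Matrix (Fin n) (Fin n) ℝ) := by
      funext k
      rw [hpe k, smul_smul]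
      congr 1
      rw [neg_pow, ← pow_mul]
      ring
    rw [e]
    exact hc
  have h5 := HasSum.even_add_odd (f := fun m : ℕ => ((m ! : ℝ)⁻¹ • A ^ m)) heven hodd
  rw [add_zero] at h5
  exact h5

lemma cube_skew (a b : ℝ) :
    (!![0, -a, b; a, 0, 0; -b, 0, 0] * !![0, -a, b; a, 0, 0; -b, 0, 0] *
      !![0, -a, b; a, 0, 0; -b, 0, 0] : Matrix (Fin 3) (Fin 3) ℝ)
      = (-(a ^ 2 + b ^ 2)) • !![0, -a, b; a, 0, 0; -b, 0, 0] := by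
  ext i j
  fin_cases i <;> fin_cases j <;>
    simp [Matrix.mul_apply, Fin.sum_univ_three, Matrix.vecHead, Matrix.vecTail, Function.comp]
  all_goals try ring
  all_goals tauto

lemma sq_psi : (!![0, -π; π, 0] * !![0, -π; π, 0] : Matrix (Fin 2) (Fin 2) ℝ)
    = (-π ^ 2) • 1 := by
  ext i j
  fin_cases i <;> fin_cases j <;>
    simp [Matrix.mul_apply, Fin.sum_univ_two, Matrix.one_apply, Matrix.vecHead, Matrix.vecTail,
      Function.comp]
  all_goals try ring
  all_goals tauto

/-- Proposition 7.2 (`prp:log-not-shortest`): for β > 1 there are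
skew-symmetric Ω (3×3) and Ψ (2×2) with exp(Ω) = I₃, exp(Ψ) = -I₂ and
β‖Ω₁₁ - Ψ‖_F² + ‖Ω₂₁‖_F² < 2βπ². -/
theorem stmt15 (β : ℝ) (hβ : 1 < β) :
    ∃ (Ω : Matrix (Fin 3) (Fin 3) ℝ) (Ψ : Matrix (Fin 2) (Fin 2) ℝ),
      Ωᵀ = -Ω ∧ Ψᵀ = -Ψ ∧
      NormedSpace.exp Ω = 1 ∧ NormedSpace.exp Ψ = -1 ∧
      β * Real.sqrt (∑ i : Fin 2, ∑ j : Fin 2, (Ω i.castSucc j.castSucc - Ψ i j) ^ 2) ^ 2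
          + Real.sqrt (∑ i : Fin 1, ∑ j : Fin 2, (Ω 2 j.castSucc) ^ 2) ^ 2
        < 2 * β * π ^ 2 := by
  have hd : (0 : ℝ) < 2 * β - 1 := by linarith
  have hπ := Real.pi_pos
  set α : ℝ := 2 * β * π / (2 * β - 1) with hαdef
  have hαd : α * (2 * β - 1) = 2 * β * π := by
    rw [hαdef, div_mul_cancel₀ _ hd.ne']
  have hαlt : α < 2 * π := by
    rw [hαdef, div_lt_iff₀ hd]
    nlinarith
  have hαpos : 0 < α := by
    rw [hαdef]
    positivity
  have hbnn : (0 : ℝ) ≤ (2 * π) ^ 2 - α ^ 2 := by nlinarith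
  set b : ℝ := Real.sqrt ((2 * π) ^ 2 - α ^ 2) with hbdef
  have hb2 : b ^ 2 = (2 * π) ^ 2 - α ^ 2 := Real.sq_sqrt hbnn
  refine ⟨!![0, -α, b; α, 0, 0; -b, 0, 0], !![0, -π; π, 0], ?_, ?_, ?_, ?_, ?_⟩
  · ext i j
    fin_cases i <;> fin_cases j <;>
      simp [Matrix.neg_apply, Matrix.vecHead, Matrix.vecTail]
  · ext i j
    fin_cases i <;> fin_cases j <;>
      simp [Matrix.neg_apply, Matrix.vecHead, Matrix.vecTail]
  · refine exp_eq_one_of_cube ?_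
    rw [cube_skew]
    congr 1
    linarith [hb2]
  · exact exp_eq_neg_one_of_sq sq_psi
  · have hs1 : (∑ i : Fin 2, ∑ j : Fin 2,
        ((!![0, -α, b; α, 0, 0; -b, 0, 0] : Matrix (Fin 3) (Fin 3) ℝ) i.castSucc j.castSucc
          - (!![0, -π; π, 0] : Matrix (Fin 2) (Fin 2) ℝ) i j) ^ 2)
        = 2 * (α - π) ^ 2 := by
      simp [Fin.sum_univ_two, Matrix.vecHead, Matrix.vecTail]
      ring
    have hs2 : (∑ i : Fin 1, ∑ j : Fin 2,
        ((!![0, -α, b; α, 0, 0; -b, 0, 0] : Matrix (Fin 3) (Fin 3) ℝ) 2 j.castSucc) ^ 2)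
        = b ^ 2 := by
      simp [Fin.sum_univ_two, Matrix.vecHead, Matrix.vecTail]
    rw [hs1, hs2, Real.sq_sqrt (by positivity), Real.sq_sqrt (by positivity), hb2]
    have e1 : (α - π) ^ 2 * (2 * β - 1) ^ 2 = π ^ 2 := by
      have h1 : (α - π) * (2 * β - 1) = π := by linear_combination hαd
      calc (α - π) ^ 2 * (2 * β - 1) ^ 2 = ((α - π) * (2 * β - 1)) ^ 2 := by ring
        _ = π ^ 2 := by rw [h1]
    have e2 : α ^ 2 * (2 * β - 1) ^ 2 = 4 * β ^ 2 * π ^ 2 := by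
      calc α ^ 2 * (2 * β - 1) ^ 2 = (α * (2 * β - 1)) ^ 2 := by ring
        _ = 4 * β ^ 2 * π ^ 2 := by rw [hαd]; ring
    have hd2 : (0 : ℝ) < (2 * β - 1) ^ 2 := by positivity
    have key : (0 : ℝ) < 4 * π ^ 2 * (β - 1) ^ 2 * (2 * β - 1) :=
      mul_pos (mul_pos (by positivity) (pow_pos (by linarith) 2)) hd
    refine (mul_lt_mul_iff_of_pos_right hd2).mp ?_
    nlinarith [e1, e2, key]
end

section
/- Let β be a real number with β > 1, and set a = 2β/(1-2β) and b = √(2·(1 - β²/(1-2β)²)). Then the matrix exponential of the 3×3 real skew-symmetric matrix with rows (0, aπ, -bπ), (-aπ, 0, -bπ), (bπ, bπ, 0) equals the 3×3 identity matrix. -/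
open Matrix Real

lemma exp_cube_aux (A : Matrix (Fin 3) (Fin 3) ℝ) (t : ℝ) (ht : t ≠ 0)
    (h3 : A ^ 3 = (-(t ^ 2)) • A) :
    NormedSpace.exp A
      = 1 + ((1 - Real.cos t) / t ^ 2) • A ^ 2 + (Real.sin t / t) • A := by
  letI : SeminormedRing (Matrix (Fin 3) (Fin 3) ℝ) := Matrix.linftyOpSemiNormedRing
  letI : NormedRing (Matrix (Fin 3) (Fin 3) ℝ) := Matrix.linftyOpNormedRing
  letI : NormedAlgebra ℝ (Matrix (Fin 3) (Fin 3) ℝ) := Matrix.linftyOpNormedAlgebra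
  have hodd : ∀ k : ℕ, A ^ (2 * k + 1) = ((-(t ^ 2)) ^ k) • A := by
    intro k
    induction k with
    | zero => simp
    | succ k ih =>
      have h1 : 2 * (k + 1) + 1 = (2 * k + 1) + 2 := by ring
      rw [h1, pow_add, ih, smul_mul_assoc, ← pow_succ', h3, smul_smul, ← pow_succ]
  have heven : ∀ k : ℕ, A ^ (2 * (k + 1)) = ((-(t ^ 2)) ^ k) • A ^ 2 := by
    intro k
    have h1 : 2 * (k + 1) = (2 * k + 1) + 1 := by ring
    rw [h1, pow_succ, hodd k, smul_mul_assoc, ← pow_two]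
  have hfac : ∀ n : ℕ, ((Nat.factorial n : ℝ)) ≠ 0 := fun n =>
    Nat.cast_ne_zero.mpr (Nat.factorial_ne_zero n)
  rw [NormedSpace.exp_eq_tsum (𝕂 := ℝ)]
  refine HasSum.tsum_eq ?_
  refine HasSum.even_add_odd ?_ ?_
  · -- even part
    have hshift := (hasSum_nat_add_iff'
        (f := fun n : ℕ => (-1 : ℝ) ^ n * t ^ (2 * n) / (Nat.factorial (2 * n))) 1).mpr
        (Real.hasSum_cos t)
    have hscal : HasSum
        (fun k : ℕ => ((Nat.factorial (2 * (k + 1)) : ℝ))⁻¹ * (-(t ^ 2)) ^ k)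
        ((1 - Real.cos t) / t ^ 2) := by
      have := hshift.mul_left (-(1 / t ^ 2))
      convert this using 1
      · rfl
      · funext k
        have := hfac (2 * (k + 1))
        field_simp
        ring
      · rw [Finset.sum_range_one]
        have h0 : ((-1:ℝ)) ^ 0 * t ^ (2 * 0) / ((Nat.factorial (2 * 0) : ℝ)) = 1 := by
          norm_num [Nat.factorial]
        rw [h0]
        ring
    have h2 : HasSum (fun k : ℕ => ((Nat.factorial (2 * (k + 1)) : ℝ))⁻¹ • A ^ (2 * (k + 1)))
        (((1 - Real.cos t) / t ^ 2) • A ^ 2) := by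
      convert hscal.smul_const (A ^ 2) using 1
      funext k
      rw [heven k, smul_smul]
    have := HasSum.zero_add
      (f := fun k : ℕ => ((Nat.factorial (2 * k) : ℝ))⁻¹ • A ^ (2 * k)) h2
    simpa using this
  · -- odd part
    have hscal : HasSum
        (fun k : ℕ => ((Nat.factorial (2 * k + 1) : ℝ))⁻¹ * (-(t ^ 2)) ^ k)
        (Real.sin t / t) := by
      have := (Real.hasSum_sin t).div_const t
      convert this using 1
      · rfl
      funext k
      have := hfac (2 * k + 1)
      field_simp
      ring
    convert hscal.smul_const A using 1
    · rfl
    funext k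
    rw [hodd k, smul_smul]

/-- for β > 1, with a = 2β/(1-2β) and b = √(2(1 - β²/(1-2β)²)), the matrix
exponential of the skew-symmetric matrix [[0, aπ, -bπ],[-aπ, 0, -bπ],[bπ, bπ, 0]] is I₃. -/
theorem stmt16 (β : ℝ) (hβ : 1 < β) (a b : ℝ)
    (ha : a = 2 * β / (1 - 2 * β))
    (hb : b = Real.sqrt (2 * (1 - β ^ 2 / (1 - 2 * β) ^ 2))) :
    NormedSpace.exp
        !![0, a * π, -(b * π); -(a * π), 0, -(b * π); b * π, b * π, 0]
      = (1 : Matrix (Fin 3) (Fin 3) ℝ) := by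
  have hden : (1 - 2 * β) ≠ 0 := by nlinarith
  have hnn : (0:ℝ) ≤ 2 * (1 - β ^ 2 / (1 - 2 * β) ^ 2) := by
    have h1 : β ^ 2 ≤ (1 - 2 * β) ^ 2 := by nlinarith
    have h2 : β ^ 2 / (1 - 2 * β) ^ 2 ≤ 1 := (div_le_one (by positivity)).mpr h1
    linarith
  have hb2 : b ^ 2 = 2 * (1 - β ^ 2 / (1 - 2 * β) ^ 2) := by
    rw [hb, Real.sq_sqrt hnn]
  have key : a ^ 2 + 2 * b ^ 2 = 4 := by
    rw [ha, hb2]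
    field_simp
    ring
  set M : Matrix (Fin 3) (Fin 3) ℝ :=
    !![0, a * π, -(b * π); -(a * π), 0, -(b * π); b * π, b * π, 0] with hM
  have h3 : M ^ 3 = (-( (2 * π) ^ 2)) • M := by
    ext i j
    fin_cases i <;> fin_cases j <;>
      simp [hM, pow_succ, Matrix.mul_apply, Fin.sum_univ_succ]
    · ring
    · linear_combination (-(a * π ^ 3)) * key
    · linear_combination (b * π ^ 3) * key
    · linear_combination (a * π ^ 3) * key
    · ring
    · linear_combination (b * π ^ 3) * key
    · linear_combination (-(b * π ^ 3)) * key
    · linear_combination (-(b * π ^ 3)) * key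
  have hfinal := exp_cube_aux M (2 * π) (by positivity) h3
  rw [hfinal, Real.sin_two_pi, Real.cos_two_pi]
  simp
end

section
/- Let α be a nonzero real number and let n > p ≥ 1 be integers. Let Ω be a real skew-symmetric n×n matrix with blocks Ω₁₁ (top-left, p×p), Ω₂₁ (bottom-left, (n-p)×p), and Ω₂₂ (bottom-right, (n-p)×(n-p)), and let Ψ be a real skew-symmetric p×p matrix. Then the following are equivalent: (i) for every real skew-symmetric p×p matrix Ψₐ and every real skew-symmetric (n-p)×(n-p) matrix C, one has (1/2)·trace([[Ψₐ, 0],[0, C]]ᵀ·Ω) + (1/(2α))·trace(Ψₐᵀ·Ψ) = 0; (ii) Ω₁₁ = -(1/α)·Ψ and Ω₂₂ = 0. (This identifies the horizontal space 𝔪, the orthogonal complement of the stabilizer Lie algebra 𝔨 with respect to the pseudo-Riemannian metric ḡ on O(n)×O(p).) -/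
open Matrix

lemma aux_tr_zero {m k : Type*} [Fintype m] [Fintype k] [DecidableEq k]
    (M : Matrix m k ℝ) (h : (Mᵀ * M).trace = 0) : M = 0 := by
  have hsum : ∑ j : k, ∑ i : m, (M i j) ^ 2 = 0 := by
    rw [← h]
    simp [Matrix.trace, Matrix.mul_apply, Matrix.diag, sq, Matrix.transpose_apply]
  ext i j
  have h1 := (Finset.sum_eq_zero_iff_of_nonneg (fun j _ => Finset.sum_nonneg
    (fun i _ => sq_nonneg (M i j)))).mp hsum j (Finset.mem_univ j)
  have h2 := (Finset.sum_eq_zero_iff_of_nonneg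
    (fun i _ => sq_nonneg (M i j))).mp h1 i (Finset.mem_univ i)
  simpa using pow_eq_zero_iff (n := 2) (by norm_num) |>.mp h2

/-- identification of the horizontal space 𝔪: for α ≠ 0 and skew-symmetric
Ω (n×n, in block form with blocks of sizes p and n-p) and Ψ (p×p), orthogonality of (Ω,Ψ)
to the stabilizer Lie algebra 𝔨 with respect to ḡ is equivalent to Ω₁₁ = -(1/α)Ψ and
Ω₂₂ = 0. -/
theorem stmt18 (α : ℝ) (hα : α ≠ 0) (n p : ℕ) (hp : 1 ≤ p) (hpn : p < n)
    (Ω : Matrix (Fin p ⊕ Fin (n - p)) (Fin p ⊕ Fin (n - p)) ℝ) (hΩ : Ωᵀ = -Ω)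
    (Ψ : Matrix (Fin p) (Fin p) ℝ) (hΨ : Ψᵀ = -Ψ) :
    (∀ (Ψa : Matrix (Fin p) (Fin p) ℝ), Ψaᵀ = -Ψa →
      ∀ (C : Matrix (Fin (n - p)) (Fin (n - p)) ℝ), Cᵀ = -C →
        (1 / 2) * ((Matrix.fromBlocks Ψa 0 0 C)ᵀ * Ω).trace
          + (1 / (2 * α)) * (Ψaᵀ * Ψ).trace = 0)
    ↔ (Ω.toBlocks₁₁ = (-(1 / α)) • Ψ ∧ Ω.toBlocks₂₂ = 0) := by
  set A := Ω.toBlocks₁₁ with hA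
  set D := Ω.toBlocks₂₂ with hD
  have hA' : Aᵀ = -A := by
    ext i j
    have := congrFun (congrFun hΩ (Sum.inl i)) (Sum.inl j)
    simpa [hA, Matrix.toBlocks₁₁, Matrix.transpose_apply] using this
  have hD' : Dᵀ = -D := by
    ext i j
    have := congrFun (congrFun hΩ (Sum.inr i)) (Sum.inr j)
    simpa [hD, Matrix.toBlocks₂₂, Matrix.transpose_apply] using this
  have htr : ∀ (Ψa : Matrix (Fin p) (Fin p) ℝ) (C : Matrix (Fin (n-p)) (Fin (n-p)) ℝ),
      ((Matrix.fromBlocks Ψa 0 0 C)ᵀ * Ω).trace = (Ψaᵀ * A).trace + (Cᵀ * D).trace := by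
    intro Ψa C
    conv_lhs => rw [← Matrix.fromBlocks_toBlocks Ω]
    rw [Matrix.fromBlocks_transpose, Matrix.fromBlocks_multiply]
    simp [Matrix.trace, Fintype.sum_sum_type, Matrix.diag, hA, hD]
  constructor
  · intro h
    have key1 : A = (-(1/α)) • Ψ := by
      set M := A + (1/α) • Ψ with hM
      have hMs : Mᵀ = -M := by
        rw [hM, Matrix.transpose_add, Matrix.transpose_smul, hA', hΨ]
        module
      have := h M hMs 0 (by simp)
      rw [htr] at this
      simp only [Matrix.transpose_zero, Matrix.zero_mul, Matrix.trace_zero, add_zero] at this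
      have htrM : (Mᵀ * M).trace = 0 := by
        have expand : (Mᵀ * M).trace = (Mᵀ * A).trace + (1/α) * (Mᵀ * Ψ).trace := by
          rw [hM]
          rw [Matrix.mul_add, Matrix.trace_add, Matrix.mul_smul, Matrix.trace_smul,
            smul_eq_mul]
        rw [expand]
        have : (1:ℝ)/2 * ((Mᵀ * A).trace + (1/α) * (Mᵀ * Ψ).trace) = 0 := by
          rw [← this]; field_simp
        linarith [this]
      have hM0 : A + (1/α) • Ψ = 0 := aux_tr_zero M htrM
      have hAe : A = -((1/α) • Ψ) := eq_neg_of_add_eq_zero_left hM0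
      rw [hAe, neg_smul]
    have key2 : D = 0 := by
      have := h 0 (by simp) D hD'
      rw [htr] at this
      simp only [Matrix.transpose_zero, Matrix.zero_mul, Matrix.trace_zero, zero_add] at this
      have htrD : (Dᵀ * D).trace = 0 := by linarith
      exact aux_tr_zero D htrD
    exact ⟨key1, key2⟩
  · rintro ⟨h1, h2⟩ Ψa hΨa C hC
    rw [htr, h1, h2]
    rw [Matrix.mul_smul, Matrix.trace_smul]
    simp only [Matrix.mul_zero, Matrix.trace_zero, add_zero]
    field_simp
    rw [smul_eq_mul, mul_zero, ← mul_assoc, mul_neg, mul_one_div_cancel hα]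
    ring
end

section
/- Let n > p ≥ 1 be integers, let Q be a real n×n matrix with Qᵀ·Q = I_n, and let V be a real p×p matrix with Vᵀ·V = I_p. Then Q·I_{n×p}·Vᵀ = I_{n×p} if and only if there exists a real (n-p)×(n-p) matrix W with Wᵀ·W = I_{n-p} such that Q = [[V, 0],[0, W]]. (This identifies the stabilizer of I_{n×p} under the action ((Q,V), X) ↦ Q·X·Vᵀ of O(n)×O(p) on the Stiefel manifold St(n,p) with O(n-p)×O(p).) -/
open Matrix

/-- identification of the stabilizer of I_{n×p} under the action
((Q,V), X) ↦ QXVᵀ of O(n)×O(p) on the Stiefel manifold: for orthogonal Q (n×n, in block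
form with blocks of sizes p and n-p) and orthogonal V (p×p), Q·I_{n×p}·Vᵀ = I_{n×p}
iff Q = [[V,0],[0,W]] for some orthogonal W of size (n-p)×(n-p). -/
theorem stmt19 (n p : ℕ) (hp : 1 ≤ p) (hpn : p < n)
    (Q : Matrix (Fin p ⊕ Fin (n - p)) (Fin p ⊕ Fin (n - p)) ℝ) (hQ : Qᵀ * Q = 1)
    (V : Matrix (Fin p) (Fin p) ℝ) (hV : Vᵀ * V = 1) :
    Q * Matrix.fromRows (1 : Matrix (Fin p) (Fin p) ℝ)
          (0 : Matrix (Fin (n - p)) (Fin p) ℝ) * Vᵀ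
        = Matrix.fromRows 1 0
    ↔ ∃ W : Matrix (Fin (n - p)) (Fin (n - p)) ℝ,
        Wᵀ * W = 1 ∧ Q = Matrix.fromBlocks V 0 0 W := by
  have hVV : V * Vᵀ = 1 := by
    rw [mul_eq_one_comm]; exact hV
  constructor
  · intro h
    set A := Q.toBlocks₁₁ with hA
    set B := Q.toBlocks₁₂ with hB
    set C := Q.toBlocks₂₁ with hC
    set D := Q.toBlocks₂₂ with hD
    have hQb : Q = fromBlocks A B C D := (fromBlocks_toBlocks Q).symm
    rw [hQb] at h
    rw [fromBlocks_mul_fromRows, fromRows_mul] at h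
    simp only [Matrix.mul_one, Matrix.mul_zero, add_zero] at h
    obtain ⟨h1, h2⟩ := (fromRows_ext_iff _ _ _ _).mp h
    have hAV : A = V := by
      calc A = A * (Vᵀ * V) := by rw [hV, mul_one]
        _ = (A * Vᵀ) * V := by rw [mul_assoc]
        _ = V := by rw [h1, one_mul]
    have hC0 : C = 0 := by
      calc C = C * (Vᵀ * V) := by rw [hV, Matrix.mul_one]
        _ = (C * Vᵀ) * V := by rw [Matrix.mul_assoc]
        _ = 0 := by rw [h2, Matrix.zero_mul]
    rw [hQb, hAV, hC0] at hQ
    rw [fromBlocks_transpose, fromBlocks_multiply, ← fromBlocks_one] at hQ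
    simp only [transpose_zero, Matrix.zero_mul, Matrix.mul_zero, add_zero, zero_add] at hQ
    obtain ⟨e11, e12, e21, e22⟩ := fromBlocks_inj.mp hQ
    have hB0 : B = 0 := by
      calc B = (V * Vᵀ) * B := by rw [hVV, Matrix.one_mul]
        _ = V * (Vᵀ * B) := by rw [Matrix.mul_assoc]
        _ = 0 := by rw [e12, Matrix.mul_zero]
    rw [hB0] at e22
    simp only [transpose_zero, Matrix.zero_mul, zero_add] at e22
    exact ⟨D, e22, by rw [hQb, hAV, hB0, hC0]⟩
  · rintro ⟨W, hW, rfl⟩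
    rw [fromBlocks_mul_fromRows, fromRows_mul]
    simp [hVV]
end
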